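/- arXiv:2305.05522 — 8 statements merged into one kernel-verified Lean document; each statement's English description precedes it below -/
import Mathlib

section
/- Let p be an odd prime, a and r positive integers, and k a positive integer with k >= r + a, p^r dividing k, and (p-1) not dividing k. Then the sum of n^k for n from 1 to p^a is congruent to 0 modulo p^(r+a). -/
open Finset

private lemma step_dvd (p : ℕ) (hp : p.Prime) (b : ℕ) (hb : 1 ≤ b) (x y : ℤ)
    (h : (p:ℤ)^b ∣ x - y) : (p:ℤ)^(b+1) ∣ x^p - y^p := by
  have hxy : (p:ℤ) ∣ x - y := dvd_trans (dvd_pow_self _ (by omega)) h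
  haveI : Fact p.Prime := ⟨hp⟩
  have hsum : (p:ℤ) ∣ ∑ i ∈ range p, x ^ i * y ^ (p - 1 - i) := by
    have hcast : ((∑ i ∈ range p, x ^ i * y ^ (p - 1 - i) : ℤ) : ZMod p) = 0 := by
      push_cast
      have hyx : (y : ZMod p) = (x : ZMod p) := by
        have h0 : ((x - y : ℤ) : ZMod p) = 0 :=
          (ZMod.intCast_zmod_eq_zero_iff_dvd _ p).mpr hxy
        push_cast at h0
        linear_combination -h0
      rw [hyx]
      have hterm : ∀ i ∈ range p, (x : ZMod p) ^ i * (x : ZMod p) ^ (p - 1 - i)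
          = (x : ZMod p) ^ (p - 1) := by
        intro i hi
        rw [← pow_add]
        congr 1
        have := mem_range.mp hi
        omega
      rw [Finset.sum_congr rfl hterm, Finset.sum_const, card_range, nsmul_eq_mul,
        ZMod.natCast_self, zero_mul]
    exact (ZMod.intCast_zmod_eq_zero_iff_dvd _ p).mp hcast
  calc (p:ℤ)^(b+1) = p * p^b := by ring
    _ ∣ (∑ i ∈ range p, x ^ i * y ^ (p - 1 - i)) * (x - y) := mul_dvd_mul hsum h
    _ = x^p - y^p := geom_sum₂_mul x y p

private lemma pow_cong (p : ℕ) (hp : p.Prime) (a : ℕ) (ha : 1 ≤ a) (j : ℕ) (x y : ℤ)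
    (h : (p:ℤ)^a ∣ x - y) : (p:ℤ)^(a+j) ∣ x^(p^j) - y^(p^j) := by
  induction j with
  | zero => simpa using h
  | succ j ih =>
    have hs := step_dvd p hp (a+j) (by omega) (x^(p^j)) (y^(p^j)) ih
    rw [← pow_mul, ← pow_mul, ← pow_succ] at hs
    simpa [← add_assoc] using hs

private lemma pow_cong_k (p : ℕ) (hp : p.Prime) (a r k : ℕ) (ha : 1 ≤ a)
    (hdvd : p ^ r ∣ k) (x y : ℤ) (h : (p:ℤ)^a ∣ x - y) :
    (p:ℤ)^(a+r) ∣ x^k - y^k := by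
  obtain ⟨t, rfl⟩ := hdvd
  have h1 := pow_cong p hp a ha r x y h
  have h2 : x^(p^r) - y^(p^r) ∣ (x^(p^r))^t - (y^(p^r))^t := sub_dvd_pow_sub_pow _ _ t
  rw [← pow_mul, ← pow_mul] at h2
  exact h1.trans h2

private lemma mod_mem (p a : ℕ) (hp : p.Prime) (ha : 0 < a) (x : ℕ) (hx : ¬ p ∣ x) :
    x % p^a ∈ (Icc 1 (p^a)).filter (fun n => ¬ p ∣ n) := by
  have hpa : 0 < p^a := pow_pos hp.pos a
  have hpd : p ∣ p^a := dvd_pow_self p ha.ne'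
  have h2 : ¬ p ∣ x % p^a := by
    intro h
    exact hx ((Nat.dvd_mod_iff hpd).mp h)
  have h1 : x % p^a ≠ 0 := by
    intro h
    exact h2 (h ▸ dvd_zero p)
  simp only [mem_filter, mem_Icc]
  exact ⟨⟨Nat.one_le_iff_ne_zero.mpr h1, le_of_lt (Nat.mod_lt _ hpa)⟩, h2⟩

theorem power_sum_vanishes (p : ℕ) (hp : p.Prime) (hodd : Odd p)
    (a r : ℕ) (ha : 0 < a) (hr : 0 < r) (k : ℕ) (hk : 0 < k)
    (hkra : r + a ≤ k) (hdvd : p ^ r ∣ k) (hnd : ¬ (p - 1) ∣ k) :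
    ((p : ℤ) ^ (r + a)) ∣ ∑ n ∈ Finset.Icc 1 (p ^ a), (n : ℤ) ^ k := by
  haveI : Fact p.Prime := ⟨hp⟩
  have hpa : 0 < p ^ a := pow_pos hp.pos a
  have hpd : p ∣ p ^ a := dvd_pow_self p ha.ne'
  -- split the sum
  rw [← Finset.sum_filter_add_sum_filter_not (Finset.Icc 1 (p^a)) (fun n => p ∣ n)]
  refine dvd_add ?_ ?_
  · -- terms divisible by p
    refine Finset.dvd_sum ?_
    intro n hn
    obtain ⟨c, rfl⟩ := (mem_filter.mp hn).2
    have : (p:ℤ)^(r+a) ∣ (p:ℤ)^k := pow_dvd_pow _ hkra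
    calc (p:ℤ)^(r+a) ∣ (p:ℤ)^k * (c:ℤ)^k := this.mul_right _
      _ = ((p*c : ℕ) : ℤ)^k := by push_cast; ring
  · -- coprime part
    set T := (Finset.Icc 1 (p^a)).filter (fun n => ¬ p ∣ n) with hT
    -- generator of (ZMod p)ˣ, lift to ℕ
    obtain ⟨c, hc⟩ := IsCyclic.exists_generator (α := (ZMod p)ˣ)
    set g : ℕ := ((c : ZMod p)).val with hg
    have hgcast : ((g : ℕ) : ZMod p) = (c : ZMod p) := by
      rw [hg, ZMod.natCast_val, ZMod.cast_id]
    have hgcop : Nat.Coprime g p := ZMod.val_coe_unit_coprime c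
    have hgp : ¬ p ∣ g := (hp.coprime_iff_not_dvd).mp hgcop.symm
    -- g^k ≠ 1 mod p
    have hck : c ^ k ≠ 1 := by
      intro h
      have horder : orderOf c = p - 1 := by
        rw [orderOf_eq_card_of_forall_mem_zpowers hc, Nat.card_eq_fintype_card,
          ZMod.card_units_eq_totient, Nat.totient_prime hp]
      exact hnd (horder ▸ orderOf_dvd_of_pow_eq_one h)
    have hgk : ((g : ZMod p))^k ≠ 1 := by
      rw [hgcast]
      intro h
      apply hck
      ext
      push_cast
      exact h
    -- inverse of g mod p^a
    have hgcopa : Nat.Coprime g (p^a) := hgcop.pow_right a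
    obtain ⟨g', -, hgg'⟩ := Nat.exists_mul_mod_eq_one_of_coprime hgcopa
      (Nat.one_lt_pow ha.ne' hp.one_lt)
    have hgg'mod : g * g' ≡ 1 [MOD p^a] := by
      unfold Nat.ModEq
      rw [hgg', Nat.mod_eq_of_lt (Nat.one_lt_pow ha.ne' hp.one_lt)]
    have hg'p : ¬ p ∣ g' := by
      intro h
      have h1 : p ∣ g * g' := Dvd.dvd.mul_left h g
      have h2 : p ∣ (g * g') % p^a := (Nat.dvd_mod_iff hpd).mpr h1
      rw [hgg'] at h2
      exact hp.one_lt.ne' (Nat.dvd_one.mp h2)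
    -- the key: work in ZMod (p^(r+a))
    set M := p^(r+a) with hM
    rw [show ((p:ℤ)^(r+a)) = ((M : ℕ) : ℤ) by rw [hM]; push_cast; ring]
    rw [← ZMod.intCast_zmod_eq_zero_iff_dvd]
    push_cast
    set S : ZMod M := ∑ n ∈ T, ((n:ℕ) : ZMod M)^k with hS
    show S = 0
    -- membership of T implies < p^a and mod-identity
    have hTlt : ∀ n ∈ T, n < p^a := by
      intro n hn
      rcases mem_filter.mp hn with ⟨hn1, hn2⟩
      rcases mem_Icc.mp hn1 with ⟨_, hle⟩
      rcases lt_or_eq_of_le hle with h | h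
      · exact h
      · exact absurd (h ▸ hpd) hn2
    -- the permutation identity : g^k * S = S
    have hperm : ((g:ℕ) : ZMod M)^k * S = S := by
      rw [hS, Finset.mul_sum]
      have hstep : ∀ n ∈ T, ((g:ℕ) : ZMod M)^k * ((n:ℕ) : ZMod M)^k
          = (((g*n) % p^a : ℕ) : ZMod M)^k := by
        intro n hn
        have hdvd1 : (p:ℤ)^a ∣ ((g*n : ℕ) : ℤ) - (((g*n) % p^a : ℕ) : ℤ) := by
          have h1 : p^a ∣ (g*n) - (g*n) % p^a := Nat.dvd_sub_mod _
          have h2 : (g*n) % p^a ≤ g*n := Nat.mod_le _ _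
          have h3 := Int.natCast_dvd_natCast.mpr h1
          rwa [Nat.cast_sub h2, Nat.cast_pow] at h3
        have hkey := pow_cong_k p hp a r k ha hdvd ((g*n : ℕ) : ℤ)
          (((g*n) % p^a : ℕ) : ℤ) hdvd1
        have hmeq : (((g*n) % p^a : ℕ) : ℤ)^k ≡ ((g*n : ℕ) : ℤ)^k [ZMOD (M:ℕ)] := by
          rw [Int.modEq_iff_dvd]
          rw [show ((M:ℕ) : ℤ) = (p:ℤ)^(a+r) by rw [hM]; push_cast; ring]
          exact hkey
        have hz : ((((g*n) % p^a : ℕ) : ℤ) : ZMod M)^k = (((g*n : ℕ) : ℤ) : ZMod M)^k := by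
          rw [← Int.cast_pow, ← Int.cast_pow, ZMod.intCast_eq_intCast_iff]
          exact hmeq
        rw [← mul_pow, ← Nat.cast_mul]
        exact_mod_cast hz.symm
      rw [Finset.sum_congr rfl hstep]
      -- reindex by the bijection n ↦ (g*n) % p^a
      refine Finset.sum_nbij' (fun n => (g*n) % p^a) (fun n => (g'*n) % p^a) ?_ ?_ ?_ ?_ ?_
      · intro n hn
        have hn2 := (mem_filter.mp hn).2
        exact mod_mem p a hp ha _ (fun h => (hp.dvd_mul.mp h).elim hgp hn2)
      · intro n hn
        have hn2 := (mem_filter.mp hn).2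
        exact mod_mem p a hp ha _ (fun h => (hp.dvd_mul.mp h).elim hg'p hn2)
      · intro n hn
        have hmeq : g' * ((g*n) % p^a) ≡ n [MOD p^a] := by
          calc g' * ((g*n) % p^a) ≡ g' * (g*n) [MOD p^a] := (Nat.mod_modEq _ _).mul_left g'
            _ = (g*g') * n := by ring
            _ ≡ 1 * n [MOD p^a] := hgg'mod.mul_right n
            _ = n := one_mul n
        unfold Nat.ModEq at hmeq
        rw [Nat.mod_eq_of_lt (hTlt n hn)] at hmeq
        exact hmeq
      · intro n hn
        have hmeq : g * ((g'*n) % p^a) ≡ n [MOD p^a] := by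
          calc g * ((g'*n) % p^a) ≡ g * (g'*n) [MOD p^a] := (Nat.mod_modEq _ _).mul_left g
            _ = (g*g') * n := by ring
            _ ≡ 1 * n [MOD p^a] := hgg'mod.mul_right n
            _ = n := one_mul n
        unfold Nat.ModEq at hmeq
        rw [Nat.mod_eq_of_lt (hTlt n hn)] at hmeq
        exact hmeq
      · intro n hn
        rfl
    -- g^k - 1 is a unit in ZMod M
    have hg1 : 1 ≤ g := Nat.one_le_iff_ne_zero.mpr (fun h => hgp (h ▸ dvd_zero p))
    have hgk1 : 1 ≤ g^k := Nat.one_le_pow _ _ hg1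
    have hunit : IsUnit (((g^k - 1 : ℕ) : ZMod M)) := by
      rw [ZMod.isUnit_iff_coprime]
      refine Nat.Coprime.pow_right _ ((hp.coprime_iff_not_dvd.mpr ?_).symm)
      intro h
      apply hgk
      have h0 : ((g^k - 1 : ℕ) : ZMod p) = 0 :=
        (ZMod.natCast_eq_zero_iff _ _).mpr h
      rw [Nat.cast_sub hgk1] at h0
      push_cast at h0
      exact sub_eq_zero.mp h0
    have hcast1 : ((g^k - 1 : ℕ) : ZMod M) = ((g:ℕ) : ZMod M)^k - 1 := by
      rw [Nat.cast_sub hgk1]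
      push_cast
      ring
    have hzero : (((g:ℕ) : ZMod M)^k - 1) * S = 0 := by
      rw [sub_mul, one_mul, hperm, sub_self]
    rw [hcast1] at hunit
    exact (hunit.mul_right_eq_zero).mp hzero
end

section
/- (Adams' theorem) For an even positive integer s not divisible by p-1, the p-adic valuation of B_s / s is nonnegative, i.e., B_s / s is a p-integer. -/
open Finset

lemma adams_choose_ident (n j : ℕ) (h : j ≤ n) :
    (n + 1).choose j * (n + 1 - j) = n.choose j * (n + 1) := by
  have h1 := Nat.add_one_mul_choose_eq n (n - j)
  rw [Nat.choose_symm h] at h1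
  have h2 : (n + 1).choose (n - j).succ = (n+1).choose j := by
    rw [show (n - j).succ = (n+1) - j by omega, Nat.choose_symm (by omega)]
  rw [h2] at h1
  have h3 : (n-j) + 1 = n + 1 - j := by omega
  rw [h3] at h1
  rw [← h1]
  ring

lemma adams_faulhaber (n num : ℕ) :
    (∑ k ∈ range num, (k : ℚ) ^ n) =
      ∑ j ∈ range (n + 1),
        bernoulli j * (n.choose j) * (num : ℚ) ^ (n + 1 - j) / ((n + 1 - j : ℕ) : ℚ) := by
  rw [sum_range_pow]
  refine Finset.sum_congr rfl fun j hj => ?_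
  have hj' : j ≤ n := by have := Finset.mem_range.mp hj; omega
  have h1 : ((n : ℚ) + 1) ≠ 0 := by positivity
  have h2 : (((n + 1 - j : ℕ)) : ℚ) ≠ 0 := by
    have : 0 < n + 1 - j := by omega
    exact_mod_cast this.ne'
  have key : (((n+1).choose j * (n + 1 - j) : ℕ) : ℚ) = ((n.choose j * (n+1) : ℕ) : ℚ) :=
    congrArg _ (adams_choose_ident n j hj')
  push_cast at key
  rw [div_eq_div_iff (by exact_mod_cast h1) h2]
  linear_combination (bernoulli j * (num:ℚ) ^ (n+1-j)) * key
lemma adams_pow_congr (p s M a : ℕ) (hps : (p:ℤ)^a ∣ (s:ℤ)) (haM : a ≤ M)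
    (x y : ℤ) (h : (p:ℤ)^M ∣ y - x) : (p:ℤ)^(M+a) ∣ y^s - x^s := by
  have hgeom : (∑ i ∈ range s, y ^ i * x ^ (s - 1 - i)) * (y - x) = y ^ s - x ^ s :=
    geom_sum₂_mul y x s
  rw [← hgeom, pow_add, mul_comm ((p:ℤ)^M)]
  apply mul_dvd_mul _ h
  have h1 : (p:ℤ)^a ∣ (∑ i ∈ range s, y ^ i * x ^ (s - 1 - i)) - (s : ℤ) * x ^ (s-1) := by
    have hsum : ∀ i ∈ range s, x ^ i * x ^ (s-1-i) = x ^ (s-1) := fun i hi => by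
      rw [← pow_add]; congr 1; have := Finset.mem_range.mp hi; omega
    have hc : (s : ℤ) * x ^ (s-1) = ∑ i ∈ range s, x ^ i * x ^ (s - 1 - i) := by
      rw [Finset.sum_congr rfl hsum, Finset.sum_const, card_range, nsmul_eq_mul]
    rw [hc, ← Finset.sum_sub_distrib]
    apply Finset.dvd_sum
    intro i _
    have he : y ^ i * x ^ (s-1-i) - x ^ i * x ^ (s-1-i) = (y^i - x^i) * x ^ (s-1-i) := by ring
    rw [he]
    apply dvd_mul_of_dvd_left
    exact dvd_trans (pow_dvd_pow (p:ℤ) haM) (dvd_trans h (sub_dvd_pow_sub_pow y x i))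
  have h2 : (p:ℤ)^a ∣ (s : ℤ) * x ^ (s-1) := hps.mul_right _
  have := dvd_add h1 h2
  simpa using this

lemma adams_val_le (p : ℕ) (hp : p.Prime) (m : ℕ) (hm : 0 < m) : padicValNat p m ≤ m - 1 := by
  have h1 : p ^ padicValNat p m ≤ m := Nat.le_of_dvd hm pow_padicValNat_dvd
  have h2 : m < p ^ m := Nat.lt_pow_self hp.one_lt
  have := lt_of_le_of_lt h1 h2
  have := (Nat.pow_lt_pow_iff_right hp.one_lt).mp this
  omega

lemma adams_norm_nat (p : ℕ) [hp : Fact p.Prime] (m : ℕ) (hm : 0 < m) :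
    (p:ℝ) ^ (-((m - 1 : ℕ) : ℤ)) ≤ ‖(m : ℚ_[p])‖ := by
  have hm0 : (m : ℚ_[p]) ≠ 0 := Nat.cast_ne_zero.mpr hm.ne'
  rw [Padic.norm_eq_zpow_neg_valuation hm0, Padic.valuation_natCast]
  have hp1 : (1:ℝ) < p := by exact_mod_cast hp.out.one_lt
  apply zpow_le_zpow_right₀ hp1.le
  have := adams_val_le p hp.out m hm
  omega

lemma adams_norm_inv_nat (p : ℕ) [hp : Fact p.Prime] (m : ℕ) (hm : 0 < m) :
    ‖((m : ℚ_[p]))⁻¹‖ ≤ (p:ℝ) ^ (((m - 1 : ℕ) : ℤ)) := by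
  rw [norm_inv]
  have h := adams_norm_nat p m hm
  have hp0 : (0:ℝ) < p := by exact_mod_cast hp.out.pos
  have hpos : (0:ℝ) < (p:ℝ) ^ (-((m - 1 : ℕ) : ℤ)) := zpow_pos hp0 _
  calc ‖(m : ℚ_[p])‖⁻¹ ≤ ((p:ℝ) ^ (-((m - 1 : ℕ) : ℤ)))⁻¹ := inv_anti₀ hpos h
    _ = (p:ℝ) ^ (((m - 1 : ℕ) : ℤ)) := by rw [← zpow_neg, neg_neg]

lemma adams_mul_norm_le (p : ℕ) [hp : Fact p.Prime] {x y : ℚ_[p]} {e f : ℤ}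
    (hx : ‖x‖ ≤ (p:ℝ)^e) (hy : ‖y‖ ≤ (p:ℝ)^f) : ‖x*y‖ ≤ (p:ℝ)^(e+f) := by
  have hp0 : (0:ℝ) < p := by exact_mod_cast hp.out.pos
  rw [norm_mul, zpow_add₀ hp0.ne']
  exact mul_le_mul hx hy (norm_nonneg _) (le_of_lt (zpow_pos hp0 _))
lemma adams_norm_natcast_le_one (p : ℕ) [hp : Fact p.Prime] (m : ℕ) : ‖(m:ℚ_[p])‖ ≤ 1 := by
  have := Padic.norm_int_le_one (p := p) (m : ℤ)
  simpa using this

/-- The single Faulhaber term recast in `ℚ_[p]`. -/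
lemma adams_term_norm (p : ℕ) [hp : Fact p.Prime] (n j num e : ℕ) (hj : j < n)
    (hB : ‖((bernoulli j : ℚ) : ℚ_[p])‖ ≤ (p:ℝ)^(1:ℤ))
    (hnum : ‖((num:ℚ_[p]))^(n+1-j)‖ ≤ (p:ℝ)^(-(e * (n+1-j) : ℕ) : ℤ)) :
    ‖((bernoulli j : ℚ) : ℚ_[p]) * ((n.choose j : ℕ) : ℚ_[p]) * ((num:ℚ_[p]))^(n+1-j) *
      (((n+1-j : ℕ) : ℚ_[p]))⁻¹‖ ≤ (p:ℝ)^((1 : ℤ) + 0 + (-(e * (n+1-j) : ℕ) : ℤ) + ((n - j : ℕ) : ℤ)) := by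
  have hC : ‖((n.choose j : ℕ) : ℚ_[p])‖ ≤ (p:ℝ)^(0:ℤ) := by
    simpa using adams_norm_natcast_le_one p (n.choose j)
  have hm : ‖(((n+1-j : ℕ) : ℚ_[p]))⁻¹‖ ≤ (p:ℝ)^(((n - j : ℕ)) : ℤ) := by
    have h0 : 0 < n + 1 - j := by omega
    have := adams_norm_inv_nat p (n+1-j) h0
    have he : (n + 1 - j) - 1 = n - j := by omega
    rwa [he] at this
  exact adams_mul_norm_le p (adams_mul_norm_le p (adams_mul_norm_le p hB hC) hnum) hm

lemma adams_bernoulli_norm (p : ℕ) [hp : Fact p.Prime] :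
    ∀ n : ℕ, ‖((bernoulli n : ℚ) : ℚ_[p])‖ ≤ (p:ℝ)^(1:ℤ) := by
  intro n
  induction n using Nat.strong_induction_on with
  | _ n ih =>
  have hfa := adams_faulhaber n p
  rw [Finset.sum_range_succ] at hfa
  have hn1 : n + 1 - n = 1 := by omega
  rw [hn1] at hfa
  simp only [Nat.choose_self, Nat.cast_one, mul_one, pow_one, div_one] at hfa
  -- hfa : Σ_{k<p} k^n = Σ_{j<n} t j + bernoulli n * p
  have key : ((bernoulli n : ℚ) : ℚ_[p]) * (p:ℚ_[p]) =
      (((∑ k ∈ range p, k^n : ℕ) : ℕ) : ℚ_[p]) -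
      ∑ j ∈ range n, ((bernoulli j : ℚ) : ℚ_[p]) * ((n.choose j : ℕ) : ℚ_[p]) *
        ((p:ℚ_[p]))^(n+1-j) * (((n+1-j : ℕ) : ℚ_[p]))⁻¹ := by
    have hq : (bernoulli n * p : ℚ) =
        ((∑ k ∈ range p, k^n : ℕ) : ℚ) -
        ∑ j ∈ range n, bernoulli j * (n.choose j) * (p : ℚ) ^ (n + 1 - j) / ((n + 1 - j : ℕ) : ℚ) := by
      push_cast
      rw [hfa]
      ring
    calc ((bernoulli n : ℚ) : ℚ_[p]) * (p:ℚ_[p])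
        = (((bernoulli n * p : ℚ)) : ℚ_[p]) := by push_cast; ring
      _ = _ := by rw [hq]; push_cast [div_eq_mul_inv]; ring
  have hnorm : ‖((bernoulli n : ℚ) : ℚ_[p]) * (p:ℚ_[p])‖ ≤ 1 := by
    rw [key, sub_eq_add_neg]
    refine le_trans (Padic.nonarchimedean _ _) (max_le ?_ ?_)
    · exact adams_norm_natcast_le_one p _
    · rw [norm_neg]
      apply IsUltrametricDist.norm_sum_le_of_forall_le_of_nonneg zero_le_one
      intro j hj
      have hjn : j < n := Finset.mem_range.mp hj
      have hnum : ‖((p:ℚ_[p]))^(n+1-j)‖ ≤ (p:ℝ)^(-(1 * (n+1-j) : ℕ) : ℤ) := by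
        rw [Padic.norm_p_pow, one_mul]
      have := adams_term_norm p n j p 1 hjn (ih j hjn) hnum
      refine le_trans this ?_
      have hexp : (1 : ℤ) + 0 + (-(1 * (n+1-j) : ℕ) : ℤ) + ((n - j : ℕ) : ℤ) = 0 := by
        have h1 : ((n + 1 - j : ℕ) : ℤ) = (n : ℤ) + 1 - j := by omega
        have h2 : ((n - j : ℕ) : ℤ) = (n : ℤ) - j := by omega
        push_cast [h1, h2]
        ring
      rw [hexp, zpow_zero]
  have hp0 : (0:ℝ) < p := by exact_mod_cast hp.out.pos
  have hnp : ‖(p:ℚ_[p])‖ = (p:ℝ)⁻¹ := Padic.norm_p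
  rw [norm_mul, hnp] at hnorm
  rw [zpow_one]
  calc ‖((bernoulli n : ℚ) : ℚ_[p])‖ = ‖((bernoulli n : ℚ) : ℚ_[p])‖ * (p:ℝ)⁻¹ * p := by
        field_simp
    _ ≤ 1 * p := by
        apply mul_le_mul_of_nonneg_right hnorm hp0.le
    _ = p := one_mul _
lemma adams_T_dvd (p : ℕ) [hp : Fact p.Prime] (s : ℕ) (hs : 0 < s) (hnd : ¬ (p-1) ∣ s)
    (M : ℕ) (haM : padicValNat p s ≤ M) :
    (p:ℤ)^(M + padicValNat p s) ∣ ∑ k ∈ range (p^M), (k:ℤ)^s := by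
  set a := padicValNat p s with ha
  set N := p ^ M with hN
  have hNpos : 0 < N := Nat.pow_pos hp.out.pos
  obtain ⟨g, hg⟩ := IsCyclic.exists_generator (α := (ZMod p)ˣ)
  set c := ((g : ZMod p)).val with hc
  have hcg : ((c : ℕ) : ZMod p) = (g : ZMod p) := ZMod.natCast_rightInverse (g : ZMod p)
  have hcs : ((c : ℕ) : ZMod p)^s ≠ 1 := by
    rw [hcg]
    intro h
    have hu : (g^s : (ZMod p)ˣ) = 1 := Units.ext (by push_cast; exact h)
    have horder : orderOf g = p - 1 := by
      rw [orderOf_eq_card_of_forall_mem_zpowers hg, Nat.card_eq_fintype_card, ZMod.card_units]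
    exact hnd (horder ▸ orderOf_dvd_of_pow_eq_one hu)
  have hcop : Nat.Coprime c p := ZMod.val_coe_unit_coprime g
  have hcopN : Nat.Coprime c N := hcop.pow_right M
  set u := ZMod.unitOfCoprime c hcopN with hu
  set c' := ((u⁻¹ : (ZMod N)ˣ) : ZMod N).val with hc'
  have hcN : ((c : ℕ) : ZMod N) = (u : ZMod N) := (ZMod.coe_unitOfCoprime c hcopN).symm
  have hc'N : ((c' : ℕ) : ZMod N) = ((u⁻¹ : (ZMod N)ˣ) : ZMod N) :=
    ZMod.natCast_rightInverse _
  -- helper for inverses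
  have hmod : ∀ (d e : ℕ), ((d : ZMod N) * (e : ZMod N) = 1) → ∀ k < N, (d * ((e * k) % N)) % N = k := by
    intro d e hde k hk
    have h1 : ((d * ((e * k) % N) : ℕ) : ZMod N) = ((k : ℕ) : ZMod N) := by
      push_cast [ZMod.natCast_mod]
      calc (d : ZMod N) * ((e:ZMod N) * k) = ((d:ZMod N) * e) * k := by ring
        _ = k := by rw [hde, one_mul]
    have h2 := (ZMod.natCast_eq_natCast_iff _ _ _).mp h1
    unfold Nat.ModEq at h2
    rwa [Nat.mod_eq_of_lt hk] at h2
  have hcc' : (c : ZMod N) * (c' : ZMod N) = 1 := by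
    rw [hcN, hc'N]; exact u.mul_inv
  have hc'c : (c' : ZMod N) * (c : ZMod N) = 1 := by
    rw [hcN, hc'N]; exact u.inv_mul
  -- bijection
  have hbij : ∑ k ∈ range N, ((((c * k) % N : ℕ)) : ℤ)^s = ∑ k ∈ range N, (k:ℤ)^s := by
    apply Finset.sum_nbij' (i := fun k => (c * k) % N) (j := fun k => (c' * k) % N)
    · intro k _; exact Finset.mem_range.mpr (Nat.mod_lt _ hNpos)
    · intro k _; exact Finset.mem_range.mpr (Nat.mod_lt _ hNpos)
    · intro k hk; exact hmod c' c hc'c k (Finset.mem_range.mp hk)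
    · intro k hk; exact hmod c c' hcc' k (Finset.mem_range.mp hk)
    · intro k _; rfl
  -- termwise congruence
  have hterm : ∀ k ∈ range N, (p:ℤ)^(M+a) ∣ ((c:ℤ) * k)^s - ((((c * k) % N : ℕ)) : ℤ)^s := by
    intro k _
    apply adams_pow_congr p s M a ?_ haM
    · -- p^M ∣ c*k - (c*k) % N
      refine ⟨((c * k) / N : ℕ), ?_⟩
      have hdm := Nat.div_add_mod (c * k) N
      have h2 : c * k - c * k % N = N * (c * k / N) := by omega
      have hN' : ((p:ℤ))^M = (N:ℤ) := by rw [hN]; push_cast; ring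
      rw [hN', ← Nat.cast_mul c k, ← Nat.cast_mul N, ← Nat.cast_sub (Nat.mod_le _ _), h2]
    · exact_mod_cast pow_padicValNat_dvd
  -- combine
  have hdvd1 : (p:ℤ)^(M+a) ∣ ((c:ℤ)^s - 1) * (∑ k ∈ range N, (k:ℤ)^s) := by
    have heq : ((c:ℤ)^s - 1) * (∑ k ∈ range N, (k:ℤ)^s)
        = ∑ k ∈ range N, (((c:ℤ) * k)^s - ((((c * k) % N : ℕ)) : ℤ)^s) := by
      rw [Finset.sum_sub_distrib, hbij, sub_mul, one_mul, Finset.mul_sum]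
      congr 1
      apply Finset.sum_congr rfl
      intro k _
      rw [mul_pow]
    rw [heq]
    exact Finset.dvd_sum hterm
  -- cancel the coprime factor
  have hps1 : ¬ ((p:ℤ) ∣ ((c:ℤ)^s - 1)) := by
    intro h
    have h0 : (((c:ℤ)^s - 1 : ℤ) : ZMod p) = 0 := by
      rw [ZMod.intCast_zmod_eq_zero_iff_dvd]
      exact_mod_cast h
    push_cast at h0
    apply hcs
    rw [sub_eq_zero] at h0
    exact_mod_cast h0
  have hco : IsCoprime ((p:ℤ)^(M+a)) ((c:ℤ)^s - 1) := by
    apply IsCoprime.pow_left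
    exact (Prime.coprime_iff_not_dvd (Int.prime_iff_natAbs_prime.mpr (by simpa using hp.out))).mpr hps1
  exact hco.dvd_of_dvd_mul_left hdvd1

theorem adams_theorem (p : ℕ) (hp : p.Prime) (s : ℕ) (hs : 0 < s) (hse : Even s)
    (hnd : ¬ (p - 1) ∣ s) :
    0 ≤ padicValRat p (bernoulli s / s) := by
  haveI : Fact p.Prime := ⟨hp⟩
  set a := padicValNat p s with ha
  set M := a + 2 with hM
  set N := p ^ M with hN
  have hp1 : (1:ℝ) < p := by exact_mod_cast hp.one_lt
  have hp0 : (0:ℝ) < p := by exact_mod_cast hp.pos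
  -- Faulhaber at N
  have hfa := adams_faulhaber s N
  rw [Finset.sum_range_succ] at hfa
  have hs1 : s + 1 - s = 1 := by omega
  rw [hs1] at hfa
  simp only [Nat.choose_self, Nat.cast_one, mul_one, pow_one, div_one] at hfa
  -- key identity in ℚ_[p]
  have key : ((bernoulli s : ℚ) : ℚ_[p]) * ((N:ℚ_[p])) =
      ((∑ k ∈ range N, (k:ℤ)^s : ℤ) : ℚ_[p]) -
      ∑ j ∈ range s, ((bernoulli j : ℚ) : ℚ_[p]) * ((s.choose j : ℕ) : ℚ_[p]) *
        ((N:ℚ_[p]))^(s+1-j) * (((s+1-j : ℕ) : ℚ_[p]))⁻¹ := by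
    have hq : (bernoulli s * N : ℚ) =
        ((∑ k ∈ range N, (k:ℤ)^s : ℤ) : ℚ) -
        ∑ j ∈ range s, bernoulli j * (s.choose j) * (N : ℚ) ^ (s + 1 - j) / ((s + 1 - j : ℕ) : ℚ) := by
      push_cast
      rw [hfa]
      ring
    calc ((bernoulli s : ℚ) : ℚ_[p]) * ((N:ℚ_[p]))
        = (((bernoulli s * N : ℚ)) : ℚ_[p]) := by push_cast; ring
      _ = _ := by rw [hq]; push_cast [div_eq_mul_inv]; ring
  -- norm bounds
  have haM : a ≤ M := by omega
  have hT : ‖(((∑ k ∈ range N, (k:ℤ)^s : ℤ)) : ℚ_[p])‖ ≤ (p:ℝ) ^ (-((M + a : ℕ) : ℤ)) :=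
    (Padic.norm_int_le_pow_iff_dvd _ _).mpr (adams_T_dvd p s hs hnd M haM)
  have hBN : ‖((bernoulli s : ℚ) : ℚ_[p]) * ((N:ℚ_[p]))‖ ≤ (p:ℝ) ^ (-((M + a : ℕ) : ℤ)) := by
    rw [key, sub_eq_add_neg]
    refine le_trans (Padic.nonarchimedean _ _) (max_le hT ?_)
    rw [norm_neg]
    apply IsUltrametricDist.norm_sum_le_of_forall_le_of_nonneg (by positivity)
    intro j hj
    have hjs : j < s := Finset.mem_range.mp hj
    have hnum : ‖((N:ℚ_[p]))^(s+1-j)‖ ≤ (p:ℝ)^(-(M * (s+1-j) : ℕ) : ℤ) := by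
      have hNc : ((N : ℕ) : ℚ_[p]) = ((p:ℚ_[p]))^M := by rw [hN]; push_cast; ring
      rw [hNc, ← pow_mul, Padic.norm_p_pow]
    refine le_trans (adams_term_norm p s j N M hjs (adams_bernoulli_norm p j) hnum) ?_
    apply zpow_le_zpow_right₀ hp1.le
    have hc1 : ((M * (s+1-j) : ℕ) : ℤ) = (M:ℤ) * (((s-j : ℕ):ℤ) + 1) := by
      have : (s+1-j : ℕ) = (s-j) + 1 := by omega
      rw [this]; push_cast; ring
    rw [hc1]
    have hm1 : (1:ℤ) ≤ ((s-j : ℕ):ℤ) := by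
      have : 1 ≤ s - j := by omega
      exact_mod_cast this
    have hMz : (M:ℤ) = (a:ℤ) + 2 := by rw [hM]; push_cast; ring
    have hMa : ((M + a : ℕ) : ℤ) = (M:ℤ) + a := by push_cast; ring
    rw [hMa, hMz]
    nlinarith [hm1, (Nat.cast_nonneg a : (0:ℤ) ≤ (a:ℤ))]
  -- conclude ‖bernoulli s‖ ≤ p^(-a)
  have hNnorm : ‖((N:ℕ) : ℚ_[p])‖ = (p:ℝ) ^ (-(M:ℤ)) := by
    have hNc : ((N : ℕ) : ℚ_[p]) = ((p:ℚ_[p]))^M := by rw [hN]; push_cast; ring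
    rw [hNc, Padic.norm_p_pow]
  have hB : ‖((bernoulli s : ℚ) : ℚ_[p])‖ ≤ (p:ℝ) ^ (-(a:ℤ)) := by
    rw [norm_mul, hNnorm] at hBN
    have h2 : ‖((bernoulli s : ℚ) : ℚ_[p])‖ ≤ (p:ℝ) ^ (-((M + a : ℕ) : ℤ)) * (p:ℝ) ^ ((M:ℤ)) := by
      calc ‖((bernoulli s : ℚ) : ℚ_[p])‖
          = ‖((bernoulli s : ℚ) : ℚ_[p])‖ * (p:ℝ) ^ (-(M:ℤ)) * (p:ℝ) ^ ((M:ℤ)) := by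
            rw [mul_assoc, ← zpow_add₀ hp0.ne', neg_add_cancel, zpow_zero, mul_one]
        _ ≤ (p:ℝ) ^ (-((M + a : ℕ) : ℤ)) * (p:ℝ) ^ ((M:ℤ)) :=
            mul_le_mul_of_nonneg_right hBN (le_of_lt (zpow_pos hp0 _))
    refine le_trans h2 (le_of_eq ?_)
    rw [← zpow_add₀ hp0.ne']
    congr 1
    push_cast
    ring
  -- norm of s
  have hsnorm : ‖((s:ℕ) : ℚ_[p])‖ = (p:ℝ) ^ (-(a:ℤ)) := by
    have hs0 : ((s:ℕ) : ℚ_[p]) ≠ 0 := Nat.cast_ne_zero.mpr hs.ne'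
    rw [Padic.norm_eq_zpow_neg_valuation hs0, Padic.valuation_natCast]
  -- final
  have hfinal : ‖(((bernoulli s / s : ℚ)) : ℚ_[p])‖ ≤ 1 := by
    have hcast : (((bernoulli s / s : ℚ)) : ℚ_[p]) =
        ((bernoulli s : ℚ) : ℚ_[p]) / ((s:ℕ) : ℚ_[p]) := by push_cast; ring
    rw [hcast, norm_div, hsnorm]
    rw [div_le_one (zpow_pos hp0 _)]
    simpa using hB
  rw [← Padic.valuation_ratCast (p := p)]
  exact (Padic.norm_le_one_iff_val_nonneg _).mp hfinal
end

section
/- Let p be an odd prime, a, t nonnegative integers, and k a positive integer with p^(2a+1) | k. Set v = min(v_p(k) - 2a - 1, t) and M = 3a + t + v + 2. Suppose x' is an integer with x'^(k') ≡ g (mod p^(a+1)), where k = p^(v_p(k)) * k' with p not dividing k', and g is a d-th root of unity mod p^M with d = (p-1)/gcd(k,p-1). Then for any integers n, n' coprime to p with n' ≡ n*x' (mod p^(a+1)), we have n'^((k+p^a(p-1))p^t) + n'^((k-p^a(p-1))p^t) ≡ g * (n^((k+p^a(p-1))p^t) + n^((k-p^a(p-1))p^t)) (mod p^M). -/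
private lemma step_lemma {p : ℕ} (hp : p.Prime) {c : ℕ} (hc : 1 ≤ c) {x y : ℤ}
    (h : x ≡ y [ZMOD (p:ℤ)^c]) : x ^ p ≡ y ^ p [ZMOD (p:ℤ)^(c+1)] := by
  have hd : ((p:ℤ)^c) ∣ y - x := h.dvd
  have hp1 : (p:ℤ) ∣ y - x := dvd_trans (dvd_pow_self (p:ℤ) (by omega)) hd
  have hxy : ((x : ZMod p)) = (y : ZMod p) := by
    have h0 : (((y - x : ℤ)) : ZMod p) = 0 := by
      rw [ZMod.intCast_zmod_eq_zero_iff_dvd]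
      exact_mod_cast hp1
    push_cast at h0
    exact (sub_eq_zero.mp h0).symm
  have hpS : (p:ℤ) ∣ ∑ i ∈ Finset.range p, x ^ i * y ^ (p - 1 - i) := by
    have hz : (((∑ i ∈ Finset.range p, x ^ i * y ^ (p - 1 - i) : ℤ)) : ZMod p) = 0 := by
      push_cast
      calc ∑ i ∈ Finset.range p, (x:ZMod p) ^ i * (y:ZMod p) ^ (p - 1 - i)
          = ∑ _i ∈ Finset.range p, (y:ZMod p) ^ (p-1) := by
            apply Finset.sum_congr rfl
            intro i hi
            rw [hxy, ← pow_add]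
            congr 1
            have := Finset.mem_range.mp hi
            omega
        _ = (p : ZMod p) * (y:ZMod p)^(p-1) := by
            rw [Finset.sum_const, Finset.card_range, nsmul_eq_mul]
        _ = 0 := by rw [ZMod.natCast_self, zero_mul]
    exact_mod_cast (ZMod.intCast_zmod_eq_zero_iff_dvd _ p).mp hz
  have hdvd : ((p:ℤ)^(c+1)) ∣ y^p - x^p := by
    have heq : y^p - x^p = (∑ i ∈ Finset.range p, x ^ i * y ^ (p - 1 - i)) * (y - x) := by
      have := geom_sum₂_mul x y p
      linarith [this]
    rw [heq, pow_succ, mul_comm ((p:ℤ)^c)]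
    exact mul_dvd_mul hpS hd
  exact Int.ModEq.symm ((Int.modEq_iff_dvd).mpr (by rw [show x^p - y^p = -(y^p - x^p) by ring]; exact dvd_neg.mpr hdvd))

private lemma pow_pow_lemma {p : ℕ} (hp : p.Prime) {c : ℕ} (hc : 1 ≤ c) (s : ℕ) {x y : ℤ}
    (h : x ≡ y [ZMOD (p:ℤ)^c]) : x ^ (p^s) ≡ y ^ (p^s) [ZMOD (p:ℤ)^(c+s)] := by
  induction s with
  | zero => simpa using h
  | succ m ih =>
    have h2 := step_lemma hp (c := c + m) (by omega) ih
    rw [← pow_mul, ← pow_mul, ← pow_succ] at h2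
    rw [show c + (m+1) = c + m + 1 by omega]
    exact h2

private lemma euler_lemma {p : ℕ} (hp : p.Prime) (s : ℕ) {n : ℤ} (hn : IsCoprime n (p:ℤ)) :
    n ^ ((p-1) * p^s) ≡ 1 [ZMOD (p:ℤ)^(s+1)] := by
  haveI : Fact p.Prime := ⟨hp⟩
  haveI : NeZero (p^(s+1)) := ⟨pow_ne_zero _ hp.pos.ne'⟩
  have hu : IsUnit ((n : ZMod (p^(s+1)))) := by
    obtain ⟨u, w, huw⟩ := hn.pow_right (n := s+1)
    apply IsUnit.of_mul_eq_one ((u : ZMod (p^(s+1))))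
    have hcast : ((u * n + w * (p:ℤ)^(s+1) : ℤ) : ZMod (p^(s+1))) = 1 := by rw [huw]; simp
    push_cast at hcast
    have hz : ((p:ZMod (p^(s+1))))^(s+1) = 0 := by
      rw [← Nat.cast_pow, ZMod.natCast_self]
    rw [hz, mul_zero, add_zero, mul_comm] at hcast
    exact hcast
  obtain ⟨z, hz⟩ := hu
  have hz1 : z ^ ((p-1) * p^s) = 1 := by
    have := ZMod.pow_totient z
    rwa [Nat.totient_prime_pow hp (Nat.succ_pos s), show s + 1 - 1 = s by omega, mul_comm] at this
  have hzm : ((n ^ ((p-1) * p^s) : ℤ) : ZMod (p^(s+1))) = ((1 : ℤ) : ZMod (p^(s+1))) := by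
    push_cast
    rw [← hz, ← Units.val_pow_eq_pow_val, hz1, Units.val_one]
  have := (ZMod.intCast_eq_intCast_iff _ _ _).mp hzm
  simpa using this


theorem twist_congruence (p : ℕ) (hp : p.Prime) (hodd : Odd p)
    (a t : ℕ) (k : ℕ) (hk : 0 < k) (hdvd : p ^ (2 * a + 1) ∣ k)
    (hkbig : p ^ a * (p - 1) < k)
    (v : ℕ) (hv : v = min (padicValNat p k - (2 * a + 1)) t)
    (M : ℕ) (hM : M = 3 * a + t + v + 2)
    (k' : ℕ) (hk' : k = p ^ (padicValNat p k) * k') (hpk' : ¬ p ∣ k')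
    (d : ℕ) (hd : d = (p - 1) / Nat.gcd k (p - 1))
    (g : ℤ) (hg : g ^ d ≡ 1 [ZMOD (p : ℤ) ^ M])
    (x' : ℤ) (hx' : x' ^ k' ≡ g [ZMOD (p : ℤ) ^ (a + 1)])
    (n n' : ℤ) (hn : IsCoprime n (p : ℤ)) (hn' : IsCoprime n' (p : ℤ))
    (hcong : n' ≡ n * x' [ZMOD (p : ℤ) ^ (a + 1)]) :
    n' ^ ((k + p ^ a * (p - 1)) * p ^ t) + n' ^ ((k - p ^ a * (p - 1)) * p ^ t) ≡
      g * (n ^ ((k + p ^ a * (p - 1)) * p ^ t) + n ^ ((k - p ^ a * (p - 1)) * p ^ t))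
      [ZMOD (p : ℤ) ^ M] := by
  haveI : Fact p.Prime := ⟨hp⟩
  set r := padicValNat p k with hr_def
  have hp2 : 2 ≤ p := hp.two_le
  have hp3 : 3 ≤ p := by rcases hodd with ⟨m, hm⟩; omega
  -- basic facts
  have hcopk' : Nat.Coprime p k' := (Nat.Prime.coprime_iff_not_dvd hp).mpr hpk'
  have hr : 2*a+1 ≤ r := by
    have h1 : p^(2*a+1) ∣ p^r * k' := hk' ▸ hdvd
    have h2 : p^(2*a+1) ∣ p^r :=
      Nat.Coprime.dvd_of_dvd_mul_right (Nat.Coprime.pow_left _ hcopk') h1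
    exact (Nat.pow_dvd_pow_iff_le_right hp.one_lt).mp h2
  have hvle : v ≤ r - (2*a+1) ∧ v ≤ t := by constructor <;> omega
  have hk'pos : 0 < k' := by
    rcases Nat.eq_zero_or_pos k' with h | h
    · rw [h, mul_zero] at hk'; omega
    · exact h
  have hgcddvd : Nat.gcd k (p-1) ∣ p - 1 := Nat.gcd_dvd_right k (p-1)
  have hddvd : d ∣ p - 1 := hd ▸ Nat.div_dvd_of_dvd hgcddvd
  have hdpos : 0 < d := by
    rw [hd]
    exact Nat.div_pos (Nat.le_of_dvd (by omega) hgcddvd) (Nat.gcd_pos_of_pos_left _ hk)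
  have hcopp1 : Nat.Coprime (p-1) p := by
    rw [Nat.coprime_comm]
    exact (Nat.Prime.coprime_iff_not_dvd hp).mpr (fun h => by
      have := Nat.le_of_dvd (by omega) h; omega)
  -- F3 : x'^(p-1) ≡ 1 mod p^(a+1)
  have hMa1 : a+1 ≤ M := by omega
  have hx'kd : x' ^ (k'*d) ≡ 1 [ZMOD (p:ℤ)^(a+1)] := by
    have h1 : (x'^(k'))^d ≡ g^d [ZMOD (p:ℤ)^(a+1)] := hx'.pow d
    have h2 : g^d ≡ 1 [ZMOD (p:ℤ)^(a+1)] := hg.of_dvd (pow_dvd_pow _ hMa1)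
    rw [pow_mul]
    exact h1.trans h2
  haveI : NeZero (p^(a+1)) := ⟨pow_ne_zero _ hp.pos.ne'⟩
  have hzmx : ((x' : ZMod (p^(a+1))))^(k'*d) = 1 := by
    have hc : ((x'^(k'*d) : ℤ) : ZMod (p^(a+1))) = ((1:ℤ) : ZMod (p^(a+1))) := by
      apply (ZMod.intCast_eq_intCast_iff _ _ _).mpr
      simpa using hx'kd
    push_cast at hc
    exact hc
  have hkd1 : 1 ≤ k'*d := Nat.one_le_iff_ne_zero.mpr (by positivity)
  have hx'unit : IsUnit ((x' : ZMod (p^(a+1)))) := by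
    apply IsUnit.of_mul_eq_one (((x' : ZMod (p^(a+1))))^(k'*d - 1))
    rw [← pow_succ']
    rw [show k'*d - 1 + 1 = k'*d by omega]
    exact hzmx
  have hx3 : x' ^ (p-1) ≡ 1 [ZMOD (p:ℤ)^(a+1)] := by
    obtain ⟨z, hz⟩ := hx'unit
    have hz1 : z ^ (k'*d) = 1 := by
      ext
      rw [Units.val_pow_eq_pow_val, hz, hzmx, Units.val_one]
    have hord1 : orderOf z ∣ k'*d := orderOf_dvd_of_pow_eq_one hz1
    have hord2 : orderOf z ∣ p^a * (p-1) := by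
      have hcard := orderOf_dvd_card (x := z)
      rwa [ZMod.card_units_eq_totient, Nat.totient_prime_pow hp (Nat.succ_pos a),
        show a + 1 - 1 = a by omega] at hcard
    have hcopkd : Nat.Coprime (k'*d) p :=
      Nat.Coprime.mul (Nat.coprime_comm.mp hcopk') (Nat.Coprime.coprime_dvd_left hddvd hcopp1)
    have hordp : Nat.Coprime (orderOf z) (p^a) :=
      Nat.Coprime.pow_right a (Nat.Coprime.coprime_dvd_left hord1 hcopkd)
    have hordp1 : orderOf z ∣ p - 1 := by
      rw [mul_comm] at hord2
      exact Nat.Coprime.dvd_of_dvd_mul_right hordp hord2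
    have hzp1 : z ^ (p-1) = 1 := orderOf_dvd_iff_pow_eq_one.mp hordp1
    have : ((x' ^ (p-1) : ℤ) : ZMod (p^(a+1))) = ((1:ℤ) : ZMod (p^(a+1))) := by
      push_cast
      rw [← hz, ← Units.val_pow_eq_pow_val, hzp1, Units.val_one]
    have := (ZMod.intCast_eq_intCast_iff _ _ _).mp this
    simpa using this

  -- notation
  set e := k * p^t with he_def
  set dl := (p-1) * p^(a+t) with hdl_def
  have hqdl : (p^a * (p-1)) * p^t = dl := by rw [hdl_def]; ring
  have hdle : dl ≤ e := by
    rw [← hqdl, he_def]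
    exact Nat.mul_le_mul_right _ (le_of_lt hkbig)
  have he2 : e = k' * p^(r+t) := by rw [he_def, hk']; ring
  -- g-power fact
  have hgpow : g ^ (p^(r+t)) ≡ g [ZMOD (p:ℤ)^M] := by
    have hd1 : d ∣ p^(r+t) - 1 := by
      refine dvd_trans hddvd ?_
      have := Nat.sub_dvd_pow_sub_pow p 1 (r+t)
      simpa using this
    obtain ⟨c, hc⟩ := hd1
    have hpe : p^(r+t) = 1 + d * c := by
      have h1 : 1 ≤ p^(r+t) := Nat.one_le_pow _ _ hp.pos
      omega
    calc g^(p^(r+t)) = g * (g^d)^c := by rw [hpe, pow_add, pow_one, ← pow_mul]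
      _ ≡ g * 1^c [ZMOD (p:ℤ)^M] := (hg.pow c).mul_left g
      _ = g := by simp
  -- H1 : n'^e ≡ g * n^e mod p^M
  have hMle : M ≤ (a+1)+(r+t) := by omega
  have H1 : n'^e ≡ g * n^e [ZMOD (p:ℤ)^M] := by
    have h1a : n'^(p^(r+t)) ≡ (n*x')^(p^(r+t)) [ZMOD (p:ℤ)^((a+1)+(r+t))] :=
      pow_pow_lemma hp (by omega) (r+t) hcong
    have h1b : n'^e ≡ (n*x')^e [ZMOD (p:ℤ)^((a+1)+(r+t))] := by
      rw [he2, mul_comm k', pow_mul, pow_mul]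
      exact h1a.pow k'
    have h1c : x'^e ≡ g^(p^(r+t)) [ZMOD (p:ℤ)^((a+1)+(r+t))] := by
      rw [he2, pow_mul]
      exact pow_pow_lemma hp (by omega) (r+t) hx'
    have h1d : n'^e ≡ n^e * x'^e [ZMOD (p:ℤ)^((a+1)+(r+t))] := by
      rw [← mul_pow]; exact h1b
    have h1e : n'^e ≡ n^e * g^(p^(r+t)) [ZMOD (p:ℤ)^((a+1)+(r+t))] :=
      h1d.trans (h1c.mul_left _)
    have h1f : n'^e ≡ n^e * g^(p^(r+t)) [ZMOD (p:ℤ)^M] :=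
      h1e.of_dvd (pow_dvd_pow _ hMle)
    calc n'^e ≡ n^e * g^(p^(r+t)) [ZMOD (p:ℤ)^M] := h1f
      _ ≡ n^e * g [ZMOD (p:ℤ)^M] := hgpow.mul_left _
      _ = g * n^e := mul_comm _ _
  -- H2 : n'^dl ≡ n^dl mod p^(2a+t+1)
  have H2 : n'^dl ≡ n^dl [ZMOD (p:ℤ)^((a+1)+(a+t))] := by
    have h2a : n'^(p^(a+t)) ≡ (n*x')^(p^(a+t)) [ZMOD (p:ℤ)^((a+1)+(a+t))] :=
      pow_pow_lemma hp (by omega) (a+t) hcong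
    have h2b : n'^dl ≡ (n*x')^dl [ZMOD (p:ℤ)^((a+1)+(a+t))] := by
      rw [hdl_def, mul_comm (p-1), pow_mul, pow_mul]
      exact h2a.pow (p-1)
    have h2c : x'^dl ≡ 1 [ZMOD (p:ℤ)^((a+1)+(a+t))] := by
      have := pow_pow_lemma hp (c := a+1) (by omega) (a+t) hx3
      rw [← pow_mul, one_pow] at this
      rwa [hdl_def]
    calc n'^dl ≡ (n*x')^dl [ZMOD (p:ℤ)^((a+1)+(a+t))] := h2b
      _ = n^dl * x'^dl := mul_pow n x' dl
      _ ≡ n^dl * 1 [ZMOD (p:ℤ)^((a+1)+(a+t))] := h2c.mul_left _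
      _ = n^dl := mul_one _
  -- H3 : Euler
  have hB1 : n^dl ≡ 1 [ZMOD (p:ℤ)^(a+t+1)] := by
    have := euler_lemma hp (a+t) hn
    rwa [← hdl_def] at this
  have hB'1 : n'^dl ≡ 1 [ZMOD (p:ℤ)^(a+t+1)] := by
    have := euler_lemma hp (a+t) hn'
    rwa [← hdl_def] at this
  -- abbreviations
  set A := n ^ (e - dl) with hA_def
  set B := n ^ dl with hB_def
  set A' := n' ^ (e - dl) with hA'_def
  set B' := n' ^ dl with hB'_def
  have hAB : A * B = n ^ e := by
    rw [hA_def, hB_def, ← pow_add, Nat.sub_add_cancel hdle]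
  have hA'B' : A' * B' = n' ^ e := by
    rw [hA'_def, hB'_def, ← pow_add, Nat.sub_add_cancel hdle]
  -- H4 : B*B'^2 + B ≡ B'*B^2 + B' mod p^M
  have H4 : B * B'^2 + B ≡ B' * B^2 + B' [ZMOD (p:ℤ)^M] := by
    have hdvd1 : (p:ℤ)^((a+1)+(a+t)) ∣ B - B' := H2.dvd
    have hdvd2 : (p:ℤ)^(a+t+1) ∣ B * B' - 1 := by
      have h3 : B * B' ≡ 1 [ZMOD (p:ℤ)^(a+t+1)] := by
        have := hB1.mul hB'1
        simpa using this
      exact (h3.symm).dvd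
    have hprod : (p:ℤ)^M ∣ (B - B') * (B * B' - 1) := by
      refine dvd_trans (pow_dvd_pow _ (show M ≤ ((a+1)+(a+t)) + (a+t+1) by omega)) ?_
      rw [pow_add]
      exact mul_dvd_mul hdvd1 hdvd2
    have heq : (B' * B^2 + B') - (B * B'^2 + B) = (B - B') * (B * B' - 1) := by ring
    exact (Int.modEq_iff_dvd).mpr (heq ▸ hprod)
  -- exponent rewrites
  have hexp1 : (k + p^a*(p-1)) * p^t = (e - dl) + dl*2 := by
    rw [add_mul, hqdl]
    omega
  have hexp2 : (k - p^a*(p-1)) * p^t = e - dl := by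
    rw [Nat.sub_mul, hqdl]
  rw [hexp1, hexp2]
  have hgoal2 : ∀ m : ℤ, m ^ ((e - dl) + dl*2) = m ^ (e-dl) * (m^dl)^2 := by
    intro m; rw [pow_add, pow_mul]
  rw [hgoal2 n, hgoal2 n']
  -- now goal : A' * B'^2 + A' ≡ g * (A * B^2 + A)
  show A' * B'^2 + A' ≡ g * (A * B^2 + A) [ZMOD (p:ℤ)^M]
  have hcop : IsCoprime ((p:ℤ)^M) (B * B') := by
    refine IsCoprime.pow_left ?_
    rw [hB_def, hB'_def]
    exact IsCoprime.mul_right (hn.symm.pow_right) (hn'.symm.pow_right)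
  have hH1' : A' * B' ≡ g * (A * B) [ZMOD (p:ℤ)^M] := by
    rw [hA'B', hAB]; exact H1
  have hkey : (B * B') * (A' * B'^2 + A') ≡ (B * B') * (g * (A * B^2 + A)) [ZMOD (p:ℤ)^M] := by
    calc (B * B') * (A' * B'^2 + A') = (A' * B') * (B * B'^2 + B) := by ring
      _ ≡ (g * (A * B)) * (B * B'^2 + B) [ZMOD (p:ℤ)^M] := hH1'.mul_right _
      _ ≡ (g * (A * B)) * (B' * B^2 + B') [ZMOD (p:ℤ)^M] := H4.mul_left _
      _ = (B * B') * (g * (A * B^2 + A)) := by ring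
  have hdvdfinal : (p:ℤ)^M ∣ (B*B') * ((g * (A * B^2 + A)) - (A' * B'^2 + A')) := by
    have hd := hkey.dvd
    rw [mul_sub]
    exact hd
  exact (Int.modEq_iff_dvd).mpr (hcop.dvd_of_dvd_mul_left hdvdfinal)
end

section
/- Let p be an odd prime, a, t nonnegative integers, and k a positive integer with p^(2a+1) | k and k > p^a(p-1). Set v = min(v_p(k) - 2a - 1, t) and M = 3a + t + v + 2. Let S be the multiset of residues mod p^M attained by n^((k+p^a(p-1))p^t) + n^((k-p^a(p-1))p^t) for n = 1, ..., p^(a+1) with gcd(n, p) = 1. Then for any d-th root of unity g mod p^M (where d = (p-1)/gcd(k,p-1)), multiplication by g permutes the multiset S, i.e., g·S = S as multisets. -/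
private lemma aux_step {R : Type*} [CommRing R] (p : ℕ) (x q : R)
    (hq : q ∣ x - 1) (hp' : (p : R) ∣ x - 1) : q * p ∣ x ^ p - 1 := by
  have hgeom : (∑ i ∈ Finset.range p, x ^ i) * (x - 1) = x ^ p - 1 := geom_sum_mul x p
  have hsum : (p : R) ∣ ∑ i ∈ Finset.range p, x ^ i := by
    have h1 : (∑ i ∈ Finset.range p, x ^ i) - (p : R) = ∑ i ∈ Finset.range p, (x ^ i - 1) := by
      rw [Finset.sum_sub_distrib, Finset.sum_const, Finset.card_range, nsmul_eq_mul, mul_one]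
    have h2 : (p : R) ∣ ∑ i ∈ Finset.range p, (x ^ i - 1) := by
      refine Finset.dvd_sum fun i _ => hp'.trans ?_
      simpa using sub_dvd_pow_sub_pow x 1 i
    have := dvd_add h2 (dvd_refl (p : R))
    rwa [← h1, sub_add_cancel] at this
  calc q * (p : R) ∣ (x - 1) * (∑ i ∈ Finset.range p, x ^ i) := mul_dvd_mul hq hsum
    _ = x ^ p - 1 := by rw [mul_comm]; exact hgeom

private lemma aux_iter {R : Type*} [CommRing R] (p : ℕ) (x q : R)
    (hq : q ∣ x - 1) (hp' : (p : R) ∣ x - 1) (j : ℕ) :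
    q * (p : R) ^ j ∣ x ^ p ^ j - 1 := by
  induction j with
  | zero => simpa using hq
  | succ j ih =>
    have hpj : (p : R) ∣ x ^ p ^ j - 1 := by
      refine hp'.trans ?_
      simpa using sub_dvd_pow_sub_pow x 1 (p ^ j)
    have := aux_step p (x ^ p ^ j) (q * (p : R) ^ j) ih hpj
    rw [← pow_mul, ← pow_succ, mul_assoc, ← pow_succ] at this
    exact this

private lemma key_congr (p a t v M k : ℕ) (hp : p.Prime)
    (hM : M = 3 * a + t + v + 2) (hvt : v ≤ t)
    (hkdvd : p ^ (2 * a + 1 + v) ∣ k) (hke : p ^ a * (p - 1) ≤ k)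
    (m m' : ℕ) (hm : ¬ p ∣ m) (hm' : ¬ p ∣ m')
    (hcong : m % p ^ (a + 1) = m' % p ^ (a + 1)) :
    (m : ZMod (p ^ M)) ^ ((k + p ^ a * (p - 1)) * p ^ t) +
      (m : ZMod (p ^ M)) ^ ((k - p ^ a * (p - 1)) * p ^ t) =
    (m' : ZMod (p ^ M)) ^ ((k + p ^ a * (p - 1)) * p ^ t) +
      (m' : ZMod (p ^ M)) ^ ((k - p ^ a * (p - 1)) * p ^ t) := by
  haveI : NeZero (p ^ M) := ⟨pow_ne_zero _ hp.pos.ne'⟩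
  set R := ZMod (p ^ M)
  -- units
  have hcop : ∀ n : ℕ, ¬ p ∣ n → IsUnit (n : R) := by
    intro n hn
    rw [ZMod.isUnit_iff_coprime]
    exact Nat.Coprime.pow_right _ ((hp.coprime_iff_not_dvd.mpr hn).symm)
  have hum := hcop m hm
  have hum' := hcop m' hm'
  set X := hum.unit with hX
  set X' := hum'.unit with hX'
  have hXm : (X : R) = (m : R) := hum.unit_spec
  have hXm' : (X' : R) = (m' : R) := hum'.unit_spec
  set cu : Rˣ := X' * X⁻¹ with hcu
  set w : R := (cu : R) with hw
  -- p^(a+1) ∣ w - 1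
  have hZdvd : ((p : ℤ) ^ (a + 1)) ∣ (m' : ℤ) - (m : ℤ) := by
    have : m ≡ m' [MOD p ^ (a + 1)] := hcong
    exact_mod_cast this.dvd
  have hdm : (p : R) ^ (a + 1) ∣ (m' : R) - (m : R) := by
    have := Int.cast_dvd_cast (α := R) _ _ hZdvd
    push_cast at this
    exact this
  have h1 : (p : R) ^ (a + 1) ∣ w - 1 := by
    have hfact : w - 1 = ((m' : R) - (m : R)) * ((X⁻¹ : Rˣ) : R) := by
      have : w = (m' : R) * ((X⁻¹ : Rˣ) : R) := by
        rw [hw, hcu, Units.val_mul, hXm']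
      rw [this, sub_mul]
      congr 1
      rw [← hXm, ← Units.val_mul, mul_inv_cancel, Units.val_one]
    rw [hfact]
    exact hdm.mul_right _
  have h2 : (p : R) ∣ w - 1 :=
    (dvd_pow_self (p : R) (Nat.succ_ne_zero a)).trans h1
  -- u = cu ^ (E * p^t)
  set E := p ^ a * (p - 1) with hE
  have hEe : E * p ^ t = (p - 1) * p ^ (a + t) := by rw [hE, pow_add]; ring
  set u : R := w ^ (E * p ^ t) with hu
  have huunit : IsUnit u := (cu.isUnit).pow _
  have hwp1 : (p : R) ^ (a + 1) ∣ w ^ (p - 1) - 1 := by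
    refine h1.trans ?_
    simpa using sub_dvd_pow_sub_pow w 1 (p - 1)
  have hpwp1 : (p : R) ∣ w ^ (p - 1) - 1 := h2.trans (by simpa using sub_dvd_pow_sub_pow w 1 (p - 1))
  have hu1 : (p : R) ^ (2 * a + t + 1) ∣ u - 1 := by
    have := aux_iter p (w ^ (p - 1)) ((p : R) ^ (a + 1)) hwp1 hpwp1 (a + t)
    rw [← pow_mul, ← pow_add] at this
    have h' : (p : R) ^ (2 * a + t + 1) ∣ w ^ ((p - 1) * p ^ (a + t)) - 1 := by
      rw [show 2 * a + t + 1 = a + 1 + (a + t) by omega]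
      exact this
    rw [hu, hEe]
    exact h'
  -- cu ^ (k p^t) = 1
  obtain ⟨k₀, hk₀⟩ := hkdvd
  have hpM0 : ((p : R)) ^ M = 0 := by
    rw [← Nat.cast_pow, ZMod.natCast_self]
  have hwK : w ^ (k * p ^ t) = 1 := by
    have := aux_iter p w ((p : R) ^ (a + 1)) h1 h2 (2 * a + 1 + v + t)
    rw [← pow_add] at this
    have hMe : a + 1 + (2 * a + 1 + v + t) = M := by omega
    rw [hMe, hpM0, zero_dvd_iff, sub_eq_zero] at this
    have hke2 : k * p ^ t = p ^ (2 * a + 1 + v + t) * k₀ := by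
      rw [hk₀, pow_add]; ring
    rw [hke2, pow_mul, this, one_pow]
  -- Fermat lift for m
  have hferm : (p : R) ∣ (m : R) ^ (p - 1) - 1 := by
    have hmod : m ^ (p - 1) ≡ 1 [MOD p] := by
      have := Nat.ModEq.pow_totient ((hp.coprime_iff_not_dvd.mpr hm).symm)
      rwa [Nat.totient_prime hp] at this
    have h0 : ((p : ℤ)) ∣ (1 : ℤ) - (m : ℤ) ^ (p - 1) := by exact_mod_cast hmod.dvd
    have hz : ((p : ℤ)) ∣ (m : ℤ) ^ (p - 1) - 1 := dvd_sub_comm.mp h0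
    have := Int.cast_dvd_cast (α := R) _ _ hz
    push_cast at this
    exact this
  have hm2E : (p : R) ^ (a + t + 1) ∣ (m : R) ^ (2 * (E * p ^ t)) - 1 := by
    have hlift := aux_iter p ((m : R) ^ (p - 1)) (p : R) hferm hferm (a + t)
    rw [← pow_mul] at hlift
    have hpow : (p : R) * (p : R) ^ (a + t) = (p : R) ^ (a + t + 1) := by
      rw [← pow_succ']
    rw [hpow] at hlift
    have h2e : 2 * (E * p ^ t) = ((p - 1) * p ^ (a + t)) * 2 := by rw [hEe]; ring
    have hsq : (m : R) ^ (2 * (E * p ^ t)) - 1 =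
        ((m : R) ^ ((p - 1) * p ^ (a + t)) - 1) * ((m : R) ^ ((p - 1) * p ^ (a + t)) + 1) := by
      rw [h2e, pow_mul]; ring
    rw [hsq]
    exact hlift.mul_right _
  -- exponent arithmetic
  set A := (k + E) * p ^ t with hA
  set B := (k - E) * p ^ t with hB
  have hArw : A = k * p ^ t + E * p ^ t := by rw [hA, add_mul]
  have hBrw : B + E * p ^ t = k * p ^ t := by
    rw [hB, ← add_mul, Nat.sub_add_cancel hke]
  have hAB : A = B + 2 * (E * p ^ t) := by
    rw [hA, hB]
    have : k + E = (k - E) + 2 * E := by omega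
    rw [this]
    ring
  have hwA : w ^ A = u := by rw [hArw, pow_add, hwK, one_mul, hu]
  have hwB : w ^ B * u = 1 := by rw [hu, ← pow_add, hBrw, hwK]
  -- m' = w * m in R
  have hm'w : (m' : R) = w * (m : R) := by
    rw [hw, hcu, Units.val_mul, ← hXm, ← hXm', mul_assoc, ← Units.val_mul, inv_mul_cancel,
      Units.val_one, mul_one]
  -- final computation
  set x : R := (m : R) with hx
  have hgoal : u * (((m' : R) ^ A + (m' : R) ^ B) - (x ^ A + x ^ B)) = 0 := by
    have hexp : (m' : R) ^ A = u * x ^ A := by rw [hm'w, mul_pow, hwA]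
    have hexpB : u * ((m' : R) ^ B) = x ^ B := by
      rw [hm'w, mul_pow, ← mul_assoc, mul_comm u (w ^ B), hwB, one_mul]
    have hfactor : u * (((m' : R) ^ A + (m' : R) ^ B) - (x ^ A + x ^ B)) =
        (u - 1) * (x ^ B * (u * x ^ (2 * (E * p ^ t)) - 1)) := by
      have hxA : x ^ A = x ^ B * x ^ (2 * (E * p ^ t)) := by rw [hAB, pow_add]
      rw [hexp]
      rw [mul_sub, mul_add, hexpB, mul_add, ← mul_assoc, hxA]
      ring
    rw [hfactor]
    have hd1 : (p : R) ^ (a + v + 1) ∣ u * x ^ (2 * (E * p ^ t)) - 1 := by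
      have hrw : u * x ^ (2 * (E * p ^ t)) - 1 =
          u * (x ^ (2 * (E * p ^ t)) - 1) + (u - 1) := by ring
      rw [hrw]
      refine dvd_add ((pow_dvd_pow (p : R) (by omega : a + v + 1 ≤ a + t + 1)).trans
        hm2E |>.mul_left u) ?_
      exact (pow_dvd_pow (p : R) (by omega : a + v + 1 ≤ 2 * a + t + 1)).trans hu1
    have hprod : (p : R) ^ (2 * a + t + 1) * (p : R) ^ (a + v + 1) ∣
        (u - 1) * (x ^ B * (u * x ^ (2 * (E * p ^ t)) - 1)) :=
      mul_dvd_mul hu1 (hd1.mul_left _)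
    rw [← pow_add] at hprod
    have : 2 * a + t + 1 + (a + v + 1) = M := by omega
    rw [this, hpM0, zero_dvd_iff] at hprod
    exact hprod
  have hD := (huunit.mul_right_eq_zero).mp hgoal
  exact (sub_eq_zero.mp hD).symm

theorem multiset_stabilized (p : ℕ) (hp : p.Prime) (hodd : Odd p)
    (a t : ℕ) (k : ℕ) (hk : 0 < k) (hdvd : p ^ (2 * a + 1) ∣ k)
    (hkbig : p ^ a * (p - 1) < k)
    (v : ℕ) (hv : v = min (padicValNat p k - (2 * a + 1)) t)
    (M : ℕ) (hM : M = 3 * a + t + v + 2)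
    (d : ℕ) (hd : d = (p - 1) / Nat.gcd k (p - 1))
    (g : ZMod (p ^ M)) (hg : g ^ d = 1)
    (S : Multiset (ZMod (p ^ M)))
    (hS : S = (((Finset.Icc 1 (p ^ (a + 1))).val.filter (fun n => ¬ p ∣ n)).map
      (fun n => (n : ZMod (p ^ M)) ^ ((k + p ^ a * (p - 1)) * p ^ t) +
        (n : ZMod (p ^ M)) ^ ((k - p ^ a * (p - 1)) * p ^ t)))) :
    S.map (fun s => g * s) = S := by
  haveI hfact : Fact p.Prime := ⟨hp⟩
  haveI : NeZero (p ^ M) := ⟨pow_ne_zero _ hp.pos.ne'⟩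
  have hp2 : p ≠ 2 := by rintro rfl; exact (by norm_num : ¬ Odd 2) hodd
  have hp3 : 3 ≤ p := by have := hp.two_le; omega
  have hMpos : 0 < M := by omega
  have hvt : v ≤ t := by rw [hv]; exact min_le_right _ _
  have hkdvd : p ^ (2 * a + 1 + v) ∣ k := by
    have hval : 2 * a + 1 ≤ padicValNat p k := (padicValNat_dvd_iff_le hk.ne').mp hdvd
    rw [padicValNat_dvd_iff_le hk.ne']
    have : v ≤ padicValNat p k - (2 * a + 1) := by rw [hv]; exact min_le_left _ _
    omega
  have hke : p ^ a * (p - 1) ≤ k := le_of_lt hkbig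
  -- gcd and d facts
  set G := Nat.gcd k (p - 1) with hG
  have hGdvd : G ∣ p - 1 := Nat.gcd_dvd_right _ _
  have hGpos : 0 < G := Nat.gcd_pos_of_pos_left _ hk
  have hdG : d * G = p - 1 := by rw [hd]; exact Nat.div_mul_cancel hGdvd
  have hdpos : 0 < d := by
    rcases Nat.eq_zero_or_pos d with h0 | h1
    · exfalso; rw [h0, zero_mul] at hdG; omega
    · exact h1
  have hddvd : d ∣ p - 1 := ⟨G, hdG.symm⟩
  -- g is a unit
  have hgu : IsUnit g := IsUnit.of_mul_eq_one (g ^ (d - 1)) (by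
    rw [← pow_succ', show d - 1 + 1 = d by omega]; exact hg)
  set gg : (ZMod (p ^ M))ˣ := hgu.unit with hggdef
  have hggval : (gg : ZMod (p ^ M)) = g := hgu.unit_spec
  have hggd : gg ^ d = 1 := Units.ext (by
    rw [Units.val_pow_eq_pow_val, hggval, hg, Units.val_one])
  have hggp1 : gg ^ (p - 1) = 1 := by
    obtain ⟨e, he⟩ := hddvd; rw [he, pow_mul, hggd, one_pow]
  -- projection to ZMod p
  have hpdvd : p ∣ p ^ M := dvd_pow_self p hMpos.ne'
  set π := ZMod.unitsMap hpdvd with hπ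
  set gb := π gg with hgb
  have hgbd : gb ^ d = 1 := by rw [hgb, ← map_pow, hggd, map_one]
  have hgbp1 : gb ^ (p - 1) = 1 := by rw [hgb, ← map_pow, hggp1, map_one]
  -- basic coprimality
  have hcp : Nat.Coprime p (p - 1) := by
    have h1 := Nat.dvd_sub (Nat.gcd_dvd_left p (p - 1)) (Nat.gcd_dvd_right p (p - 1))
    rw [show p - (p - 1) = 1 by omega] at h1
    exact Nat.dvd_one.mp h1
  -- cyclic group (ZMod p)ˣ
  obtain ⟨h, hh⟩ := IsCyclic.exists_generator (α := (ZMod p)ˣ)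
  have hord : orderOf h = p - 1 := by
    rw [orderOf_eq_card_of_forall_mem_zpowers hh, Nat.card_eq_fintype_card, ZMod.card_units p]
  obtain ⟨j, hj⟩ := Subgroup.mem_zpowers_iff.mp (hh gb)
  have hNdvd : (((p - 1 : ℕ) : ℤ)) ∣ j * d := by
    rw [← hord, orderOf_dvd_iff_zpow_eq_one, zpow_mul, hj, zpow_natCast, hgbd]
  have hGj : (G : ℤ) ∣ j := by
    have h1 : ((G : ℤ) * d) ∣ j * d := by
      have h2 : ((p - 1 : ℕ) : ℤ) = (G : ℤ) * d := by
        rw [← hdG]; push_cast; ring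
      rwa [h2] at hNdvd
    exact (mul_dvd_mul_iff_right (by exact_mod_cast hdpos.ne' : (d : ℤ) ≠ 0)).mp h1
  obtain ⟨i, hi⟩ := hGj
  -- Bezout
  set K := k * p ^ t with hK
  have hgcdK : Nat.gcd K (p - 1) = G := by
    rw [hK, mul_comm k (p ^ t)]
    exact Nat.Coprime.gcd_mul_left_cancel k (hcp.pow_left t)
  set x := Int.gcdA (K : ℤ) ((p - 1 : ℕ) : ℤ) with hx
  set y := Int.gcdB (K : ℤ) ((p - 1 : ℕ) : ℤ) with hy
  have hbez : (G : ℤ) = (K : ℤ) * x + ((p - 1 : ℕ) : ℤ) * y := by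
    have hb := Int.gcd_eq_gcd_ab (K : ℤ) ((p - 1 : ℕ) : ℤ)
    rw [Int.gcd_natCast_natCast, hgcdK] at hb
    exact_mod_cast hb
  set cb : (ZMod p)ˣ := h ^ (x * i) with hcb
  have hhp1 : h ^ (((p - 1 : ℕ) : ℤ)) = 1 := by
    rw [zpow_natCast, ← hord, pow_orderOf_eq_one]
  have hcbK : cb ^ K = gb := by
    have hzp : cb ^ (K : ℤ) = gb := by
      rw [hcb, ← zpow_mul]
      have hexp : x * i * (K : ℤ) = j + ((p - 1 : ℕ) : ℤ) * (-(y * i)) := by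
        rw [hi]; linear_combination (-i) * hbez
      rw [hexp, zpow_add, hj, zpow_mul, hhp1, one_zpow, mul_one]
    rw [← zpow_natCast cb K]; exact hzp
  -- lift to ZMod (p^M)
  obtain ⟨c₀, hc₀⟩ := ZMod.unitsMap_surjective hpdvd cb
  rw [← hπ] at hc₀
  set cu : (ZMod (p ^ M))ˣ := c₀ ^ (p ^ (M - 1)) with hcu
  have hcardR : Fintype.card (ZMod (p ^ M))ˣ = p ^ (M - 1) * (p - 1) := by
    rw [ZMod.card_units_eq_totient, Nat.totient_prime_pow hp hMpos]
  have hcup1 : cu ^ (p - 1) = 1 := by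
    rw [hcu, ← pow_mul, ← hcardR, pow_card_eq_one]
  have hpM0 : ((p : ZMod (p ^ M))) ^ M = 0 := by
    rw [← Nat.cast_pow, ZMod.natCast_self]
  -- injectivity of π on (p-1)-torsion
  have hTinj : ∀ z : (ZMod (p ^ M))ˣ, z ^ (p - 1) = 1 → π z = 1 → z = 1 := by
    intro z hz1 hz2
    have hzval : (p : ZMod (p ^ M)) ∣ (z : ZMod (p ^ M)) - 1 := by
      have hcast : (ZMod.castHom hpdvd (ZMod p)) ((z : ZMod (p ^ M))) = 1 := by
        have h3 := congrArg (Units.val) hz2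
        rw [hπ] at h3
        simpa [ZMod.unitsMap] using h3
      have h4 : (((z : ZMod (p ^ M)).val : ℕ) : ZMod p) = 1 := by
        rwa [ZMod.castHom_apply, ← ZMod.natCast_val] at hcast
      have h5 : ((p : ℤ)) ∣ (((z : ZMod (p ^ M)).val : ℤ) - 1) := by
        rw [← ZMod.intCast_zmod_eq_zero_iff_dvd]
        push_cast
        rw [h4, sub_self]
      have h6 := Int.cast_dvd_cast (α := ZMod (p ^ M)) _ _ h5
      push_cast at h6
      rwa [ZMod.natCast_val, ZMod.cast_id] at h6
    have hz3 : z ^ (p ^ (M - 1)) = 1 := by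
      have haux := aux_iter p ((z : ZMod (p ^ M))) (p : ZMod (p ^ M)) hzval hzval (M - 1)
      rw [← pow_succ', show M - 1 + 1 = M by omega, hpM0, zero_dvd_iff, sub_eq_zero] at haux
      exact Units.ext (by rw [Units.val_pow_eq_pow_val, haux, Units.val_one])
    have hoz : orderOf z ∣ Nat.gcd (p ^ (M - 1)) (p - 1) :=
      Nat.dvd_gcd (orderOf_dvd_of_pow_eq_one hz3) (orderOf_dvd_of_pow_eq_one hz1)
    rw [Nat.Coprime.gcd_eq_one (hcp.pow_left (M - 1)), Nat.dvd_one] at hoz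
    exact orderOf_eq_one_iff.mp hoz
  -- gb is fixed by p^(M-1) power
  have hgpow : gb ^ (p ^ (M - 1)) = gb := by
    have hdvd2 : (p - 1) ∣ p ^ (M - 1) - 1 := by
      simpa using Nat.sub_dvd_pow_sub_pow p 1 (M - 1)
    obtain ⟨e, he⟩ := hdvd2
    have hpos : 1 ≤ p ^ (M - 1) := Nat.one_le_pow _ _ hp.pos
    rw [show p ^ (M - 1) = (p - 1) * e + 1 by omega, pow_add, pow_mul, hgbp1, one_pow,
      pow_one, one_mul]
  have hπcuK : π (cu ^ K) = gb := by
    rw [hcu, ← pow_mul, map_pow, hc₀, mul_comm (p ^ (M - 1)) K, pow_mul, hcbK, hgpow]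
  have hcuK : cu ^ K = gg := by
    have h1 : (cu ^ K * gg⁻¹) ^ (p - 1) = 1 := by
      rw [mul_pow, ← pow_mul, mul_comm K (p - 1), pow_mul, hcup1, one_pow, one_mul,
        inv_pow, hggp1, inv_one]
    have h2 : π (cu ^ K * gg⁻¹) = 1 := by
      rw [map_mul, hπcuK, map_inv, ← hgb, mul_inv_cancel]
    exact mul_inv_eq_one.mp (hTinj _ h1 h2)
  -- key powers of cu
  have hEpt : p ^ a * (p - 1) * p ^ t = (p - 1) * p ^ (a + t) := by rw [pow_add]; ring
  have hcuE : cu ^ (p ^ a * (p - 1) * p ^ t) = 1 := by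
    rw [hEpt, pow_mul, hcup1, one_pow]
  have hA : cu ^ ((k + p ^ a * (p - 1)) * p ^ t) = gg := by
    rw [add_mul, pow_add, ← hK, hcuK, hcuE, mul_one]
  have hB : cu ^ ((k - p ^ a * (p - 1)) * p ^ t) = gg := by
    have hBE : (k - p ^ a * (p - 1)) * p ^ t + p ^ a * (p - 1) * p ^ t = K := by
      rw [hK, ← add_mul, Nat.sub_add_cancel hke]
    calc cu ^ ((k - p ^ a * (p - 1)) * p ^ t)
        = cu ^ ((k - p ^ a * (p - 1)) * p ^ t) * cu ^ (p ^ a * (p - 1) * p ^ t) := by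
          rw [hcuE, mul_one]
      _ = cu ^ K := by rw [← pow_add, hBE]
      _ = gg := hcuK
  -- natural representative C
  set C := ((cu : ZMod (p ^ M))).val with hC
  have hCcast : ((C : ℕ) : ZMod (p ^ M)) = (cu : ZMod (p ^ M)) := by
    rw [hC, ZMod.natCast_val, ZMod.cast_id]
  have hCp : ¬ p ∣ C := by
    intro hdv
    have hcop := ZMod.val_coe_unit_coprime cu
    have h7 : p ∣ Nat.gcd C (p ^ M) := Nat.dvd_gcd hdv (dvd_pow_self p hMpos.ne')
    rw [hC] at h7
    rw [Nat.Coprime] at hcop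
    rw [hcop] at h7
    have := Nat.le_of_dvd one_pos h7
    omega
  -- key identity
  have hkeyid : ∀ n : ℕ,
      g * ((n : ZMod (p ^ M)) ^ ((k + p ^ a * (p - 1)) * p ^ t) +
        (n : ZMod (p ^ M)) ^ ((k - p ^ a * (p - 1)) * p ^ t)) =
      ((C * n : ℕ) : ZMod (p ^ M)) ^ ((k + p ^ a * (p - 1)) * p ^ t) +
        ((C * n : ℕ) : ZMod (p ^ M)) ^ ((k - p ^ a * (p - 1)) * p ^ t) := by
    intro n
    have hCA : ((C : ℕ) : ZMod (p ^ M)) ^ ((k + p ^ a * (p - 1)) * p ^ t) = g := by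
      rw [hCcast, ← Units.val_pow_eq_pow_val, hA, hggval]
    have hCB : ((C : ℕ) : ZMod (p ^ M)) ^ ((k - p ^ a * (p - 1)) * p ^ t) = g := by
      rw [hCcast, ← Units.val_pow_eq_pow_val, hB, hggval]
    push_cast
    rw [mul_pow, mul_pow, hCA, hCB]
    ring
  -- multiset bijection
  set q := p ^ (a + 1) with hq
  have hq1 : 1 < q := by
    rw [hq]; exact Nat.one_lt_pow (Nat.succ_ne_zero a) hp.one_lt
  have hq0 : 0 < q := by omega
  have hpq : p ∣ q := by rw [hq]; exact dvd_pow_self p (Nat.succ_ne_zero a)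
  set I := (Finset.Icc 1 q).val.filter (fun n => ¬ p ∣ n) with hI
  have hInd : I.Nodup := Multiset.Nodup.filter _ (Finset.Icc 1 q).nodup
  have hmemI : ∀ n, n ∈ I ↔ (1 ≤ n ∧ n ≤ q ∧ ¬ p ∣ n) := by
    intro n
    rw [hI, Multiset.mem_filter, Finset.mem_val, Finset.mem_Icc]
    tauto
  have hpCn : ∀ n : ℕ, ¬ p ∣ n → ¬ p ∣ C * n := by
    intro n hn hdv
    rcases (Nat.Prime.dvd_mul hp).mp hdv with h' | h'
    · exact hCp h'
    · exact hn h'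
  have hrmem : ∀ n ∈ I, (C * n) % q ∈ I := by
    intro n hn
    obtain ⟨hn1, hn2, hn3⟩ := (hmemI n).mp hn
    have hnCn := hpCn n hn3
    have hlt : (C * n) % q < q := Nat.mod_lt _ hq0
    have hne : (C * n) % q ≠ 0 := by
      intro h0
      have : q ∣ C * n := Nat.dvd_of_mod_eq_zero h0
      exact hnCn (hpq.trans this)
    have hpr : ¬ p ∣ (C * n) % q := by
      intro hdr
      have hddm : q * (C * n / q) + (C * n) % q = C * n := Nat.div_add_mod (C * n) q
      have : p ∣ C * n := by
        rw [← hddm]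
        exact dvd_add (Dvd.dvd.mul_right hpq _) hdr
      exact hnCn this
    exact (hmemI _).mpr ⟨by omega, by omega, hpr⟩
  have hltI : ∀ n ∈ I, n < q := by
    intro n hn
    obtain ⟨hn1, hn2, hn3⟩ := (hmemI n).mp hn
    rcases Nat.lt_or_ge n q with h' | h'
    · exact h'
    · exfalso
      have hnq : n = q := by omega
      rw [hnq] at hn3
      exact hn3 hpq
  have hrinj : ∀ n ∈ I, ∀ n' ∈ I, (C * n) % q = (C * n') % q → n = n' := by
    intro n hn n' hn' hre
    have hCq : Nat.gcd q C = 1 := by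
      have : Nat.Coprime C q := by
        rw [hq]
        exact Nat.Coprime.pow_right _ ((hp.coprime_iff_not_dvd.mpr hCp).symm)
      exact (Nat.coprime_comm.mp this)
    have hnn : n ≡ n' [MOD q] := Nat.ModEq.cancel_left_of_coprime hCq hre
    have h1 := hltI n hn
    have h2 := hltI n' hn'
    rw [Nat.ModEq, Nat.mod_eq_of_lt h1, Nat.mod_eq_of_lt h2] at hnn
    exact hnn
  have hnd2 : (I.map (fun n => (C * n) % q)).Nodup := hInd.map_on hrinj
  have hsub : I.map (fun n => (C * n) % q) ⊆ I := by
    intro xx hxx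
    obtain ⟨n, hn, rfl⟩ := Multiset.mem_map.mp hxx
    exact hrmem n hn
  have hmapr : I.map (fun n => (C * n) % q) = I :=
    Multiset.eq_of_le_of_card_le ((Multiset.le_iff_subset hnd2).mpr hsub)
      (le_of_eq (Multiset.card_map _ I).symm)
  -- assemble
  have hfr : ∀ n ∈ I,
      ((C * n : ℕ) : ZMod (p ^ M)) ^ ((k + p ^ a * (p - 1)) * p ^ t) +
        ((C * n : ℕ) : ZMod (p ^ M)) ^ ((k - p ^ a * (p - 1)) * p ^ t) =
      (((C * n) % q : ℕ) : ZMod (p ^ M)) ^ ((k + p ^ a * (p - 1)) * p ^ t) +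
        (((C * n) % q : ℕ) : ZMod (p ^ M)) ^ ((k - p ^ a * (p - 1)) * p ^ t) := by
    intro n hn
    obtain ⟨hn1, hn2, hn3⟩ := (hmemI n).mp hn
    have hpr : ¬ p ∣ (C * n) % q := ((hmemI _).mp (hrmem n hn)).2.2
    have hcong : (C * n) % p ^ (a + 1) = ((C * n) % q) % p ^ (a + 1) := by
      rw [← hq]
      exact (Nat.mod_mod_of_dvd _ dvd_rfl).symm
    exact key_congr p a t v M k hp hM hvt hkdvd hke (C * n) ((C * n) % q)
      (hpCn n hn3) hpr hcong
  have hS' : S = I.map (fun n : ℕ =>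
      (n : ZMod (p ^ M)) ^ ((k + p ^ a * (p - 1)) * p ^ t) +
        (n : ZMod (p ^ M)) ^ ((k - p ^ a * (p - 1)) * p ^ t)) := by
    rw [hS]
    simp only [Multiset.pure_def, Multiset.bind_def, Multiset.bind_singleton, Multiset.map_map]
    rfl
  rw [hS', Multiset.map_map]
  have hstep : I.map ((fun s => g * s) ∘ fun n : ℕ =>
      (n : ZMod (p ^ M)) ^ ((k + p ^ a * (p - 1)) * p ^ t) +
        (n : ZMod (p ^ M)) ^ ((k - p ^ a * (p - 1)) * p ^ t)) =
      I.map ((fun n : ℕ =>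
      (n : ZMod (p ^ M)) ^ ((k + p ^ a * (p - 1)) * p ^ t) +
        (n : ZMod (p ^ M)) ^ ((k - p ^ a * (p - 1)) * p ^ t)) ∘ (fun n => (C * n) % q)) := by
    apply Multiset.map_congr rfl
    intro n hn
    simp only [Function.comp_apply]
    rw [hkeyid n, hfr n hn]
  rw [hstep, ← Multiset.map_map, hmapr]
end

section
/- Let p be an odd prime, and let a, t be nonnegative integers. Let b be a positive integer with p^(a+t) | b and (p-1) not dividing b, and with b > 2 p^(a+t)(p-1). Set v = min(v_p(b) - 2a - t - 1, t) (assuming v_p(b) ≥ 2a + t + 1). Then the sum over n from 1 to p^(a+1) of n^b * (n^(p^(a+t)(p-1)) - 1)^2 is congruent to 0 modulo p^(3a+t+v+2). -/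
open Finset

/-- combine powers dividing two factors -/
private lemma dvdh {P : ℤ} {e1 e2 e3 : ℕ} {X Y : ℤ} (h1 : P ^ e1 ∣ X) (h2 : P ^ e2 ∣ Y)
    (h3 : e3 ≤ e1 + e2) : P ^ e3 ∣ X * Y :=
  dvd_trans (pow_dvd_pow P h3) (by rw [pow_add]; exact mul_dvd_mul h1 h2)

private lemma dvd_weaken {P : ℤ} {e e' : ℕ} {X : ℤ} (h : e ≤ e') (hd : P ^ e' ∣ X) :
    P ^ e ∣ X := dvd_trans (pow_dvd_pow P h) hd

/-- One Frobenius step: congruence mod p^r lifts to p-th powers mod p^(r+1). -/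
private lemma pstep (p : ℕ) (hp : p.Prime) {x y : ℤ} {r : ℕ} (hr : 1 ≤ r)
    (h : (p : ℤ) ^ r ∣ x - y) : (p : ℤ) ^ (r + 1) ∣ x ^ p - y ^ p := by
  have hxy : (p : ℤ) ∣ x - y := by
    refine dvd_trans ?_ h
    simpa using pow_dvd_pow (p : ℤ) hr
  have key : x ^ p - y ^ p = (∑ i ∈ range p, x ^ i * y ^ (p - 1 - i)) * (x - y) :=
    (geom_sum₂_mul x y p).symm
  have hs : (p : ℤ) ∣ ∑ i ∈ range p, x ^ i * y ^ (p - 1 - i) := by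
    have h2 : ∀ i ∈ range p, (p : ℤ) ∣ x ^ i * y ^ (p - 1 - i) - y ^ (p - 1) := by
      intro i hi
      have hie : i + (p - 1 - i) = p - 1 := by
        have := mem_range.mp hi; omega
      have heq : x ^ i * y ^ (p - 1 - i) - y ^ (p - 1) = (x ^ i - y ^ i) * y ^ (p - 1 - i) := by
        have h1 : y ^ (p - 1) = y ^ i * y ^ (p - 1 - i) := by rw [← pow_add, hie]
        rw [h1]; ring
      rw [heq]
      exact dvd_mul_of_dvd_left (dvd_trans hxy (sub_dvd_pow_sub_pow x y i)) _
    have hrw : ∑ i ∈ range p, x ^ i * y ^ (p - 1 - i)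
        = (∑ i ∈ range p, (x ^ i * y ^ (p - 1 - i) - y ^ (p - 1))) + p * y ^ (p - 1) := by
      rw [Finset.sum_sub_distrib, Finset.sum_const, card_range]
      push_cast; ring
    rw [hrw]
    exact dvd_add (Finset.dvd_sum h2) ⟨y ^ (p - 1), rfl⟩
  rw [key, pow_succ, mul_comm ((p:ℤ)^r) ((p:ℤ))]
  exact mul_dvd_mul hs h

/-- Iterated Frobenius with extra exponent: if p^r ∣ x - y and p^m ∣ c then
p^(r+m) ∣ x^c - y^c. -/
private lemma ppow (p : ℕ) (hp : p.Prime) {x y : ℤ} {r m : ℕ} (c : ℕ) (hr : 1 ≤ r)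
    (h : (p : ℤ) ^ r ∣ x - y) (hc : p ^ m ∣ c) : (p : ℤ) ^ (r + m) ∣ x ^ c - y ^ c := by
  have hiter : ∀ m : ℕ, (p : ℤ) ^ (r + m) ∣ x ^ (p ^ m) - y ^ (p ^ m) := by
    intro m
    induction m with
    | zero => simpa using h
    | succ n ih =>
        have := pstep p hp (r := r + n) (by omega) ih
        rw [← pow_mul, ← pow_mul, ← pow_succ] at this
        convert this using 2 <;> omega
  obtain ⟨e, rfl⟩ := hc
  rw [pow_mul, pow_mul]
  exact dvd_trans (hiter m) (sub_dvd_pow_sub_pow _ _ e)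

/-- Euler's theorem as integer divisibility. -/
private lemma euler1 (p : ℕ) (hp : p.Prime) (m : ℕ) {x : ℕ} (hx : ¬ p ∣ x) :
    (p : ℤ) ^ (m + 1) ∣ (x : ℤ) ^ (p ^ m * (p - 1)) - 1 := by
  have hc : Nat.Coprime x (p ^ (m + 1)) :=
    Nat.Coprime.pow_right _ ((hp.coprime_iff_not_dvd.mpr hx).symm)
  have ht := Nat.ModEq.pow_totient hc
  rw [Nat.totient_prime_pow hp (Nat.succ_pos m)] at ht
  simp only [Nat.succ_sub_one, Nat.add_sub_cancel] at ht
  have hd := (Nat.modEq_iff_dvd).mp ht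
  push_cast at hd
  have : (x : ℤ) ^ (p ^ m * (p - 1)) - 1 = -((1 : ℤ) - (x : ℤ) ^ (p ^ m * (p - 1))) := by ring
  rw [this]
  exact dvd_neg.mpr (by exact_mod_cast hd)

private lemma not_dvd_one_add_mul (p w : ℕ) (hp : p.Prime) : ¬ p ∣ (1 + p * w) := by
  intro h
  have h2 : p ∣ p * w := Dvd.intro w rfl
  have h3 : p ∣ 1 := by
    have := Nat.dvd_sub h h2
    simpa using this
  have := Nat.le_of_dvd one_pos h3
  have := hp.two_le
  omega

/-- Splitting a sum over `range (m*n)` into blocks. -/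
private lemma sum_block (F : ℕ → ℤ) (m n : ℕ) :
    ∑ i ∈ range (m * n), F i = ∑ q ∈ range m, ∑ z ∈ range n, F (q * n + z) := by
  induction m with
  | zero => simp
  | succ k ih =>
      rw [Nat.succ_mul, Finset.sum_range_add, ih, Finset.sum_range_succ]

/-- An injective self-map of `range n` permutes a sum. -/
private lemma sum_inj_image (F : ℕ → ℤ) (n : ℕ) (φ : ℕ → ℕ)
    (hφ : ∀ z, z < n → φ z < n)
    (hinj : ∀ z z', z < n → z' < n → φ z = φ z' → z = z') :
    ∑ z ∈ range n, F (φ z) = ∑ z ∈ range n, F z := by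
  have hmaps : ∀ z ∈ range n, φ z ∈ range n := by
    intro z hz; exact mem_range.mpr (hφ z (mem_range.mp hz))
  have hinj' : ∀ z ∈ range n, ∀ z' ∈ range n, φ z = φ z' → z = z' := by
    intro z hz z' hz' h; exact hinj z z' (mem_range.mp hz) (mem_range.mp hz') h
  have himg : (range n).image φ = range n := by
    apply Finset.eq_of_subset_of_card_le
    · intro u hu
      obtain ⟨z, hz, rfl⟩ := Finset.mem_image.mp hu
      exact hmaps z hz
    · rw [Finset.card_image_of_injOn (fun z hz z' hz' h => hinj' z hz z' hz' h)]
  calc ∑ z ∈ range n, F (φ z) = ∑ u ∈ (range n).image φ, F u :=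
        (Finset.sum_image hinj').symm
    _ = ∑ z ∈ range n, F z := by rw [himg]

/-- Cancel a factor coprime to p from a divisibility by a prime power. -/
private lemma cancel_pow (p : ℕ) (hp : p.Prime) {x y : ℤ} {e : ℕ} (hx : ¬ (p : ℤ) ∣ x)
    (h : (p : ℤ) ^ e ∣ x * y) : (p : ℤ) ^ e ∣ y := by
  have hpz : Prime (p : ℤ) := by rw [Int.prime_iff_natAbs_prime]; simpa using hp
  induction e generalizing y with
  | zero => simp
  | succ n ih =>
      have h1 : (p : ℤ) ∣ x * y := dvd_trans (dvd_pow_self _ (Nat.succ_ne_zero n)) h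
      have h2 : (p : ℤ) ∣ y := by
        rcases hpz.dvd_mul.mp h1 with h' | h'
        · exact absurd h' hx
        · exact h'
      obtain ⟨y', rfl⟩ := h2
      have h3 : (p : ℤ) ^ n ∣ x * y' := by
        have : (p:ℤ) * ((p:ℤ)^n) ∣ (p:ℤ) * (x * y') := by
          rw [← pow_succ']
          convert h using 1; ring
        exact (mul_dvd_mul_iff_left (by exact_mod_cast hp.ne_zero : (p:ℤ) ≠ 0)).mp this
      have := mul_dvd_mul_left ((p:ℤ)) (ih h3)
      rwa [← pow_succ'] at this

private lemma nat_mod_lt_ne (z z' n : ℕ) (hd : n ∣ (z - z' : ℤ).natAbs) (hz : z < n)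
    (hz' : z' < n) : z = z' := by
  have h1 : ((z:ℤ) - z').natAbs < n := by omega
  have := Nat.eq_zero_of_dvd_of_lt hd h1
  omega

/-- The key "A" lemma: the sum of `(1+p*w)^E - 1` over `w < p^aa` is divisible
by `p^(s+1+aa)` where `E = p^s*(p-1)`, provided `aa ≤ s+1`. -/
private lemma auxA (p : ℕ) (hp : p.Prime) (hodd : Odd p) (s aa : ℕ) (haa : aa ≤ s + 1) :
    (p : ℤ) ^ (s + 1 + aa) ∣
      ∑ w ∈ range (p ^ aa), (((1 + p * w : ℕ) : ℤ) ^ (p ^ s * (p - 1)) - 1) := by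
  have hp2 := hp.two_le
  have hpne2 : p ≠ 2 := by rintro rfl; simp [Nat.odd_iff] at hodd
  have hp3 : 3 ≤ p := by omega
  have hppos : 0 < p ^ aa := pow_pos hp.pos aa
  set E := p ^ s * (p - 1) with hE
  have hEdvd : p ^ s ∣ E := Dvd.intro _ rfl
  have hφlt : ∀ w, w < p ^ aa → (2 * w + p * w ^ 2) % p ^ aa < p ^ aa :=
    fun w _ => Nat.mod_lt _ hppos
  have hφinj : ∀ z z', z < p ^ aa → z' < p ^ aa →
      (2 * z + p * z ^ 2) % p ^ aa = (2 * z' + p * z' ^ 2) % p ^ aa → z = z' := by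
    intro z z' hz hz' h
    have hdvd1 : ((p : ℤ)) ^ aa ∣
        ((2 * z' + p * z' ^ 2 : ℕ) : ℤ) - ((2 * z + p * z ^ 2 : ℕ) : ℤ) := by
      have hmq : (2 * z + p * z ^ 2) ≡ (2 * z' + p * z' ^ 2) [MOD p ^ aa] := h
      have := (Nat.modEq_iff_dvd).mp hmq
      exact_mod_cast this
    have hfact : ((2 * z' + p * z' ^ 2 : ℕ) : ℤ) - ((2 * z + p * z ^ 2 : ℕ) : ℤ)
        = (2 + (p : ℤ) * ((z : ℤ) + z')) * ((z' : ℤ) - z) := by push_cast; ring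
    rw [hfact] at hdvd1
    have hndvd : ¬ (p : ℤ) ∣ (2 + (p : ℤ) * ((z : ℤ) + z')) := by
      intro hdd
      have h2 : (p : ℤ) ∣ 2 := by
        have := dvd_sub hdd (Dvd.intro ((z:ℤ) + z') rfl)
        simpa using this
      have h3 : (p : ℕ) ∣ 2 := by exact_mod_cast h2
      have := Nat.le_of_dvd (by norm_num) h3
      omega
    have hzz := cancel_pow p hp hndvd hdvd1
    have hd2 : (p ^ aa : ℕ) ∣ ((z' : ℤ) - z).natAbs := by
      have h4 := Int.natAbs_dvd_natAbs.mpr hzz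
      simpa [Int.natAbs_pow] using h4
    exact (nat_mod_lt_ne z' z (p ^ aa) hd2 hz' hz).symm
  have hper : ∀ w ∈ range (p ^ aa), (p : ℤ) ^ (s + 1 + aa) ∣
      ((((1 + p * ((2 * w + p * w ^ 2) % p ^ aa) : ℕ) : ℤ) ^ E - 1)
        - 2 * (((1 + p * w : ℕ) : ℤ) ^ E - 1)) := by
    intro w hw
    have hle : (2 * w + p * w ^ 2) % p ^ aa ≤ 2 * w + p * w ^ 2 := Nat.mod_le _ _
    obtain ⟨c, hc⟩ := Nat.dvd_sub_mod (n := p ^ aa) (2 * w + p * w ^ 2)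
    have hbase : (p : ℤ) ^ (aa + 1) ∣
        ((1 + p * ((2 * w + p * w ^ 2) % p ^ aa) : ℕ) : ℤ) - (((1 + p * w : ℕ) : ℤ)) ^ 2 := by
      have hid : ((1 + p * ((2 * w + p * w ^ 2) % p ^ aa) : ℕ) : ℤ) - (((1 + p * w : ℕ) : ℤ)) ^ 2
          = -((p : ℤ) * (((2 * w + p * w ^ 2) - (2 * w + p * w ^ 2) % p ^ aa : ℕ) : ℤ)) := by
        rw [Nat.cast_sub hle]; push_cast; ring
      rw [hid, hc]
      push_cast
      exact dvd_neg.mpr ⟨c, by ring⟩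
    have hpow := ppow p hp E (by omega) hbase hEdvd
    have hsw : ((((1 + p * w : ℕ) : ℤ)) ^ 2) ^ E = ((((1 + p * w : ℕ) : ℤ)) ^ E) ^ 2 := by
      rw [← pow_mul, mul_comm 2 E, pow_mul]
    rw [hsw] at hpow
    have he := euler1 p hp s (not_dvd_one_add_mul p w hp)
    rw [← hE] at he
    have hid2 : ((((1 + p * ((2 * w + p * w ^ 2) % p ^ aa) : ℕ) : ℤ) ^ E - 1)
          - 2 * (((1 + p * w : ℕ) : ℤ) ^ E - 1))
        = ((((1 + p * ((2 * w + p * w ^ 2) % p ^ aa) : ℕ) : ℤ)) ^ E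
            - ((((1 + p * w : ℕ) : ℤ)) ^ E) ^ 2)
          + (((1 + p * w : ℕ) : ℤ) ^ E - 1) ^ 2 := by ring
    rw [hid2]
    refine dvd_add (dvd_weaken (by omega) hpow) (dvd_weaken (e' := (s+1) + (s+1)) (by omega) ?_)
    rw [sq]
    exact dvdh he he (le_refl _)
  have hsum := Finset.dvd_sum hper
  have himg := sum_inj_image (fun u => ((1 + p * u : ℕ) : ℤ) ^ E - 1) (p ^ aa)
      (fun w => (2 * w + p * w ^ 2) % p ^ aa) hφlt hφinj
  beta_reduce at himg
  have heqs : (∑ w ∈ range (p ^ aa),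
        ((((1 + p * ((2 * w + p * w ^ 2) % p ^ aa) : ℕ) : ℤ) ^ E - 1)
          - 2 * (((1 + p * w : ℕ) : ℤ) ^ E - 1)))
      = -(∑ w ∈ range (p ^ aa), (((1 + p * w : ℕ) : ℤ) ^ E - 1)) := by
    rw [Finset.sum_sub_distrib, himg, ← Finset.mul_sum]; ring
  rw [heqs] at hsum
  exact dvd_neg.mp hsum

/-- The "W" lemma: `∑_{n=1}^{p-1} n^b ≡ 0 mod p^aa` when `(p-1) ∤ b` and `p^s ∣ b`,
`aa ≤ s+1`. -/
private lemma auxW (p b s aa : ℕ) (hp : p.Prime) (hsb : p ^ s ∣ b) (haa : aa ≤ s + 1)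
    (hnd : ¬ (p - 1) ∣ b) :
    (p : ℤ) ^ aa ∣ ∑ z ∈ range (p - 1), ((1 + z : ℕ) : ℤ) ^ b := by
  haveI : Fact p.Prime := ⟨hp⟩
  haveI : NeZero p := ⟨hp.ne_zero⟩
  have hp2 := hp.two_le
  obtain ⟨ζ, hζ⟩ := IsCyclic.exists_generator (α := (ZMod p)ˣ)
  have hcard : Fintype.card (ZMod p)ˣ = p - 1 := by
    rw [ZMod.card_units_eq_totient, Nat.totient_prime hp]
  have horder : orderOf ζ = p - 1 := by
    rw [orderOf_eq_card_of_forall_mem_zpowers hζ, Nat.card_eq_fintype_card, hcard]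
  have hzb : ζ ^ b ≠ 1 := by
    intro h
    exact hnd (horder ▸ orderOf_dvd_of_pow_eq_one h)
  set gg := ((ζ : ZMod p)).val with hgg
  have hcast : ((gg : ℕ) : ZMod p) = (ζ : ZMod p) := ZMod.natCast_zmod_val _
  have hggnd : ¬ p ∣ gg := by
    intro h
    have h0 : ((gg : ℕ) : ZMod p) = 0 := (ZMod.natCast_eq_zero_iff _ _).mpr h
    rw [hcast] at h0
    exact (Units.ne_zero ζ) h0
  have hunit : ¬ (p : ℤ) ∣ (1 - (gg : ℤ) ^ b) := by
    intro h
    have h0 : ((1 - (gg : ℤ) ^ b : ℤ) : ZMod p) = 0 :=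
      (ZMod.intCast_zmod_eq_zero_iff_dvd _ _).mpr h
    push_cast at h0
    rw [hcast] at h0
    have hzb1 : (ζ : ZMod p) ^ b = 1 := by linear_combination -h0
    apply hzb
    apply Units.ext
    rw [Units.val_pow_eq_pow_val, Units.val_one]
    exact hzb1
  have hmem : ∀ z, z < p - 1 → (gg * (1 + z)) % p - 1 < p - 1 ∧
      1 + ((gg * (1 + z)) % p - 1) = (gg * (1 + z)) % p := by
    intro z hz
    have hnd2 : ¬ p ∣ gg * (1 + z) := by
      intro hdd
      rcases (Nat.Prime.dvd_mul hp).mp hdd with h' | h'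
      · exact hggnd h'
      · have := Nat.le_of_dvd (by omega) h'
        omega
    have hlt : (gg * (1 + z)) % p < p := Nat.mod_lt _ hp.pos
    have hne : (gg * (1 + z)) % p ≠ 0 := fun h0 => hnd2 (Nat.dvd_of_mod_eq_zero h0)
    omega
  have hinj : ∀ z z', z < p - 1 → z' < p - 1 →
      (gg * (1 + z)) % p - 1 = (gg * (1 + z')) % p - 1 → z = z' := by
    intro z z' hz hz' h
    have h1 := (hmem z hz).2
    have h2 := (hmem z' hz').2
    have hmm : (gg * (1 + z)) % p = (gg * (1 + z')) % p := by omega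
    have hmodeq : gg * (1 + z) ≡ gg * (1 + z') [MOD p] := hmm
    have hgcd : Nat.gcd p gg = 1 := hp.coprime_iff_not_dvd.mpr hggnd
    have h3 := Nat.ModEq.cancel_left_of_coprime hgcd hmodeq
    have h4 : (1 + z) % p = (1 + z') % p := h3
    rw [Nat.mod_eq_of_lt (by omega), Nat.mod_eq_of_lt (by omega)] at h4
    omega
  have hper : ∀ z ∈ range (p - 1), (p : ℤ) ^ aa ∣
      (((1 + ((gg * (1 + z)) % p - 1) : ℕ) : ℤ) ^ b - (gg : ℤ) ^ b * ((1 + z : ℕ) : ℤ) ^ b) := by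
    intro z hz
    have h2 := (hmem z (mem_range.mp hz)).2
    have hbase : (p : ℤ) ^ 1 ∣
        ((1 + ((gg * (1 + z)) % p - 1) : ℕ) : ℤ) - ((gg * (1 + z) : ℕ) : ℤ) := by
      rw [pow_one, h2]
      have hmq : (gg * (1 + z)) % p ≡ gg * (1 + z) [MOD p] := Nat.mod_modEq _ _
      have hdd := (Nat.modEq_iff_dvd).mp hmq
      have hdd2 : (p : ℤ) ∣ ((gg * (1 + z) : ℕ) : ℤ) - (((gg * (1 + z)) % p : ℕ) : ℤ) := by
        exact_mod_cast hdd
      exact (dvd_sub_comm).mp hdd2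
    have hpow := ppow p hp b (le_refl 1) hbase hsb
    have hmul : ((gg * (1 + z) : ℕ) : ℤ) ^ b = (gg : ℤ) ^ b * ((1 + z : ℕ) : ℤ) ^ b := by
      push_cast; rw [mul_pow]
    rw [hmul] at hpow
    exact dvd_weaken (by omega) hpow
  have hsum := Finset.dvd_sum hper
  have himg := sum_inj_image (fun u => ((1 + u : ℕ) : ℤ) ^ b) (p - 1)
      (fun z => (gg * (1 + z)) % p - 1) (fun z hz => (hmem z hz).1) hinj
  beta_reduce at himg
  have heq2 : (∑ z ∈ range (p - 1),
        (((1 + ((gg * (1 + z)) % p - 1) : ℕ) : ℤ) ^ b - (gg : ℤ) ^ b * ((1 + z : ℕ) : ℤ) ^ b))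
      = (1 - (gg : ℤ) ^ b) * ∑ z ∈ range (p - 1), ((1 + z : ℕ) : ℤ) ^ b := by
    rw [Finset.sum_sub_distrib, himg, ← Finset.mul_sum]; ring
  rw [heq2] at hsum
  exact cancel_pow p hp hunit hsum

/-- The per-term congruence: `g(n0 + p j) ≡ g(n0) + g(1 + p ((j r) mod p^aa))`
mod `p^(s+1+aa)` where `g(x) = x^E - 1`, `E = p^s (p-1)`, and `r` is an inverse of
`n0` mod `p^(s+1+aa)`. -/
private lemma auxG (p s aa n0 r j : ℕ) (hp : p.Prime) (haa : aa ≤ s + 1)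
    (hn0 : ¬ p ∣ n0)
    (hr : (p : ℤ) ^ (s + 1 + aa) ∣ (n0 : ℤ) * (r : ℤ) - 1) :
    (p : ℤ) ^ (s + 1 + aa) ∣
      (((n0 + p * j : ℕ) : ℤ) ^ (p ^ s * (p - 1)) - 1)
        - ((n0 : ℤ) ^ (p ^ s * (p - 1)) - 1)
        - (((1 + p * ((j * r) % p ^ aa) : ℕ) : ℤ) ^ (p ^ s * (p - 1)) - 1) := by
  have hp2 := hp.two_le
  set E := p ^ s * (p - 1) with hE
  have hEdvd : p ^ s ∣ E := Dvd.intro _ rfl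
  set MZ := (p : ℤ) ^ (s + 1 + aa) with hMZ
  have m0 : ((n0 + p * j : ℕ) : ℤ) ≡ (n0 : ℤ) * (1 + (p : ℤ) * ((j : ℤ) * (r : ℤ))) [ZMOD MZ] := by
    apply Int.modEq_of_dvd
    have hid : (n0 : ℤ) * (1 + (p : ℤ) * ((j : ℤ) * (r : ℤ))) - ((n0 + p * j : ℕ) : ℤ)
        = ((p : ℤ) * (j : ℤ)) * ((n0 : ℤ) * (r : ℤ) - 1) := by push_cast; ring
    rw [hid]
    exact Dvd.dvd.mul_left hr _
  have m1 := m0.pow E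
  rw [mul_pow] at m1
  have m2base : (p : ℤ) ^ (aa + 1) ∣
      (1 + (p : ℤ) * ((j : ℤ) * (r : ℤ))) - ((1 + p * ((j * r) % p ^ aa) : ℕ) : ℤ) := by
    have hle : (j * r) % p ^ aa ≤ j * r := Nat.mod_le _ _
    obtain ⟨c, hc⟩ := Nat.dvd_sub_mod (n := p ^ aa) (j * r)
    have hid : (1 + (p : ℤ) * ((j : ℤ) * (r : ℤ))) - ((1 + p * ((j * r) % p ^ aa) : ℕ) : ℤ)
        = (p : ℤ) * (((j * r) - (j * r) % p ^ aa : ℕ) : ℤ) := by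
      rw [Nat.cast_sub hle]; push_cast; ring
    rw [hid, hc]
    push_cast
    exact ⟨c, by ring⟩
  have m2E : MZ ∣ (1 + (p : ℤ) * ((j : ℤ) * (r : ℤ))) ^ E
      - ((1 + p * ((j * r) % p ^ aa) : ℕ) : ℤ) ^ E := by
    have := ppow p hp E (by omega) m2base hEdvd
    exact dvd_weaken (by omega) this
  have m3 : MZ ∣ (n0 : ℤ) ^ E * ((1 + (p : ℤ) * ((j : ℤ) * (r : ℤ))) ^ E)
      - (n0 : ℤ) ^ E * (((1 + p * ((j * r) % p ^ aa) : ℕ) : ℤ) ^ E) := by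
    have h := m2E.mul_left ((n0 : ℤ) ^ E)
    rw [mul_sub] at h
    exact h
  have e1 := euler1 p hp s hn0
  have e2 := euler1 p hp s (not_dvd_one_add_mul p ((j * r) % p ^ aa) hp)
  rw [← hE] at e1 e2
  have m4 : MZ ∣ (n0 : ℤ) ^ E * (((1 + p * ((j * r) % p ^ aa) : ℕ) : ℤ) ^ E)
      - (((n0 : ℤ) ^ E - 1) + ((((1 + p * ((j * r) % p ^ aa) : ℕ) : ℤ)) ^ E - 1) + 1) := by
    have hidd : (n0 : ℤ) ^ E * (((1 + p * ((j * r) % p ^ aa) : ℕ) : ℤ) ^ E)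
        - (((n0 : ℤ) ^ E - 1) + ((((1 + p * ((j * r) % p ^ aa) : ℕ) : ℤ)) ^ E - 1) + 1)
        = ((n0 : ℤ) ^ E - 1) * ((((1 + p * ((j * r) % p ^ aa) : ℕ) : ℤ)) ^ E - 1) := by ring
    rw [hidd, hMZ]
    exact dvd_weaken (by omega) (dvdh e1 e2 (le_refl _))
  have m1d := m1.dvd
  have hfin : (((n0 + p * j : ℕ) : ℤ) ^ E - 1)
        - ((n0 : ℤ) ^ E - 1)
        - (((1 + p * ((j * r) % p ^ aa) : ℕ) : ℤ) ^ E - 1)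
      = -((n0 : ℤ) ^ E * ((1 + (p : ℤ) * ((j : ℤ) * (r : ℤ))) ^ E) - ((n0 + p * j : ℕ) : ℤ) ^ E)
        + (((n0 : ℤ) ^ E * ((1 + (p : ℤ) * ((j : ℤ) * (r : ℤ))) ^ E)
            - (n0 : ℤ) ^ E * (((1 + p * ((j * r) % p ^ aa) : ℕ) : ℤ) ^ E))
          + ((n0 : ℤ) ^ E * (((1 + p * ((j * r) % p ^ aa) : ℕ) : ℤ) ^ E)
            - (((n0 : ℤ) ^ E - 1) + ((((1 + p * ((j * r) % p ^ aa) : ℕ) : ℤ)) ^ E - 1) + 1))) := by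
    ring
  rw [hfin]
  exact dvd_add (dvd_neg.mpr m1d) (dvd_add m3 m4)

/-- Decomposition of the sum over `[1, p^(aa+1)]` by residues mod `p`. -/
private lemma sum_Icc_pow_decomp (p aa : ℕ) (hp : 0 < p) (F : ℕ → ℤ) :
    ∑ n ∈ Finset.Icc 1 (p ^ (aa + 1)), F n
      = ∑ z ∈ range p, ∑ j ∈ range (p ^ aa), F (1 + z + p * j) := by
  have h0 : Finset.Icc 1 (p ^ (aa + 1)) = Finset.Ico 1 (p ^ (aa + 1) + 1) := by
    rw [Finset.Ico_add_one_right_eq_Icc]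
  rw [h0, Finset.sum_Ico_eq_sum_range]
  have h1 : p ^ (aa + 1) + 1 - 1 = p ^ aa * p := by rw [pow_succ]; omega
  rw [h1, sum_block (fun i => F (1 + i)) (p ^ aa) p, Finset.sum_comm]
  apply Finset.sum_congr rfl
  intro z _
  apply Finset.sum_congr rfl
  intro q _
  congr 1
  ring

theorem corollary2_sum_vanishes (p : ℕ) (hp : p.Prime) (hodd : Odd p)
    (a t : ℕ) (b : ℕ) (hb : 0 < b) (hdvd : p ^ (a + t) ∣ b)
    (hnd : ¬ (p - 1) ∣ b) (hval : 2 * a + t + 1 ≤ padicValNat p b)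
    (hbig : 2 * p ^ (a + t) * (p - 1) < b)
    (v : ℕ) (hv : v = min (padicValNat p b - (2 * a + t + 1)) t) :
    ((p : ℤ) ^ (3 * a + t + v + 2)) ∣
      ∑ n ∈ Finset.Icc 1 (p ^ (a + 1)),
        (n : ℤ) ^ b * ((n : ℤ) ^ (p ^ (a + t) * (p - 1)) - 1) ^ 2 := by
  have hp2 := hp.two_le
  have hpne2 : p ≠ 2 := by rintro rfl; simp [Nat.odd_iff] at hodd
  have hp3 : 3 ≤ p := by omega
  have hvt : v ≤ t := by rw [hv]; exact min_le_right _ _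
  have hpows : a + t < 3 ^ (a + t) := Nat.lt_pow_self (by norm_num)
  have hpowp : 3 ^ (a + t) ≤ p ^ (a + t) := Nat.pow_le_pow_left hp3 _
  have hNb : 3 * a + t + v + 2 ≤ b := by
    have h4 : 4 * 3 ^ (a + t) ≤ 2 * p ^ (a + t) * (p - 1) := by
      calc 4 * 3 ^ (a + t) ≤ 4 * p ^ (a + t) := by omega
        _ = 2 * p ^ (a + t) * 2 := by ring
        _ ≤ 2 * p ^ (a + t) * (p - 1) := Nat.mul_le_mul_left _ (by omega)
    omega
  have hNle : 3 * a + t + v + 2 ≤ 2 * (a + t + 1) + a := by omega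
  rw [sum_Icc_pow_decomp p a hp.pos]
  beta_reduce
  have hsplit := Finset.sum_range_succ
      (fun z => ∑ j ∈ range (p ^ a),
        ((1 + z + p * j : ℕ) : ℤ) ^ b
          * (((1 + z + p * j : ℕ) : ℤ) ^ (p ^ (a + t) * (p - 1)) - 1) ^ 2)
      (p - 1)
  beta_reduce at hsplit
  rw [show p - 1 + 1 = p from by omega] at hsplit
  rw [hsplit]
  apply dvd_add
  · -- coprime part
    apply dvd_weaken hNle
    set E := p ^ (a + t) * (p - 1) with hE
    set A := ∑ w ∈ range (p ^ a), (((1 + p * w : ℕ) : ℤ) ^ E - 1) with hA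
    set B := ∑ w ∈ range (p ^ a), ((((1 + p * w : ℕ) : ℤ) ^ E - 1)) ^ 2 with hB
    set W := ∑ z ∈ range (p - 1), ((1 + z : ℕ) : ℤ) ^ b with hW
    have hAd : (p : ℤ) ^ (a + t + 1 + a) ∣ A := by
      rw [hA, hE]
      exact auxA p hp hodd (a + t) a (by omega)
    have hBd : (p : ℤ) ^ (2 * (a + t + 1)) ∣ B := by
      rw [hB]
      apply Finset.dvd_sum
      intro w _
      have he := euler1 p hp (a + t) (not_dvd_one_add_mul p w hp)
      rw [← hE] at he
      rw [sq]
      exact dvdh he he (by omega)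
    have hWd : (p : ℤ) ^ a ∣ W := by
      rw [hW]
      exact auxW p b (a + t) a hp hdvd (by omega) hnd
    have hperz : ∀ z ∈ range (p - 1), (p : ℤ) ^ (2 * (a + t + 1) + a) ∣
        ((∑ j ∈ range (p ^ a),
            ((1 + z + p * j : ℕ) : ℤ) ^ b * (((1 + z + p * j : ℕ) : ℤ) ^ E - 1) ^ 2)
          - ((1 + z : ℕ) : ℤ) ^ b * B) := by
      intro z hz
      have hzlt : z < p - 1 := mem_range.mp hz
      have hn0 : ¬ p ∣ (1 + z) := by
        intro hdd; have := Nat.le_of_dvd (by omega) hdd; omega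
      have hcop : Nat.Coprime (1 + z) (p ^ (a + t + 1 + a)) :=
        Nat.Coprime.pow_right _ ((hp.coprime_iff_not_dvd.mpr hn0).symm)
      have h1lt : 1 < p ^ (a + t + 1 + a) :=
        Nat.one_lt_pow (by omega) (by omega)
      obtain ⟨r, -, hrmod⟩ := Nat.exists_mul_mod_eq_one_of_coprime hcop h1lt
      have hge1 : 1 ≤ (1 + z) * r := by
        by_contra hcon
        have h0 : (1 + z) * r = 0 := by omega
        rw [h0] at hrmod
        simp at hrmod
      have hnr : (p : ℕ) ^ (a + t + 1 + a) ∣ (1 + z) * r - 1 := by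
        have hdm := Nat.div_add_mod ((1 + z) * r) (p ^ (a + t + 1 + a))
        rw [hrmod] at hdm
        exact ⟨(1 + z) * r / p ^ (a + t + 1 + a), by omega⟩
      have hrZ : (p : ℤ) ^ (a + t + 1 + a) ∣ ((1 + z : ℕ) : ℤ) * (r : ℤ) - 1 := by
        have h5 : (((1 + z) * r - 1 : ℕ) : ℤ) = ((1 + z : ℕ) : ℤ) * (r : ℤ) - 1 := by
          rw [Nat.cast_sub hge1]; push_cast; ring
        have h6 := Int.natCast_dvd_natCast.mpr hnr
        rw [h5] at h6
        have h7 : (((p : ℕ) ^ (a + t + 1 + a) : ℕ) : ℤ) = (p : ℤ) ^ (a + t + 1 + a) := by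
          push_cast; ring
        rwa [h7] at h6
      have hpr : ¬ p ∣ r := by
        intro hdd
        have h8 : p ∣ (1 + z) * r := Dvd.dvd.mul_left hdd _
        have h9 : p ∣ (1 + z) * r - 1 :=
          dvd_trans (dvd_pow_self p (by omega : a + t + 1 + a ≠ 0)) hnr
        have h10 := Nat.dvd_sub h8 h9
        rw [show (1 + z) * r - ((1 + z) * r - 1) = 1 from by omega] at h10
        have := Nat.le_of_dvd one_pos h10
        omega
      -- reindexing facts
      have hjlt : ∀ jj, jj < p ^ a → (jj * r) % p ^ a < p ^ a :=
        fun jj _ => Nat.mod_lt _ (pow_pos hp.pos a)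
      have hjinj : ∀ z1 z2, z1 < p ^ a → z2 < p ^ a →
          (z1 * r) % p ^ a = (z2 * r) % p ^ a → z1 = z2 := by
        intro z1 z2 hz1 hz2 h
        have hmq : z1 * r ≡ z2 * r [MOD p ^ a] := h
        have hgcd : Nat.gcd (p ^ a) r = 1 :=
          Nat.Coprime.pow_left a (hp.coprime_iff_not_dvd.mpr hpr)
        have h3 := Nat.ModEq.cancel_right_of_coprime hgcd hmq
        have h4 : z1 % p ^ a = z2 % p ^ a := h3
        rw [Nat.mod_eq_of_lt hz1, Nat.mod_eq_of_lt hz2] at h4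
        exact h4
      -- per-j term congruence
      have hex : (p : ℤ) ^ (a + t + 1) ∣ ((1 + z : ℕ) : ℤ) ^ E - 1 := by
        have := euler1 p hp (a + t) hn0; rwa [← hE] at this
      have htj : ∀ j ∈ range (p ^ a), (p : ℤ) ^ (2 * (a + t + 1) + a) ∣
          (((1 + z + p * j : ℕ) : ℤ) ^ b * (((1 + z + p * j : ℕ) : ℤ) ^ E - 1) ^ 2
            - ((1 + z : ℕ) : ℤ) ^ b
              * ((((1 + z : ℕ) : ℤ) ^ E - 1)
                + (((1 + p * ((j * r) % p ^ a) : ℕ) : ℤ) ^ E - 1)) ^ 2) := by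
        intro j _
        have hgj := auxG p (a + t) a (1 + z) r j hp (by omega) hn0 hrZ
        rw [← hE] at hgj
        have hXd : (p : ℤ) ^ (a + t + 1) ∣ ((1 + z + p * j : ℕ) : ℤ) ^ E - 1 := by
          have hnn : ¬ p ∣ (1 + z + p * j) := by
            intro hdd
            have h11 : p ∣ p * j := Dvd.intro j rfl
            have h12 := Nat.dvd_sub hdd h11
            rw [show 1 + z + p * j - p * j = 1 + z from by omega] at h12
            exact hn0 h12
          have := euler1 p hp (a + t) hnn; rwa [← hE] at this
        have he2 : (p : ℤ) ^ (a + t + 1) ∣ ((1 + p * ((j * r) % p ^ a) : ℕ) : ℤ) ^ E - 1 := by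
          have := euler1 p hp (a + t) (not_dvd_one_add_mul p ((j * r) % p ^ a) hp)
          rwa [← hE] at this
        have hYd : (p : ℤ) ^ (a + t + 1) ∣
            ((((1 + z : ℕ) : ℤ) ^ E - 1) + (((1 + p * ((j * r) % p ^ a) : ℕ) : ℤ) ^ E - 1)) :=
          dvd_add hex he2
        have hbd : (p : ℤ) ^ a ∣ ((1 + z + p * j : ℕ) : ℤ) ^ b - ((1 + z : ℕ) : ℤ) ^ b := by
          have hbase : (p : ℤ) ^ 1 ∣ ((1 + z + p * j : ℕ) : ℤ) - ((1 + z : ℕ) : ℤ) := by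
            rw [pow_one]; push_cast; exact ⟨j, by ring⟩
          have := ppow p hp b (le_refl 1) hbase hdvd
          exact dvd_weaken (by omega) this
        have hXY : (p : ℤ) ^ (a + t + 1 + a) ∣
            (((1 + z + p * j : ℕ) : ℤ) ^ E - 1)
              - ((((1 + z : ℕ) : ℤ) ^ E - 1)
                + (((1 + p * ((j * r) % p ^ a) : ℕ) : ℤ) ^ E - 1)) := by
          have h13 : (((1 + z + p * j : ℕ) : ℤ) ^ E - 1)
              - ((((1 + z : ℕ) : ℤ) ^ E - 1)
                + (((1 + p * ((j * r) % p ^ a) : ℕ) : ℤ) ^ E - 1))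
              = (((1 + z + p * j : ℕ) : ℤ) ^ E - 1)
                - (((1 + z : ℕ) : ℤ) ^ E - 1)
                - (((1 + p * ((j * r) % p ^ a) : ℕ) : ℤ) ^ E - 1) := by ring
          rw [h13]
          exact hgj
        have hX2 : (p : ℤ) ^ (2 * (a + t + 1)) ∣ (((1 + z + p * j : ℕ) : ℤ) ^ E - 1) ^ 2 := by
          rw [sq]; exact dvdh hXd hXd (by omega)
        have hexpr : ((1 + z + p * j : ℕ) : ℤ) ^ b * (((1 + z + p * j : ℕ) : ℤ) ^ E - 1) ^ 2
            - ((1 + z : ℕ) : ℤ) ^ b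
              * ((((1 + z : ℕ) : ℤ) ^ E - 1)
                + (((1 + p * ((j * r) % p ^ a) : ℕ) : ℤ) ^ E - 1)) ^ 2
            = (((1 + z + p * j : ℕ) : ℤ) ^ b - ((1 + z : ℕ) : ℤ) ^ b)
                * (((1 + z + p * j : ℕ) : ℤ) ^ E - 1) ^ 2
              + ((1 + z : ℕ) : ℤ) ^ b
                * (((((1 + z + p * j : ℕ) : ℤ) ^ E - 1)
                    - ((((1 + z : ℕ) : ℤ) ^ E - 1)
                      + (((1 + p * ((j * r) % p ^ a) : ℕ) : ℤ) ^ E - 1)))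
                  * ((((1 + z + p * j : ℕ) : ℤ) ^ E - 1)
                    + ((((1 + z : ℕ) : ℤ) ^ E - 1)
                      + (((1 + p * ((j * r) % p ^ a) : ℕ) : ℤ) ^ E - 1)))) := by
          ring
        rw [hexpr]
        exact dvd_add (dvdh hbd hX2 (by omega))
          (dvd_mul_of_dvd_right (dvdh hXY (dvd_add hXd hYd) (by omega)) _)
      have hsumj := Finset.dvd_sum htj
      -- reindexed sums
      have himgA := sum_inj_image (fun u => (((1 + p * u : ℕ) : ℤ) ^ E - 1)) (p ^ a)
          (fun jj => (jj * r) % p ^ a) hjlt hjinj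
      have himgB := sum_inj_image (fun u => ((((1 + p * u : ℕ) : ℤ) ^ E - 1)) ^ 2) (p ^ a)
          (fun jj => (jj * r) % p ^ a) hjlt hjinj
      beta_reduce at himgA himgB
      have hYsum : ∑ j ∈ range (p ^ a),
          ((((1 + z : ℕ) : ℤ) ^ E - 1) + (((1 + p * ((j * r) % p ^ a) : ℕ) : ℤ) ^ E - 1)) ^ 2
          = ((p ^ a : ℕ) : ℤ) * (((1 + z : ℕ) : ℤ) ^ E - 1) ^ 2
            + 2 * (((1 + z : ℕ) : ℤ) ^ E - 1) * A + B := by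
        have hexp : ∀ j ∈ range (p ^ a),
            ((((1 + z : ℕ) : ℤ) ^ E - 1) + (((1 + p * ((j * r) % p ^ a) : ℕ) : ℤ) ^ E - 1)) ^ 2
            = (((1 + z : ℕ) : ℤ) ^ E - 1) ^ 2
              + (2 * (((1 + z : ℕ) : ℤ) ^ E - 1))
                  * (((1 + p * ((j * r) % p ^ a) : ℕ) : ℤ) ^ E - 1)
              + (((1 + p * ((j * r) % p ^ a) : ℕ) : ℤ) ^ E - 1) ^ 2 := fun j _ => by ring
        rw [Finset.sum_congr rfl hexp, Finset.sum_add_distrib, Finset.sum_add_distrib,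
          Finset.sum_const, card_range, ← Finset.mul_sum, himgA, himgB, ← hA, ← hB,
          nsmul_eq_mul]
      have hfin : (∑ j ∈ range (p ^ a),
            ((1 + z + p * j : ℕ) : ℤ) ^ b * (((1 + z + p * j : ℕ) : ℤ) ^ E - 1) ^ 2)
          - ((1 + z : ℕ) : ℤ) ^ b * B
          = (∑ j ∈ range (p ^ a),
              (((1 + z + p * j : ℕ) : ℤ) ^ b * (((1 + z + p * j : ℕ) : ℤ) ^ E - 1) ^ 2
                - ((1 + z : ℕ) : ℤ) ^ b
                  * ((((1 + z : ℕ) : ℤ) ^ E - 1)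
                    + (((1 + p * ((j * r) % p ^ a) : ℕ) : ℤ) ^ E - 1)) ^ 2))
            + (((1 + z : ℕ) : ℤ) ^ b * (((p ^ a : ℕ) : ℤ) * (((1 + z : ℕ) : ℤ) ^ E - 1) ^ 2)
              + ((1 + z : ℕ) : ℤ) ^ b * (2 * ((((1 + z : ℕ) : ℤ) ^ E - 1) * A))) := by
        rw [Finset.sum_sub_distrib, ← Finset.mul_sum, hYsum]
        ring
      rw [hfin]
      refine dvd_add hsumj (dvd_add ?_ ?_)
      · refine dvd_mul_of_dvd_right ?_ _
        have hpa : (p : ℤ) ^ a ∣ ((p ^ a : ℕ) : ℤ) := by norm_cast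
        have hx2 : (p : ℤ) ^ (2 * (a + t + 1)) ∣ (((1 + z : ℕ) : ℤ) ^ E - 1) ^ 2 := by
          rw [sq]; exact dvdh hex hex (by omega)
        exact dvdh hpa hx2 (by omega)
      · refine dvd_mul_of_dvd_right ?_ _
        have hxA : (p : ℤ) ^ (2 * (a + t + 1) + a) ∣ (((1 + z : ℕ) : ℤ) ^ E - 1) * A :=
          dvdh hex hAd (by omega)
        exact hxA.mul_left 2
    -- assemble over z
    have hsumz := Finset.dvd_sum hperz
    have heq3 : (∑ z ∈ range (p - 1),
          ((∑ j ∈ range (p ^ a),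
              ((1 + z + p * j : ℕ) : ℤ) ^ b * (((1 + z + p * j : ℕ) : ℤ) ^ E - 1) ^ 2)
            - ((1 + z : ℕ) : ℤ) ^ b * B))
        = (∑ z ∈ range (p - 1), ∑ j ∈ range (p ^ a),
            ((1 + z + p * j : ℕ) : ℤ) ^ b * (((1 + z + p * j : ℕ) : ℤ) ^ E - 1) ^ 2)
          - W * B := by
      rw [Finset.sum_sub_distrib, hW, Finset.sum_mul]
    rw [heq3] at hsumz
    have hWB : (p : ℤ) ^ (2 * (a + t + 1) + a) ∣ W * B := dvdh hWd hBd (by omega)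
    have hfinal := dvd_add hsumz hWB
    simpa using hfinal
  · -- the multiples of p
    apply Finset.dvd_sum
    intro j _
    have harg : 1 + (p - 1) + p * j = p * (1 + j) := by
      rw [show 1 + (p - 1) = p from by omega]; ring
    rw [harg]
    have hcast : ((p * (1 + j) : ℕ) : ℤ) = (p : ℤ) * ((1 + j : ℕ) : ℤ) := by push_cast; ring
    rw [hcast, mul_pow]
    exact dvd_mul_of_dvd_left (dvd_mul_of_dvd_left (pow_dvd_pow _ hNb) _) _
end

section
/- Let p be an odd prime, a, t nonnegative integers, and k a positive integer not divisible by p-1 with 2p^(2a+1) | k. Set v = min(v_p(k) - 2a - 1, t). Then for any integer r with k + p^a(p-1)r > 0, the sum over n from 1 to p^(a+1) of n^((k + p^a(p-1)r)p^t) is congruent to r times the sum over n from 1 to p^(a+1) of n^((k + p^a(p-1))p^t), modulo p^(3a+t+v+2). -/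
open Finset

namespace LinRelAux

lemma three_mul_le (y : ℕ) : 3 * y + 2 ≤ 2 * 3 ^ y := by
  induction y with
  | zero => simp
  | succ n ih =>
    calc 3 * (n + 1) + 2 ≤ 3 * (3 * n + 2) := by omega
    _ ≤ 3 * (2 * 3 ^ n) := Nat.mul_le_mul_left 3 ih
    _ = 2 * 3 ^ (n + 1) := by ring

lemma mul_pdvd {p : ℕ} (u v : ℕ) {A B : ℤ} (hA : (p:ℤ)^u ∣ A) (hB : (p:ℤ)^v ∣ B) :
    (p:ℤ)^(u+v) ∣ A * B := by
  rw [pow_add]; exact mul_dvd_mul hA hB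

lemma pstep {p : ℕ} (hp : p.Prime) (X Y : ℤ) (e : ℕ) (he : 1 ≤ e)
    (h : (p:ℤ)^e ∣ X - Y) : (p:ℤ)^(e+1) ∣ X^p - Y^p := by
  haveI : Fact p.Prime := ⟨hp⟩
  have hgeom : (∑ i ∈ range p, X ^ i * Y ^ (p - 1 - i)) * (X - Y) = X ^ p - Y ^ p :=
    geom_sum₂_mul X Y p
  have hpd : (p:ℤ) ∣ ∑ i ∈ range p, X ^ i * Y ^ (p - 1 - i) := by
    rw [← ZMod.intCast_zmod_eq_zero_iff_dvd]
    push_cast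
    have hXY : (Y : ZMod p) = (X : ZMod p) := by
      have h0 : ((X - Y : ℤ) : ZMod p) = 0 := by
        rw [ZMod.intCast_zmod_eq_zero_iff_dvd]
        exact ((dvd_pow_self (p:ℤ) (by omega : e ≠ 0)).trans h)
      push_cast at h0
      linear_combination -h0
    rw [hXY]
    have hcg : ∀ i ∈ range p, (X:ZMod p) ^ i * (X:ZMod p) ^ (p - 1 - i)
        = (X:ZMod p) ^ (p-1) := by
      intro i hi
      rw [← pow_add]
      congr 1
      have := mem_range.mp hi
      omega
    rw [Finset.sum_congr rfl hcg]
    simp [Finset.card_range, nsmul_eq_mul, ZMod.natCast_self]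
  obtain ⟨Z, hZ⟩ := hpd
  obtain ⟨W, hW⟩ := h
  refine ⟨Z * W, ?_⟩
  rw [← hgeom, hZ, hW]; ring

lemma piter {p : ℕ} (hp : p.Prime) (X Y : ℤ) (e : ℕ) (he : 1 ≤ e) (w : ℕ)
    (h : (p:ℤ)^e ∣ X - Y) : (p:ℤ)^(e+w) ∣ X^(p^w) - Y^(p^w) := by
  induction w with
  | zero => simpa using h
  | succ n ih =>
    have h2 : (p:ℤ)^(e+n+1) ∣ (X^(p^n))^p - (Y^(p^n))^p := pstep hp _ _ (e+n) (by omega) ih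
    rw [← pow_mul, ← pow_mul, ← pow_succ] at h2
    have he' : e + (n+1) = e + n + 1 := by omega
    rw [he']
    exact h2

lemma hpow_sub {p : ℕ} (hp : p.Prime) (X Y : ℤ) (e w m : ℕ) (he : 1 ≤ e)
    (hm : p ^ w ∣ m) (h : (p:ℤ)^e ∣ X - Y) : (p:ℤ)^(e+w) ∣ X^m - Y^m := by
  obtain ⟨m₀, rfl⟩ := hm
  rw [mul_comm, pow_mul, pow_mul]
  exact piter hp _ _ e he w (h.trans (sub_dvd_pow_sub_pow X Y m₀))

lemma hd_unit {p : ℕ} (hp : p.Prime) (x : ℤ) (hx : ¬ (p:ℤ) ∣ x) (w : ℕ) :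
    (p:ℤ)^(w+1) ∣ x^((p-1) * p^w) - 1 := by
  haveI : Fact p.Prime := ⟨hp⟩
  have hf : (p:ℤ) ∣ x^(p-1) - 1 := by
    rw [← ZMod.intCast_zmod_eq_zero_iff_dvd]
    push_cast
    have hx0 : (x : ZMod p) ≠ 0 := by
      rw [Ne, ZMod.intCast_zmod_eq_zero_iff_dvd]; exact hx
    rw [ZMod.pow_card_sub_one_eq_one hx0]; ring
  have h2 := piter hp (x^(p-1)) 1 1 le_rfl w (by simpa using hf)
  rw [one_pow, ← pow_mul, add_comm 1 w] at h2
  exact h2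

lemma hker2 {p : ℕ} (hp : p.Prime) (a t m : ℕ) (hm : p^(a+t) ∣ m)
    (x y : ℤ) (hx : ¬(p:ℤ)∣x) (hy : ¬(p:ℤ)∣y) (hxy : (p:ℤ)^(a+1) ∣ x - y) :
    (p:ℤ)^(3*a+2*t+2) ∣ x^m * (x^((p-1)*p^(a+t)) - 1)^2
      - y^m * (y^((p-1)*p^(a+t)) - 1)^2 := by
  set dd := (p-1)*p^(a+t) with hdd
  have h1 : (p:ℤ)^(a+1+(a+t)) ∣ x^m - y^m := hpow_sub hp x y (a+1) (a+t) m (by omega) hm hxy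
  have h2 : (p:ℤ)^(a+t+1) ∣ x^dd - 1 := hd_unit hp x hx (a+t)
  have h3 : (p:ℤ)^(a+t+1) ∣ y^dd - 1 := hd_unit hp y hy (a+t)
  have h4 : (p:ℤ)^(a+1+(a+t)) ∣ x^dd - y^dd :=
    hpow_sub hp x y (a+1) (a+t) dd (by omega) (dvd_mul_left _ _) hxy
  have h5 : (p:ℤ)^(a+t+1) ∣ (x^dd - 1) + (y^dd - 1) := dvd_add h2 h3
  have key : x^m * (x^dd-1)^2 - y^m*(y^dd-1)^2
      = (x^m - y^m) * ((x^dd-1) * (x^dd-1))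
        + y^m * ((x^dd - y^dd) * ((x^dd - 1)+(y^dd -1))) := by ring
  rw [key]
  refine dvd_add ?_ ?_
  · refine (pow_dvd_pow (p:ℤ) (show 3*a+2*t+2 ≤ (a+1+(a+t)) + ((a+t+1)+(a+t+1)) by omega)).trans ?_
    exact mul_pdvd _ _ h1 (mul_pdvd _ _ h2 h2)
  · refine Dvd.dvd.mul_left ?_ _
    have := mul_pdvd (a+1+(a+t)) (a+t+1) h4 h5
    have he : a+1+(a+t) + (a+t+1) = 3*a+2*t+2 := by omega
    rwa [he] at this

lemma nd_mul_pow {p : ℕ} (hp : p.Prime) (t X : ℕ) (h : ¬ (p-1) ∣ X) :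
    ¬ (p-1) ∣ X * p^t := by
  intro hdvd
  apply h
  obtain ⟨w, hw⟩ : ∃ w, p^t = w + 1 := ⟨p^t - 1, by have := Nat.one_le_pow t p hp.pos; omega⟩
  have hw1 : (p-1) ∣ w := by
    have h1 : (p-1) ∣ p^t - 1 := by
      have := Nat.sub_dvd_pow_sub_pow p 1 t
      simpa using this
    have h2 : p^t - 1 = w := by omega
    rwa [h2] at h1
  have hmX : X * p^t = X * w + X := by rw [hw]; ring
  have h2 : (p-1) ∣ X * w := hw1.mul_left X
  have h3 : (p-1) ∣ X * w + X := hmX ▸ hdvd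
  have h4 := Nat.dvd_sub h3 h2
  have h5 : X * w + X - X * w = X := by omega
  rwa [h5] at h4


lemma key_vanish {p : ℕ} (hp : p.Prime) (a π m dd j : ℕ)
    (hπ : a + 1 ≤ π) (hdd : (p-1) ∣ dd) (hnd : ¬ (p - 1) ∣ m)
    (hker : ∀ x y : ℤ, ¬(p:ℤ)∣x → ¬(p:ℤ)∣y → (p:ℤ)^(a+1) ∣ x - y →
        (p:ℤ)^π ∣ x^m * (x^dd - 1)^j - y^m * (y^dd - 1)^j) :
    (p:ℤ)^π ∣ ∑ n ∈ (Finset.Icc 1 (p^(a+1))).filter (fun n => ¬ p ∣ n),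
        ((n:ℤ)^m * ((n:ℤ)^dd - 1)^j) := by
  haveI : Fact p.Prime := ⟨hp⟩
  have hp1 : 1 < p := hp.one_lt
  set q := p^(a+1) with hq
  have hq0 : 0 < q := pow_pos hp.pos _
  have hpq : p ∣ q := dvd_pow_self p (Nat.succ_ne_zero a)
  set S := (Finset.Icc 1 q).filter (fun n => ¬ p ∣ n) with hS
  have hmem : ∀ n, n ∈ S ↔ (1 ≤ n ∧ n ≤ q ∧ ¬ p ∣ n) := by
    intro n; simp [hS, Finset.mem_filter, Finset.mem_Icc, and_assoc]
  -- generator of (ZMod p)ˣ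
  obtain ⟨g, hg⟩ := IsCyclic.exists_generator (α := (ZMod p)ˣ)
  set b := ((g : (ZMod p)ˣ) : ZMod p).val with hbdef
  have hb : (b : ZMod p) = ((g : (ZMod p)ˣ) : ZMod p) := by
    simp [hbdef, ZMod.natCast_val, ZMod.cast_id]
  have hbp : ¬ p ∣ b := by
    intro hdvd
    have h0 : (b : ZMod p) = 0 := (ZMod.natCast_eq_zero_iff _ _).mpr hdvd
    rw [hb] at h0
    exact Units.ne_zero g h0
  set c := b ^ (p ^ π) with hcdef
  have hcp : ¬ p ∣ c := fun h => hbp (hp.dvd_of_dvd_pow h)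
  have hfrob : ∀ (e : ℕ) (z : ZMod p), z ^ (p ^ e) = z := by
    intro e
    induction e with
    | zero => intro z; simp
    | succ n ih => intro z; rw [pow_succ, pow_mul, ih, ZMod.pow_card]
  have hcb : (c : ZMod p) = (b : ZMod p) := by
    rw [hcdef]; push_cast; exact hfrob π _
  -- Euler
  have hcop : Nat.Coprime b (p ^ (π+1)) :=
    Nat.Coprime.pow_right _ (Nat.coprime_comm.mp (hp.coprime_iff_not_dvd.mpr hbp))
  have heuler : c ^ (p-1) ≡ 1 [MOD p ^ (π+1)] := by
    have htot : Nat.totient (p^(π+1)) = p^π * (p-1) := by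
      rw [Nat.totient_prime_pow hp (by omega)]
      simp
    have h1 := Nat.ModEq.pow_totient hcop
    rw [htot] at h1
    calc c^(p-1) = b ^ (p^π * (p-1)) := by rw [hcdef, ← pow_mul]
    _ ≡ 1 [MOD p^(π+1)] := h1
  have hcd_int : (p:ℤ)^π ∣ (c:ℤ)^(p-1) - 1 := by
    have h1 : ((p^(π+1) : ℕ) : ℤ) ∣ (1 : ℤ) - ((c^(p-1) : ℕ) : ℤ) := heuler.dvd
    have h2 : (p:ℤ)^(π+1) ∣ (c:ℤ)^(p-1) - 1 := by
      push_cast at h1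
      exact dvd_sub_comm.mp h1
    exact (pow_dvd_pow _ (by omega)).trans h2
  have hcdd : (p:ℤ)^π ∣ (c:ℤ)^dd - 1 := by
    obtain ⟨u, hu⟩ := hdd
    have h1 : (c:ℤ)^dd - 1 = ((c:ℤ)^(p-1))^u - 1^u := by
      rw [← pow_mul, ← hu, one_pow]
    rw [h1]
    exact hcd_int.trans (sub_dvd_pow_sub_pow _ 1 u)
  -- c^m - 1 is a p-unit
  have hordg : orderOf g = p - 1 := by
    rw [orderOf_eq_card_of_forall_mem_zpowers hg, Nat.card_eq_fintype_card, ZMod.card_units]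
  have hgm : g ^ m ≠ 1 := by
    intro h
    exact hnd (hordg ▸ orderOf_dvd_of_pow_eq_one h)
  have hcm : ¬ (p:ℤ) ∣ ((c:ℤ)^m - 1) := by
    intro h
    apply hgm
    have h0 : (((c:ℤ)^m - 1 : ℤ) : ZMod p) = 0 := (ZMod.intCast_zmod_eq_zero_iff_dvd _ _).mpr h
    push_cast at h0
    rw [hcb, hb] at h0
    have h2 : ((g:(ZMod p)ˣ) : ZMod p)^m = 1 := by linear_combination h0
    ext
    push_cast
    exact h2
  -- the multiplication bijection
  set E := (p-1) * p^π with hE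
  have hE1 : 1 ≤ E := by
    have : 0 < (p-1) * p^π := Nat.mul_pos (by omega) (pow_pos hp.pos _)
    omega
  have hcE : c ^ E ≡ 1 [MOD q] := by
    have h1 : c ^ E ≡ 1 [MOD p^(π+1)] := by
      have h2 : c ^ E = (c^(p-1))^(p^π) := by
        rw [hE]; exact pow_mul c (p-1) (p^π)
      rw [h2]
      simpa using heuler.pow (p^π)
    exact h1.of_dvd (pow_dvd_pow p (by omega))
  have hkey_mod : ∀ x : ℕ, (c ^ E * x) % q = x % q := by
    intro x
    calc (c^E * x) % q = (c^E % q * x) % q := by rw [Nat.mod_mul_mod]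
    _ = (1 % q * x) % q := by rw [hcE]
    _ = x % q := by rw [Nat.mod_mul_mod, one_mul]
  have hSmap : ∀ (e : ℕ), ¬ p ∣ e → ∀ n ∈ S, (e * n) % q ∈ S := by
    intro e he n hn
    rw [hmem] at hn ⊢
    have hen : ¬ p ∣ e * n := fun h => ((hp.dvd_mul).mp h).elim he hn.2.2
    have hlt : (e*n) % q < q := Nat.mod_lt _ hq0
    refine ⟨?_, le_of_lt hlt, ?_⟩
    · rcases Nat.eq_zero_or_pos ((e*n) % q) with h0 | h0
      · exact absurd (hpq.trans (Nat.dvd_of_mod_eq_zero h0)) hen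
      · exact h0
    · intro hdvd
      apply hen
      have h1 := Nat.mod_add_div (e*n) q
      calc p ∣ (e*n) % q + q * ((e*n)/q) := dvd_add hdvd (Dvd.dvd.mul_right hpq _)
      _ = e * n := h1
  have hcp' : ¬ p ∣ c^(E-1) := fun h => hcp (hp.dvd_of_dvd_pow h)
  have hltq : ∀ n ∈ S, n < q := by
    intro n hn
    rw [hmem] at hn
    rcases Nat.lt_or_ge n q with h | h
    · exact h
    · exact absurd (le_antisymm hn.2.1 h ▸ hpq) hn.2.2
  have hσσ' : ∀ n ∈ S, (c^(E-1) * ((c * n) % q)) % q = n := by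
    intro n hn
    rw [Nat.mul_mod_mod]
    have h1 : c^(E-1) * (c*n) = c^E * n := by
      rw [← mul_assoc, ← pow_succ]
      congr 2
      omega
    rw [h1, hkey_mod, Nat.mod_eq_of_lt (hltq n hn)]
  have hσ'σ : ∀ n ∈ S, (c * ((c^(E-1) * n) % q)) % q = n := by
    intro n hn
    rw [Nat.mul_mod_mod]
    have h1 : c * (c^(E-1)*n) = c^E * n := by
      rw [← mul_assoc, mul_comm c, ← pow_succ]
      congr 2
      omega
    rw [h1, hkey_mod, Nat.mod_eq_of_lt (hltq n hn)]
  set F : ℕ → ℤ := fun z => (z:ℤ)^m * ((z:ℤ)^dd - 1)^j with hF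
  have hre : ∑ n ∈ S, F ((c*n) % q) = ∑ n ∈ S, F n :=
    Finset.sum_nbij' (fun n => (c*n) % q) (fun n => (c^(E-1)*n) % q)
      (fun n hn => hSmap c hcp n hn) (fun n hn => hSmap _ hcp' n hn)
      hσσ' hσ'σ (fun n hn => rfl)
  have hterm : ∀ n ∈ S, (p:ℤ)^π ∣ F ((c*n) % q) - (c:ℤ)^m * F n := by
    intro n hn
    have hnS := (hmem n).mp hn
    have hσS := (hmem _).mp (hSmap c hcp n hn)
    have hnp : ¬ (p:ℤ) ∣ (n:ℤ) := by
      rw [Int.natCast_dvd_natCast]; exact hnS.2.2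
    have hσp : ¬ (p:ℤ) ∣ (((c*n) % q : ℕ) : ℤ) := by
      rw [Int.natCast_dvd_natCast]; exact hσS.2.2
    have hcnp : ¬ (p:ℤ) ∣ (c:ℤ) * (n:ℤ) := by
      rw [show (c:ℤ) * (n:ℤ) = ((c*n : ℕ) : ℤ) by push_cast; ring, Int.natCast_dvd_natCast]
      exact fun h => ((hp.dvd_mul).mp h).elim hcp hnS.2.2
    have hmodq : (p:ℤ)^(a+1) ∣ (((c*n) % q : ℕ) : ℤ) - (c:ℤ) * (n:ℤ) := by
      have h1 := Nat.mod_add_div (c*n) q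
      have h2 : (((c*n) % q : ℕ) : ℤ) - (c:ℤ)*(n:ℤ) = -((q:ℕ) * ((c*n)/q : ℕ) : ℤ) := by
        push_cast
        have h3 : ((c*n) % q : ℤ) + (q:ℤ) * ((c*n)/q : ℤ) = (c:ℤ)*(n:ℤ) := by
          exact_mod_cast congrArg (Nat.cast : ℕ → ℤ) h1
        linarith
      rw [h2]
      refine dvd_neg.mpr ?_
      push_cast [hq]
      exact Dvd.intro _ rfl
    have hk1 : (p:ℤ)^π ∣ F ((c*n) % q)
        - ((c:ℤ)*(n:ℤ))^m * (((c:ℤ)*(n:ℤ))^dd - 1)^j :=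
      hker _ _ hσp hcnp hmodq
    have hk2 : (p:ℤ)^π ∣ ((c:ℤ)*(n:ℤ))^m * (((c:ℤ)*(n:ℤ))^dd - 1)^j - (c:ℤ)^m * F n := by
      have hcong : (p:ℤ)^π ∣ (((c:ℤ)*(n:ℤ))^dd - 1) - ((n:ℤ)^dd - 1) := by
        have h0 : (((c:ℤ)*(n:ℤ))^dd - 1) - ((n:ℤ)^dd - 1) = (n:ℤ)^dd * ((c:ℤ)^dd - 1) := by
          rw [mul_pow]; ring
        rw [h0]
        exact hcdd.mul_left _
      have hcongj : (p:ℤ)^π ∣ (((c:ℤ)*(n:ℤ))^dd - 1)^j - ((n:ℤ)^dd - 1)^j :=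
        hcong.trans (sub_dvd_pow_sub_pow _ _ j)
      have h0 : ((c:ℤ)*(n:ℤ))^m * (((c:ℤ)*(n:ℤ))^dd - 1)^j - (c:ℤ)^m * F n
          = (c:ℤ)^m * (n:ℤ)^m * ((((c:ℤ)*(n:ℤ))^dd - 1)^j - ((n:ℤ)^dd - 1)^j) := by
        rw [hF, mul_pow]; ring
      rw [h0]
      exact hcongj.mul_left _
    have := dvd_add hk1 hk2
    simpa using this
  have hsum : (p:ℤ)^π ∣ (1 - (c:ℤ)^m) * (∑ n ∈ S, F n) := by
    have h1 : (1 - (c:ℤ)^m) * (∑ n ∈ S, F n)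
        = ∑ n ∈ S, (F ((c*n) % q) - (c:ℤ)^m * F n) := by
      rw [Finset.sum_sub_distrib, hre, ← Finset.mul_sum]
      ring
    rw [h1]
    exact Finset.dvd_sum hterm
  have hprime : Prime (p:ℤ) := Nat.prime_iff_prime_int.mp hp
  have hcop2 : IsCoprime ((p:ℤ)^π) (1 - (c:ℤ)^m) := by
    apply IsCoprime.pow_left
    rw [Prime.coprime_iff_not_dvd hprime]
    intro h
    exact hcm (dvd_sub_comm.mp h)
  exact hcop2.dvd_of_dvd_mul_left hsum

end LinRelAux
theorem linearity_relation (p : ℕ) (hp : p.Prime) (hodd : Odd p)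
    (a t : ℕ) (k : ℕ) (hk : 0 < k) (hnd : ¬ (p - 1) ∣ k)
    (hdvd : 2 * p ^ (2 * a + 1) ∣ k)
    (v : ℕ) (hv : v = min (padicValNat p k - (2 * a + 1)) t)
    (r : ℤ) (hr : 0 < (k : ℤ) + (p : ℤ) ^ a * ((p : ℤ) - 1) * r) :
    (∑ n ∈ Finset.Icc 1 (p ^ (a + 1)),
        (n : ℤ) ^ ((((k : ℤ) + (p : ℤ) ^ a * ((p : ℤ) - 1) * r).toNat) * p ^ t)) ≡
      r * ∑ n ∈ Finset.Icc 1 (p ^ (a + 1)),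
        (n : ℤ) ^ ((k + p ^ a * (p - 1)) * p ^ t)
      [ZMOD (p : ℤ) ^ (3 * a + t + v + 2)] := by
  haveI : Fact p.Prime := ⟨hp⟩
  have hp3 : 3 ≤ p := by
    have h2 := hp.two_le
    rcases Nat.lt_or_ge p 3 with h | h
    · interval_cases p
      · exact absurd hodd (by decide)
    · exact h
  have hk0 : k ≠ 0 := hk.ne'
  have hpk : p ^ (2*a+1) ∣ k := (dvd_mul_left _ 2).trans hdvd
  have h2k : 2 ∣ k := (dvd_mul_right 2 _).trans hdvd
  have hval : 2*a+1 ≤ padicValNat p k := (padicValNat_dvd_iff_le hk0).mp hpk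
  have hvt : v ≤ t := by rw [hv]; exact min_le_right _ _
  have hvk : p ^ (2*a+1+v) ∣ k := by
    rw [padicValNat_dvd_iff_le hk0]
    have h1 : v ≤ padicValNat p k - (2*a+1) := by rw [hv]; exact min_le_left _ _
    omega
  have hkge : 2 * p ^ (2*a+1) ≤ k := Nat.le_of_dvd hk hdvd
  have hnum : 3*a+2*t+2 ≤ 2 * p ^ (a+t) := by
    calc 3*a+2*t+2 ≤ 3*(a+t)+2 := by omega
    _ ≤ 2 * 3^(a+t) := LinRelAux.three_mul_le _
    _ ≤ 2 * p^(a+t) := Nat.mul_le_mul_left _ (Nat.pow_le_pow_left hp3 _)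
  set q := p ^ (a+1) with hqdef
  set M := 3*a+t+v+2 with hMdef
  set φI : ℤ := (p:ℤ)^a * ((p:ℤ) - 1) with hφdef
  set φn := p^a * (p-1) with hφndef
  have hφcast : φI = (φn : ℤ) := by
    rw [hφdef, hφndef]
    push_cast [Nat.cast_sub hp.one_lt.le]
    ring
  have hφnn : 0 ≤ φI := by rw [hφcast]; positivity
  have hφeven : (2:ℤ) ∣ φI := by
    obtain ⟨w, hw⟩ := hodd
    rw [hφdef]
    refine Dvd.dvd.mul_left ?_ _
    have hw2 : ((p:ℤ) - 1) = 2*(w:ℤ) := by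
      have : (p:ℤ) = 2*(w:ℤ)+1 := by exact_mod_cast congrArg (Nat.cast : ℕ → ℤ) hw
      omega
    rw [hw2]
    exact dvd_mul_right 2 _
  have hφpm1 : ((p-1 : ℕ) : ℤ) ∣ φI := by
    rw [hφcast, hφndef]
    exact_mod_cast Int.natCast_dvd_natCast.mpr (Dvd.intro_left (p^a) rfl)
  have hpak : (p:ℕ)^a ∣ k := (pow_dvd_pow p (by omega)).trans hpk
  set Φ : ℤ → ℤ := fun x => ∑ n ∈ Finset.Icc 1 q, (n:ℤ)^(x.toNat * p^t) with hΦdef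
  -- second difference vanishing
  have hW2 : ∀ x : ℤ, 0 < x → (∃ jj : ℤ, x = (k:ℤ) + φI * jj) →
      (p:ℤ)^M ∣ Φ (x + 2*φI) - 2 * Φ (x + φI) + Φ x := by
    rintro x hx ⟨jj, hjj⟩
    have hXx : ((x.toNat : ℤ)) = x := Int.toNat_of_nonneg hx.le
    set X := x.toNat with hXdef
    have h2x : (2:ℤ) ∣ x := by
      rw [hjj]
      exact dvd_add (by exact_mod_cast h2k) (hφeven.mul_right jj)
    have hpax : ((p:ℤ))^a ∣ x := by
      rw [hjj]
      refine dvd_add ?_ ?_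
      · exact_mod_cast hpak
      · rw [hφdef]; exact (dvd_mul_right _ _).mul_right _
    have hndx : ¬ ((p-1:ℕ):ℤ) ∣ x := by
      intro hdvd
      apply hnd
      have h3 : ((p-1:ℕ):ℤ) ∣ (k:ℤ) := by
        have he : (k:ℤ) = x - φI * jj := by rw [hjj]; ring
        rw [he]
        exact dvd_sub hdvd (hφpm1.mul_right jj)
      exact_mod_cast h3
    have h2X : 2 ∣ X := by
      have h := h2x; rw [← hXx] at h; exact_mod_cast h
    have hpaX : p^a ∣ X := by
      have h := hpax; rw [← hXx] at h; exact_mod_cast h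
    have hndX : ¬ (p-1) ∣ X := by
      intro h; apply hndx; rw [← hXx]; exact_mod_cast h
    have hX1 : 1 ≤ X := by omega
    set m := X * p^t with hmdef
    set dd := (p-1) * p^(a+t) with hdddef
    have hddm : φn * p^t = dd := by
      rw [hφndef, hdddef, pow_add]; ring
    have hndm : ¬ (p-1) ∣ m := LinRelAux.nd_mul_pow hp t X hndX
    have hpatm : p^(a+t) ∣ m := by
      rw [hmdef, pow_add]
      exact mul_dvd_mul hpaX dvd_rfl
    have e1 : (x + φI).toNat = X + φn := by rw [hφcast]; omega
    have e2 : (x + 2*φI).toNat = X + 2*φn := by rw [hφcast]; omega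
    have hsum_eq : Φ (x + 2*φI) - 2 * Φ (x + φI) + Φ x
        = ∑ n ∈ Finset.Icc 1 q, ((n:ℤ)^m * ((n:ℤ)^dd - 1)^2) := by
      show (∑ n ∈ Finset.Icc 1 q, (n:ℤ)^((x + 2*φI).toNat * p^t))
          - 2 * (∑ n ∈ Finset.Icc 1 q, (n:ℤ)^((x + φI).toNat * p^t))
          + (∑ n ∈ Finset.Icc 1 q, (n:ℤ)^(x.toNat * p^t)) = _
      rw [e1, e2, ← hXdef, Finset.mul_sum, ← Finset.sum_sub_distrib, ← Finset.sum_add_distrib]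
      refine Finset.sum_congr rfl fun n hn => ?_
      have hexp2 : (X + 2*φn) * p^t = m + (dd + dd) := by
        rw [hmdef, ← hddm]; ring
      have hexp1 : (X + φn) * p^t = m + dd := by
        rw [hmdef, ← hddm]; ring
      rw [hexp1, hexp2, pow_add, pow_add, pow_add]
      ring
    rw [hsum_eq, ← Finset.sum_filter_add_sum_filter_not (Finset.Icc 1 q) (fun n => ¬ p ∣ n)]
    refine dvd_add ?_ ?_
    · refine (pow_dvd_pow (p:ℤ) (show M ≤ 3*a+2*t+2 by omega)).trans ?_
      refine LinRelAux.key_vanish hp a (3*a+2*t+2) m dd 2 (by omega) ?_ hndm ?_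
      · rw [hdddef]; exact dvd_mul_right _ _
      · intro x' y' hx' hy' hxy'
        exact LinRelAux.hker2 hp a t m hpatm x' y' hx' hy' hxy'
    · refine Finset.dvd_sum ?_
      intro n hn
      simp only [Finset.mem_filter, Finset.mem_Icc, not_not] at hn
      have hpn : p ∣ n := hn.2
      have hcop : Nat.Coprime 2 (p^a) :=
        Nat.Coprime.pow_right _ (Nat.coprime_two_left.mpr hodd)
      have h2pa : 2 * p^a ∣ X := Nat.Coprime.mul_dvd_of_dvd_of_dvd hcop h2X hpaX
      have hX2 : 2 * p^a ≤ X := Nat.le_of_dvd (by omega) h2pa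
      have hm2 : 2 * p^(a+t) ≤ m := by
        rw [hmdef, pow_add, ← mul_assoc]
        exact Nat.mul_le_mul_right _ hX2
      have hMm : M ≤ m := by omega
      refine Dvd.dvd.mul_right ?_ _
      calc (p:ℤ)^M ∣ (p:ℤ)^m := pow_dvd_pow _ hMm
      _ ∣ (n:ℤ)^m := pow_dvd_pow_of_dvd (Int.natCast_dvd_natCast.mpr hpn) m
  -- base value vanishing
  have hW0 : (p:ℤ)^M ∣ Φ ((k:ℤ)) := by
    show (p:ℤ)^M ∣ ∑ n ∈ Finset.Icc 1 q, (n:ℤ)^(((k:ℤ)).toNat * p^t)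
    rw [Int.toNat_natCast]
    rw [← Finset.sum_filter_add_sum_filter_not (Finset.Icc 1 q) (fun n => ¬ p ∣ n)]
    have hndm0 : ¬ (p-1) ∣ k * p^t := LinRelAux.nd_mul_pow hp t k hnd
    have hm0dvd : p^(2*a+1+v+t) ∣ k * p^t := by
      rw [pow_add]; exact mul_dvd_mul hvk dvd_rfl
    have hMeq : M = (a+1) + (2*a+1+v+t) := by omega
    refine dvd_add ?_ ?_
    · have h := LinRelAux.key_vanish hp a M (k * p^t) ((p-1)*p^(a+t)) 0 (by omega)
          (dvd_mul_right _ _) hndm0 ?_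
      · simpa using h
      · intro x' y' hx' hy' hxy'
        have h2 := LinRelAux.hpow_sub hp x' y' (a+1) (2*a+1+v+t) (k*p^t) (by omega) hm0dvd hxy'
        rw [← hMeq] at h2
        simpa using h2
    · refine Finset.dvd_sum ?_
      intro n hn
      simp only [Finset.mem_filter, Finset.mem_Icc, not_not] at hn
      have hpn : p ∣ n := hn.2
      have hc1 : 2*p^(2*a+1+t) ≤ k * p^t := by
        have : 2*p^(2*a+1) * p^t ≤ k * p^t := Nat.mul_le_mul_right _ hkge
        calc 2*p^(2*a+1+t) = 2*p^(2*a+1)*p^t := by rw [pow_add]; ring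
        _ ≤ k * p^t := this
      have hc2 : p^(a+t) ≤ p^(2*a+1+t) := Nat.pow_le_pow_right hp.pos (by omega)
      have hMm : M ≤ k * p^t := by omega
      exact (pow_dvd_pow (p:ℤ) hMm).trans
        (pow_dvd_pow_of_dvd (Int.natCast_dvd_natCast.mpr hpn) _)
  -- linear interpolation via second differences
  set K : ℤ → ℤ := fun i => (k:ℤ) + φI * i with hKdef
  set Ψ : ℤ → ℤ := fun i => Φ (K i) - i * Φ (K 1) + (i - 1) * Φ (K 0) with hΨdef
  have hK0 : K 0 = (k:ℤ) := by show (k:ℤ) + φI * 0 = (k:ℤ); ring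
  have hΨ0 : Ψ 0 = 0 := by
    show Φ (K 0) - 0 * Φ (K 1) + (0 - 1) * Φ (K 0) = 0; ring
  have hΨ1 : Ψ 1 = 0 := by
    show Φ (K 1) - 1 * Φ (K 1) + (1 - 1) * Φ (K 0) = 0; ring
  have hKpos : ∀ i : ℤ, 0 ≤ i → 0 < K i := by
    intro i hi
    show 0 < (k:ℤ) + φI * i
    have h1 : 0 ≤ φI * i := mul_nonneg hφnn hi
    have h2 : (1:ℤ) ≤ (k:ℤ) := by exact_mod_cast hk
    linarith
  have hrec : ∀ i : ℤ, 0 < K i → (p:ℤ)^M ∣ Ψ (i+2) - 2*Ψ (i+1) + Ψ i := by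
    intro i hi
    have h := hW2 (K i) hi ⟨i, rfl⟩
    have he : Ψ (i+2) - 2*Ψ (i+1) + Ψ i
        = Φ (K i + 2*φI) - 2 * Φ (K i + φI) + Φ (K i) := by
      show (Φ (K (i+2)) - (i+2) * Φ (K 1) + ((i+2) - 1) * Φ (K 0))
        - 2*(Φ (K (i+1)) - (i+1) * Φ (K 1) + ((i+1) - 1) * Φ (K 0))
        + (Φ (K i) - i * Φ (K 1) + (i - 1) * Φ (K 0)) = _
      have e1 : K (i+1) = K i + φI := by
        show (k:ℤ) + φI*(i+1) = ((k:ℤ) + φI*i) + φI; ring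
      have e2 : K (i+2) = K i + 2*φI := by
        show (k:ℤ) + φI*(i+2) = ((k:ℤ) + φI*i) + 2*φI; ring
      rw [e1, e2]; ring
    rw [he]; exact h
  have hup : ∀ j : ℕ, (p:ℤ)^M ∣ Ψ j ∧ (p:ℤ)^M ∣ Ψ (j+1) := by
    intro j
    induction j with
    | zero =>
      constructor
      · rw [show ((0:ℕ):ℤ) = 0 from by norm_num, hΨ0]
        exact dvd_zero _
      · rw [show ((0:ℕ):ℤ)+1 = 1 from by norm_num, hΨ1]
        exact dvd_zero _
    | succ n ih =>
      have ha2 : ((n+1 : ℕ) : ℤ) = (n:ℤ) + 1 := by push_cast; ring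
      constructor
      · rw [ha2]; exact ih.2
      · have h := hrec n (hKpos n (by positivity))
        have ha1 : ((n+1 : ℕ) : ℤ) + 1 = (n:ℤ) + 2 := by push_cast; ring
        rw [ha1]
        have hd : Ψ ((n:ℤ)+2) = (Ψ ((n:ℤ)+2) - 2*Ψ ((n:ℤ)+1) + Ψ (n:ℤ))
            + 2*Ψ ((n:ℤ)+1) - Ψ (n:ℤ) := by ring
        rw [hd]
        exact dvd_sub (dvd_add h (ih.2.mul_left 2)) ih.1
  have hdown : ∀ j : ℕ, 0 < K (-(j:ℤ)) → (p:ℤ)^M ∣ Ψ (-(j:ℤ)) ∧ (p:ℤ)^M ∣ Ψ (-(j:ℤ)+1) := by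
    intro j
    induction j with
    | zero =>
      intro _
      constructor
      · rw [show -((0:ℕ):ℤ) = 0 from by norm_num, hΨ0]
        exact dvd_zero _
      · rw [show -((0:ℕ):ℤ)+1 = 1 from by norm_num, hΨ1]
        exact dvd_zero _
    | succ n ih =>
      intro hpos
      have hKmono : K (-(n:ℤ)) = K (-((n+1:ℕ):ℤ)) + φI := by
        show (k:ℤ) + φI * (-(n:ℤ)) = ((k:ℤ) + φI * (-((n+1:ℕ):ℤ))) + φI
        push_cast; ring
      have hposn : 0 < K (-(n:ℤ)) := by
        rw [hKmono]; linarith [hφnn, hpos]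
      obtain ⟨h1, h2⟩ := ih hposn
      have h := hrec (-((n+1:ℕ):ℤ)) hpos
      have ha1 : (-((n+1:ℕ):ℤ)) + 2 = -(n:ℤ) + 1 := by push_cast; ring
      have ha2 : (-((n+1:ℕ):ℤ)) + 1 = -(n:ℤ) := by push_cast; ring
      rw [ha1, ha2] at h
      constructor
      · have hd : Ψ (-((n+1:ℕ):ℤ)) = (Ψ (-(n:ℤ)+1) - 2*Ψ (-(n:ℤ)) + Ψ (-((n+1:ℕ):ℤ)))
            - Ψ (-(n:ℤ)+1) + 2*Ψ (-(n:ℤ)) := by ring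
        rw [hd]
        exact dvd_add (dvd_sub h h2) (h1.mul_left 2)
      · rw [ha2]
        exact h1
  have hKr : 0 < K r := hr
  have hΨr : (p:ℤ)^M ∣ Ψ r := by
    rcases le_or_gt 0 r with hr0 | hr0
    · obtain ⟨j, rfl⟩ := Int.eq_ofNat_of_zero_le hr0
      exact (hup j).1
    · have hneg : r = -(((-r).toNat : ℤ)) := by omega
      have h := hdown (-r).toNat (by rw [← hneg]; exact hKr)
      rw [hneg]
      exact h.1
  have hRHS : (∑ n ∈ Finset.Icc 1 q, (n:ℤ)^((k + p^a*(p-1)) * p^t)) = Φ (K 1) := by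
    have hK1 : K 1 = ((k + p^a*(p-1) : ℕ) : ℤ) := by
      show (k:ℤ) + φI * 1 = _
      rw [hφcast, hφndef]; push_cast; ring
    show _ = ∑ n ∈ Finset.Icc 1 q, (n:ℤ)^((K 1).toNat * p^t)
    rw [hK1, Int.toNat_natCast]
  rw [Int.modEq_iff_dvd, hRHS]
  show (p:ℤ)^M ∣ r * Φ (K 1) - Φ (K r)
  have hfin : r * Φ (K 1) - Φ (K r)
      = -(Φ (K r) - r * Φ (K 1) + (r - 1) * Φ (K 0)) + (r-1) * Φ (K 0) := by
    ring
  rw [hfin]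
  refine dvd_add (dvd_neg.mpr hΨr) ?_
  rw [hK0]
  exact hW0.mul_left _
end

section
/- (Kummer's congruence, basic form) Let p be a prime and r, s even positive integers with (p-1) not dividing r and r ≡ s (mod p-1). Then B_r / r ≡ B_s / s (mod p), i.e., the p-adic valuation of B_r/r - B_s/s is at least 1. -/
open Finset

variable {p : ℕ}



lemma five_pow_ge (k : ℕ) (hk : 1 ≤ k) : k + 4 ≤ 5 ^ k := by
  induction k with
  | zero => omega
  | succ n ih =>
    rcases Nat.eq_zero_or_pos n with h | h
    · subst h; norm_num
    · have h1 := ih h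
      calc n + 1 + 4 ≤ 5 ^ n + 1 := by omega
        _ ≤ 5 ^ (n+1) := by rw [pow_succ]; nlinarith [Nat.one_le_pow n 5 (by norm_num)]

lemma val_add_four_le (hp : p.Prime) (hp5 : 5 ≤ p) {j : ℕ} (hj : 1 ≤ j) :
    padicValNat p j = 0 ∨ padicValNat p j + 4 ≤ j := by
  rcases Nat.eq_zero_or_pos (padicValNat p j) with h | h
  · exact Or.inl h
  · right
    haveI : Fact p.Prime := ⟨hp⟩
    have h1 : p ^ padicValNat p j ∣ j := pow_padicValNat_dvd
    have h2 : p ^ padicValNat p j ≤ j := Nat.le_of_dvd hj h1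
    have h3 : 5 ^ padicValNat p j ≤ p ^ padicValNat p j :=
      Nat.pow_le_pow_left hp5 _
    have := five_pow_ge _ h
    omega

lemma pnorm_pow [Fact p.Prime] (q : ℚ) (n : ℕ) : padicNorm p (q ^ n) = padicNorm p q ^ n := by
  induction n with
  | zero => simp [padicNorm.one]
  | succ n ih => rw [pow_succ, padicNorm.mul, ih, pow_succ]

lemma pnorm_p_pow [Fact p.Prime] (n : ℕ) : padicNorm p ((p:ℚ) ^ n) = (p:ℚ) ^ (-(n:ℤ)) := by
  rw [pnorm_pow, padicNorm.padicNorm_p_of_prime, inv_pow, ← zpow_natCast, ← zpow_neg]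

lemma pnorm_nat_le [Fact p.Prime] (j : ℕ) :
    padicNorm p (j:ℚ) ≤ (p:ℚ) ^ (-(padicValNat p j : ℤ)) := by
  have h1 : ((p ^ padicValNat p j : ℕ) : ℤ) ∣ ((j:ℕ) : ℤ) :=
    Int.natCast_dvd_natCast.mpr pow_padicValNat_dvd
  have := padicNorm.dvd_iff_norm_le.mp h1
  simpa using this

lemma pnorm_inv [Fact p.Prime] (q : ℚ) : padicNorm p q⁻¹ = (padicNorm p q)⁻¹ := by
  rcases eq_or_ne q 0 with rfl | h
  · simp [padicNorm.zero]
  · have h2 := padicNorm.mul (p := p) q q⁻¹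
    rw [mul_inv_cancel₀ h, padicNorm.one] at h2
    exact (inv_eq_of_mul_eq_one_right h2.symm).symm

lemma pnorm_nat_inv (hp : p.Prime) (j : ℕ) (hj : j ≠ 0) :
    padicNorm p ((j:ℚ))⁻¹ = (p:ℚ) ^ ((padicValNat p j : ℤ)) := by
  haveI : Fact p.Prime := ⟨hp⟩
  have hq : ((j:ℚ))⁻¹ ≠ 0 := by
    simp [hj]
  rw [padicNorm.eq_zpow_of_nonzero hq, padicValRat.inv, padicValRat.of_nat, neg_neg]

lemma pnorm_mul_le [Fact p.Prime] {a b x y : ℚ} (ha : padicNorm p a ≤ x)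
    (hb : padicNorm p b ≤ y) (hx : 0 ≤ x) : padicNorm p (a * b) ≤ x * y := by
  rw [padicNorm.mul]
  exact mul_le_mul ha hb (padicNorm.nonneg _) hx

-- the choose identity as rationals
lemma choose_div_eq (m i : ℕ) (hi : i < m + 1) :
    (((m+1).choose i : ℚ)) / (m+1) = (m.choose i : ℚ) / (m+1-i : ℕ) := by
  have key : (m+1) * m.choose i = (m+1).choose i * (m+1-i) := by
    have h1 := Nat.add_one_mul_choose_eq m i
    have h2 := Nat.choose_succ_right_eq (m+1) i
    exact h1.trans h2
  have h0 : ((m+1 : ℕ) : ℚ) ≠ 0 := by positivity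
  have h0' : ((m+1-i : ℕ) : ℚ) ≠ 0 := by
    have : 0 < m + 1 - i := by omega
    positivity
  field_simp
  exact_mod_cast key.symm


lemma pnorm_ppow_div (hp : p.Prime) {j : ℕ} (hj : 1 ≤ j) (e : ℕ) :
    padicNorm p ((p:ℚ)^e * ((j:ℚ))⁻¹) = (p:ℚ) ^ ((padicValNat p j : ℤ) - e) := by
  haveI : Fact p.Prime := ⟨hp⟩
  rw [padicNorm.mul, pnorm_p_pow, pnorm_nat_inv hp j (by omega), ← zpow_add₀
    (by exact_mod_cast hp.ne_zero : (p:ℚ) ≠ 0)]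
  ring_nf

lemma zpow_le_one' (hp : p.Prime) {a : ℤ} (ha : a ≤ 0) : (p:ℚ) ^ a ≤ 1 := by
  have h1 : (1:ℚ) ≤ p := by exact_mod_cast hp.one_lt.le
  calc (p:ℚ) ^ a ≤ (p:ℚ) ^ (0:ℤ) := zpow_le_zpow_right₀ h1 ha
    _ = 1 := zpow_zero _

lemma zpow_mono' (hp : p.Prime) {a b : ℤ} (h : a ≤ b) : (p:ℚ) ^ a ≤ (p:ℚ) ^ b :=
  zpow_le_zpow_right₀ (by exact_mod_cast hp.one_lt.le) h

-- weak von Staudt-Clausen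
lemma bernoulli_norm_le (hp : p.Prime) (hp5 : 5 ≤ p) (m : ℕ) :
    padicNorm p (bernoulli m) ≤ p := by
  haveI : Fact p.Prime := ⟨hp⟩
  induction m using Nat.strong_induction_on with
  | _ m ih =>
  have faul := sum_range_pow p m
  rw [Finset.sum_range_succ] at faul
  have hm1 : ((m+1 : ℕ) : ℚ) ≠ 0 := by positivity
  have hlast : bernoulli m * ((m + 1).choose m) * (p:ℚ) ^ (m + 1 - m) / (m+1)
      = bernoulli m * p := by
    rw [Nat.choose_succ_self_right]
    have h2 : m + 1 - m = 1 := by omega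
    rw [h2, pow_one]
    push_cast
    field_simp
  have key : bernoulli m * p = (∑ k ∈ range p, (k:ℚ)^m)
      - ∑ i ∈ range m, bernoulli i * ((m + 1).choose i) * (p:ℚ) ^ (m + 1 - i) / (m+1) := by
    rw [faul, hlast]
    ring
  have hS : padicNorm p (∑ k ∈ range p, (k:ℚ)^m) ≤ 1 := by
    apply padicNorm.sum_le' _ zero_le_one
    intro k _
    have : ((k:ℚ))^m = ((k^m : ℕ) : ℚ) := by push_cast; ring
    rw [this]
    exact padicNorm.of_nat _
  have hT : padicNorm p (∑ i ∈ range m,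
      bernoulli i * ((m + 1).choose i) * (p:ℚ) ^ (m + 1 - i) / (m+1)) ≤ 1 := by
    apply padicNorm.sum_le' _ zero_le_one
    intro i hi
    rw [Finset.mem_range] at hi
    set j := m + 1 - i with hj
    have hj1 : 1 ≤ j := by omega
    have hterm : bernoulli i * ((m + 1).choose i) * (p:ℚ) ^ (m + 1 - i) / (m+1)
        = bernoulli i * (m.choose i) * ((p:ℚ) ^ j * ((j:ℕ):ℚ)⁻¹) := by
      have h3 := choose_div_eq m i (by omega)
      calc bernoulli i * ((m + 1).choose i) * (p:ℚ) ^ (m + 1 - i) / (m+1)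
          = bernoulli i * (p:ℚ) ^ j * ((((m+1).choose i : ℚ)) / (m+1)) := by
            push_cast; ring
        _ = bernoulli i * (p:ℚ) ^ j * ((m.choose i : ℚ) / (j:ℕ)) := by rw [h3]
        _ = bernoulli i * (m.choose i) * ((p:ℚ) ^ j * ((j:ℕ):ℚ)⁻¹) := by
            push_cast; ring
    rw [hterm]
    have hb : padicNorm p (bernoulli i * (m.choose i)) ≤ (p:ℚ) := by
      have := pnorm_mul_le (p := p) (ih i hi) (padicNorm.of_nat (m.choose i))
        (by positivity : (0:ℚ) ≤ p)
      simpa using this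
    have hc : padicNorm p ((p:ℚ) ^ j * ((j:ℕ):ℚ)⁻¹)
        ≤ (p:ℚ) ^ (-1 : ℤ) := by
      rw [pnorm_ppow_div hp hj1]
      apply zpow_mono' hp
      rcases val_add_four_le hp hp5 hj1 with h | h <;> omega
    calc padicNorm p (bernoulli i * (m.choose i) * ((p:ℚ) ^ j * ((j:ℕ):ℚ)⁻¹))
        ≤ (p:ℚ) * (p:ℚ)^(-1:ℤ) := pnorm_mul_le hb hc (by positivity)
      _ = 1 := by
          rw [zpow_neg_one, mul_inv_cancel₀ (by exact_mod_cast hp.ne_zero : (p:ℚ) ≠ 0)]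
  have hfin : padicNorm p (bernoulli m * p) ≤ 1 := by
    rw [key]; exact le_trans padicNorm.sub (max_le hS hT)
  rw [padicNorm.mul, padicNorm.padicNorm_p_of_prime] at hfin
  have hp0 : (0:ℚ) < p := by exact_mod_cast hp.pos
  calc padicNorm p (bernoulli m) = padicNorm p (bernoulli m) * (p:ℚ)⁻¹ * p := by
        field_simp
    _ ≤ 1 * p := by
        apply mul_le_mul_of_nonneg_right hfin hp0.le
    _ = p := one_mul _

lemma bound_arith1 (N j v : ℕ) (hN : 1 ≤ N) (hj : 3 ≤ j) (hv : v = 0 ∨ v + 4 ≤ j) :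
    v + 1 + 2*N ≤ N*j := by
  have h2 : N*(j-2) ≥ 1*(j-2) := Nat.mul_le_mul_right _ hN
  have h3 : N*j = N*(j-2) + 2*N := by
    have : j - 2 + 2 = j := by omega
    calc N*j = N*((j-2)+2) := by rw [this]
      _ = N*(j-2) + 2*N := by ring
  omega

lemma bound_arith2 (N j v : ℕ) (hN : 1 ≤ N) (hj : 2 ≤ j) (hv : v = 0 ∨ v + 4 ≤ j) :
    v + 2*N ≤ N*j := by
  have h2 : N*(j-2) ≥ 1*(j-2) := Nat.mul_le_mul_right _ hN
  have h3 : N*j = N*(j-2) + 2*N := by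
    have : j - 2 + 2 = j := by omega
    calc N*j = N*((j-2)+2) := by rw [this]
      _ = N*(j-2) + 2*N := by ring
  omega

lemma bernoulli_odd_zero {n : ℕ} (h : Odd n) (h1 : 1 < n) : bernoulli n = 0 := by
  rw [bernoulli_eq_bernoulli'_of_ne_one (by omega), bernoulli'_eq_zero_of_odd h h1]

lemma faulhaber_est (hp : p.Prime) (hp5 : 5 ≤ p) {m N : ℕ} (hm : 2 ≤ m) (hme : Even m)
    (hN : 1 ≤ N) :
    padicNorm p ((∑ k ∈ range (p^N), (k:ℚ)^m) - (p:ℚ)^N * bernoulli m)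
      ≤ (p:ℚ)^(-(2*N:ℤ)) := by
  haveI : Fact p.Prime := ⟨hp⟩
  have hp0 : (p:ℚ) ≠ 0 := by exact_mod_cast hp.ne_zero
  have faul := sum_range_pow (p^N) m
  rw [Finset.sum_range_succ] at faul
  have hm1 : ((m+1 : ℕ) : ℚ) ≠ 0 := by positivity
  have hlast : bernoulli m * ((m + 1).choose m) * ((p^N : ℕ):ℚ) ^ (m + 1 - m) / (m+1)
      = (p:ℚ)^N * bernoulli m := by
    rw [Nat.choose_succ_self_right]
    have h2 : m + 1 - m = 1 := by omega
    rw [h2, pow_one]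
    push_cast
    field_simp
  have key : (∑ k ∈ range (p^N), (k:ℚ)^m) - (p:ℚ)^N * bernoulli m
      = ∑ i ∈ range m, bernoulli i * ((m + 1).choose i) * ((p^N : ℕ):ℚ) ^ (m + 1 - i) / (m+1) := by
    rw [faul, hlast]
    ring
  rw [key]
  apply padicNorm.sum_le' _ (by positivity)
  intro i hi
  rw [Finset.mem_range] at hi
  set j := m + 1 - i with hjdef
  have hj1 : 1 ≤ j := by omega
  have hterm : bernoulli i * ((m + 1).choose i) * ((p^N : ℕ):ℚ) ^ (m + 1 - i) / (m+1)
      = bernoulli i * (m.choose i) * ((p:ℚ) ^ (N*j) * ((j:ℕ):ℚ)⁻¹) := by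
    have h3 := choose_div_eq m i (by omega)
    calc bernoulli i * ((m + 1).choose i) * ((p^N : ℕ):ℚ) ^ (m + 1 - i) / (m+1)
        = bernoulli i * (p:ℚ) ^ (N*j) * ((((m+1).choose i : ℚ)) / (m+1)) := by
          push_cast
          rw [← pow_mul]
          ring
      _ = bernoulli i * (p:ℚ) ^ (N*j) * ((m.choose i : ℚ) / (j:ℕ)) := by rw [h3]
      _ = bernoulli i * (m.choose i) * ((p:ℚ) ^ (N*j) * ((j:ℕ):ℚ)⁻¹) := by
          push_cast; ring
  rw [hterm]
  have hvj := val_add_four_le hp hp5 hj1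
  rcases Nat.even_or_odd i with hie | hio
  · -- i even: j odd >= 3, use |B_i| <= p
    have hj3 : 3 ≤ j := by
      rcases hme with ⟨m2, hm2⟩
      rcases hie with ⟨i2, hi2⟩
      omega
    have hb : padicNorm p (bernoulli i * (m.choose i)) ≤ (p:ℚ) := by
      have := pnorm_mul_le (p := p) (bernoulli_norm_le hp hp5 i)
        (padicNorm.of_nat (m.choose i)) (by positivity : (0:ℚ) ≤ p)
      simpa using this
    have hc : padicNorm p ((p:ℚ) ^ (N*j) * ((j:ℕ):ℚ)⁻¹)
        ≤ (p:ℚ) ^ (-(1:ℤ) - 2*N) := by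
      rw [pnorm_ppow_div hp hj1]
      apply zpow_mono' hp
      have h5 := bound_arith1 N j (padicValNat p j) hN hj3 hvj
      omega
    calc padicNorm p (bernoulli i * (m.choose i) * ((p:ℚ) ^ (N*j) * ((j:ℕ):ℚ)⁻¹))
        ≤ (p:ℚ) * (p:ℚ)^(-(1:ℤ) - 2*N) := pnorm_mul_le hb hc (by positivity)
      _ = (p:ℚ)^((1:ℤ) + (-(1:ℤ) - 2*N)) := by rw [zpow_add₀ hp0, zpow_one]
      _ = (p:ℚ)^(-(2*N:ℤ)) := by ring_nf
  · rcases eq_or_lt_of_le (by exact hio.pos : 1 ≤ i) with h1 | h1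
    · -- i = 1 : j = m, |B_1| <= 1
      have hi1 : i = 1 := h1.symm
      subst hi1
      have hjm : j = m := by omega
      have hb : padicNorm p (bernoulli 1 * (m.choose 1)) ≤ 1 := by
        have hb1 : padicNorm p (bernoulli 1) ≤ 1 := by
          rw [bernoulli_one]
          have : (-1/2 : ℚ) = -(((1:ℕ):ℚ) * ((2:ℕ):ℚ)⁻¹) := by norm_num
          rw [this, padicNorm.neg, padicNorm.mul, pnorm_nat_inv hp 2 (by norm_num)]
          have hv2 : padicValNat p 2 = 0 := by
            apply padicValNat.eq_zero_of_not_dvd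
            intro h
            have := Nat.le_of_dvd (by norm_num) h
            omega
          rw [hv2]
          simpa using padicNorm.of_nat 1
        have := pnorm_mul_le (p := p) hb1 (padicNorm.of_nat (m.choose 1)) zero_le_one
        simpa using this
      have hc : padicNorm p ((p:ℚ) ^ (N*j) * ((j:ℕ):ℚ)⁻¹) ≤ (p:ℚ) ^ (-(2*N:ℤ)) := by
        rw [pnorm_ppow_div hp hj1]
        apply zpow_mono' hp
        have h5 := bound_arith2 N j (padicValNat p j) hN (hjm ▸ hm) hvj
        omega
      calc padicNorm p (bernoulli 1 * (m.choose 1) * ((p:ℚ) ^ (N*j) * ((j:ℕ):ℚ)⁻¹))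
          ≤ 1 * (p:ℚ)^(-(2*N:ℤ)) := pnorm_mul_le hb hc zero_le_one
        _ = (p:ℚ)^(-(2*N:ℤ)) := one_mul _
    · -- i odd >= 3 : bernoulli i = 0
      rw [bernoulli_odd_zero hio h1, zero_mul, zero_mul, padicNorm.zero]
      positivity

lemma pow_add_sq (x y : ℤ) (m : ℕ) :
    ∃ c, (x+y)^m = x^m + m*x^(m-1)*y + y^2*c := by
  induction m with
  | zero => exact ⟨0, by norm_num⟩
  | succ m ih =>
    rcases Nat.eq_zero_or_pos m with rfl | hm
    · exact ⟨0, by ring⟩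
    · obtain ⟨c, hc⟩ := ih
      refine ⟨m*x^(m-1) + c*(x+y), ?_⟩
      have hx : x^(m-1)*x = x^m := by
        rw [← pow_succ]
        congr 1
        omega
      have hm' : (m:ℤ) + 1 = ((m+1 : ℕ) : ℤ) := by push_cast; ring
      calc (x+y)^(m+1) = (x+y)^m * (x+y) := by rw [pow_succ]
        _ = (x^m + m*x^(m-1)*y + y^2*c) * (x+y) := by rw [hc]
        _ = x^(m+1) + (m:ℤ)*(x^(m-1)*x)*y + x^m*y + y^2*(m*x^(m-1) + c*(x+y)) := by ring
        _ = x^(m+1) + ((m:ℤ)+1)*x^m*y + y^2*(m*x^(m-1) + c*(x+y)) := by rw [hx]; ring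
        _ = x^(m+1) + ((m+1:ℕ):ℤ)*x^((m+1)-1)*y + y^2*(m*x^(m-1) + c*(x+y)) := by
            rw [← hm']; norm_num

lemma perm_sum (n a : ℕ) (hn : 2 ≤ n) (ha : Nat.Coprime a n) (f : ℕ → ℤ) :
    ∑ j ∈ range n, f (j * a % n) = ∑ j ∈ range n, f j := by
  obtain ⟨b, -, hb⟩ := Nat.exists_mul_mod_eq_one_of_coprime ha hn
  apply Finset.sum_nbij' (fun j => j * a % n) (fun k => k * b % n)
  · intro j hj
    exact Finset.mem_range.mpr (Nat.mod_lt _ (by omega))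
  · intro j hj
    exact Finset.mem_range.mpr (Nat.mod_lt _ (by omega))
  · intro j hj
    rw [Finset.mem_range] at hj
    have h1 : j * a % n * b % n = j * a * b % n := Nat.mod_mul_mod _ _ _
    have h2 : j * a * b % n = j % n := by
      have : j * (a * b) ≡ j * 1 [MOD n] := Nat.ModEq.mul_left j (by
        show a * b ≡ 1 [MOD n]
        unfold Nat.ModEq
        rw [hb, Nat.mod_eq_of_lt hn])
      calc j * a * b % n = j * (a*b) % n := by ring_nf
        _ = j * 1 % n := this
        _ = j % n := by rw [mul_one]
    rw [h1, h2, Nat.mod_eq_of_lt hj]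
  · intro j hj
    rw [Finset.mem_range] at hj
    have h1 : j * b % n * a % n = j * b * a % n := Nat.mod_mul_mod _ _ _
    have h2 : j * b * a % n = j % n := by
      have : j * (a * b) ≡ j * 1 [MOD n] := Nat.ModEq.mul_left j (by
        show a * b ≡ 1 [MOD n]
        unfold Nat.ModEq
        rw [hb, Nat.mod_eq_of_lt hn])
      calc j * b * a % n = j * (a*b) % n := by ring_nf
        _ = j * 1 % n := this
        _ = j % n := by rw [mul_one]
    rw [h1, h2, Nat.mod_eq_of_lt hj]
  · intro j hj; rfl

lemma voronoi_dvd (n a m : ℕ) (hn : 2 ≤ n) (ha : Nat.Coprime a n) (hm : 1 ≤ m) :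
    ((n:ℤ))^2 ∣ (((a:ℤ)^m - 1) * ∑ j ∈ range n, (j:ℤ)^m
      - (m:ℤ) * n * (a:ℤ)^(m-1) * ∑ j ∈ range n, (j:ℤ)^(m-1) * ((j * a / n : ℕ) : ℤ)) := by
  have hperm : ∑ j ∈ range n, ((j * a % n : ℕ) : ℤ)^m = ∑ j ∈ range n, (j:ℤ)^m :=
    perm_sum n a hn ha (fun k => (k:ℤ)^m)
  have key : ((a:ℤ)^m - 1) * ∑ j ∈ range n, (j:ℤ)^m
      - (m:ℤ) * n * (a:ℤ)^(m-1) * ∑ j ∈ range n, (j:ℤ)^(m-1) * ((j * a / n : ℕ) : ℤ)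
      = ∑ j ∈ range n, (((j:ℤ) * a)^m - ((j * a % n : ℕ) : ℤ)^m
          - (m:ℤ) * n * ((j * a / n : ℕ) : ℤ) * ((j:ℤ) * a)^(m-1)) := by
    rw [Finset.sum_sub_distrib, Finset.sum_sub_distrib, hperm]
    rw [sub_mul, one_mul, Finset.mul_sum, Finset.mul_sum]
    congr 1
    · congr 1
      apply Finset.sum_congr rfl
      intro j _
      rw [mul_pow]
      ring
    · apply Finset.sum_congr rfl
      intro j _
      rw [mul_pow]
      ring
  rw [key]
  apply Finset.dvd_sum
  intro j _
  obtain ⟨c, hc⟩ := pow_add_sq ((j * a % n : ℕ) : ℤ) ((n:ℤ) * ((j * a / n : ℕ) : ℤ)) m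
  have hqr : ((j * a % n : ℕ) : ℤ) + (n:ℤ) * ((j * a / n : ℕ) : ℤ) = (j:ℤ) * a := by
    have h := congrArg (Nat.cast : ℕ → ℤ) (Nat.div_add_mod (j * a) n)
    push_cast at h ⊢
    linarith
  rw [hqr] at hc
  have hmod : (n:ℤ) ∣ (((j:ℤ) * a)^(m-1) - ((j * a % n : ℕ) : ℤ)^(m-1)) := by
    have h1 : ((j * a % n : ℕ) : ℤ) ≡ ((j:ℤ) * a) [ZMOD (n:ℤ)] := by
      have : ((j:ℤ) * a) = ((j * a : ℕ) : ℤ) := by push_cast; ring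
      rw [this]
      show ((j * a % n : ℕ) : ℤ) % n = ((j * a : ℕ) : ℤ) % n
      push_cast
      exact Int.emod_emod_of_dvd _ dvd_rfl
    exact (h1.pow (m-1)).dvd
  obtain ⟨d, hd⟩ := hmod
  refine ⟨((j * a / n : ℕ) : ℤ)^2 * c - (m:ℤ) * ((j * a / n : ℕ) : ℤ) * d, ?_⟩
  have expand : ((j:ℤ) * a)^m - ((j * a % n : ℕ) : ℤ)^m
      - (m:ℤ) * n * ((j * a / n : ℕ) : ℤ) * ((j:ℤ) * a)^(m-1)
      = (n:ℤ)^2 * (((j * a / n : ℕ) : ℤ)^2 * c)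
        - (m:ℤ) * n * ((j * a / n : ℕ) : ℤ)
          * (((j:ℤ) * a)^(m-1) - ((j * a % n : ℕ) : ℤ)^(m-1)) := by
    rw [hc]
    ring
  rw [expand, hd]
  ring

noncomputable def Tsum (p : ℕ) (N a m : ℕ) : ℤ :=
  ∑ j ∈ range (p^N), (j:ℤ)^(m-1) * ((j * a / p^N : ℕ) : ℤ)

lemma voronoi_norm (hp : p.Prime) (hp5 : 5 ≤ p) {m N : ℕ} (hm : 2 ≤ m) (hme : Even m)
    (hN : 1 ≤ N) (a : ℕ) (ha : ¬ p ∣ a) :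
    padicNorm p (((a:ℚ)^m - 1) * bernoulli m
      - (m:ℚ) * (a:ℚ)^(m-1) * ((Tsum p N a m : ℤ) : ℚ)) ≤ (p:ℚ)^(-(N:ℤ)) := by
  haveI : Fact p.Prime := ⟨hp⟩
  have hp0 : (p:ℚ) ≠ 0 := by exact_mod_cast hp.ne_zero
  have hp1 : (1:ℚ) < p := by exact_mod_cast hp.one_lt
  have hcop : Nat.Coprime a (p^N) :=
    Nat.Coprime.pow_right N ((hp.coprime_iff_not_dvd.mpr ha).symm)
  have hn2 : 2 ≤ p^N := le_trans (by omega) (Nat.le_self_pow (by omega) p)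
  have hdvd := voronoi_dvd (p^N) a m hn2 hcop (by omega)
  -- convert to ℚ norm bound
  have hAB : padicNorm p ((((a:ℤ)^m - 1) * ∑ j ∈ range (p^N), (j:ℤ)^m
      - (m:ℤ) * (p^N : ℕ) * (a:ℤ)^(m-1) * Tsum p N a m : ℤ) : ℚ) ≤ (p:ℚ)^(-(2*N:ℤ)) := by
    have h2 : ((p ^ (2*N) : ℕ) : ℤ) ∣ (((a:ℤ)^m - 1) * ∑ j ∈ range (p^N), (j:ℤ)^m
        - (m:ℤ) * (p^N : ℕ) * (a:ℤ)^(m-1) * Tsum p N a m) := by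
      have : ((p ^ (2*N) : ℕ) : ℤ) = ((p^N : ℕ) : ℤ)^2 := by
        push_cast
        rw [← pow_mul]
        ring
      rw [this]
      exact hdvd
    have h4 := padicNorm.dvd_iff_norm_le.mp h2
    have h3 : (-(2*N:ℕ) : ℤ) = -(2*N:ℤ) := by push_cast; ring
    rw [h3] at h4
    exact h4
  have keyq : (p:ℚ)^N * (((a:ℚ)^m - 1) * bernoulli m
        - (m:ℚ) * (a:ℚ)^(m-1) * ((Tsum p N a m : ℤ) : ℚ))
      = ((a:ℚ)^m - 1) * ((p:ℚ)^N * bernoulli m - ∑ k ∈ range (p^N), (k:ℚ)^m)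
        + ((((a:ℤ)^m - 1) * ∑ j ∈ range (p^N), (j:ℤ)^m
          - (m:ℤ) * (p^N : ℕ) * (a:ℤ)^(m-1) * Tsum p N a m : ℤ) : ℚ) := by
    push_cast
    ring
  have h1 : padicNorm p (((a:ℚ)^m - 1) * ((p:ℚ)^N * bernoulli m - ∑ k ∈ range (p^N), (k:ℚ)^m))
      ≤ (p:ℚ)^(-(2*N:ℤ)) := by
    have hb : padicNorm p ((a:ℚ)^m - 1) ≤ 1 := by
      have := padicNorm.of_int (p := p) ((a:ℤ)^m - 1)
      convert this using 2
      push_cast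
      ring
    have hc : padicNorm p ((p:ℚ)^N * bernoulli m - ∑ k ∈ range (p^N), (k:ℚ)^m)
        ≤ (p:ℚ)^(-(2*N:ℤ)) := by
      have := faulhaber_est hp hp5 hm hme hN
      rw [show (p:ℚ)^N * bernoulli m - ∑ k ∈ range (p^N), (k:ℚ)^m
        = -((∑ k ∈ range (p^N), (k:ℚ)^m) - (p:ℚ)^N * bernoulli m) by ring, padicNorm.neg]
      exact this
    have := pnorm_mul_le hb hc zero_le_one
    simpa using this
  have hfull : padicNorm p ((p:ℚ)^N * (((a:ℚ)^m - 1) * bernoulli m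
      - (m:ℚ) * (a:ℚ)^(m-1) * ((Tsum p N a m : ℤ) : ℚ))) ≤ (p:ℚ)^(-(2*N:ℤ)) := by
    rw [keyq]
    exact le_trans padicNorm.nonarchimedean (max_le h1 hAB)
  rw [padicNorm.mul, pnorm_p_pow] at hfull
  -- divide by p^N
  have hpow_pos : (0:ℚ) < (p:ℚ)^(-(N:ℤ)) := by positivity
  have := mul_le_mul_of_nonneg_left hfull (le_of_lt (by positivity : (0:ℚ) < (p:ℚ)^((N:ℤ))))
  calc padicNorm p (((a:ℚ)^m - 1) * bernoulli m
        - (m:ℚ) * (a:ℚ)^(m-1) * ((Tsum p N a m : ℤ) : ℚ))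
      = (p:ℚ)^((N:ℤ)) * ((p:ℚ)^(-(N:ℤ)) * padicNorm p (((a:ℚ)^m - 1) * bernoulli m
        - (m:ℚ) * (a:ℚ)^(m-1) * ((Tsum p N a m : ℤ) : ℚ))) := by
        rw [← mul_assoc, ← zpow_add₀ hp0]
        norm_num
    _ ≤ (p:ℚ)^((N:ℤ)) * (p:ℚ)^(-(2*N:ℤ)) := this
    _ = (p:ℚ)^(-(N:ℤ)) := by
        rw [← zpow_add₀ hp0]
        congr 1
        ring

lemma adams_bound (hp : p.Prime) (hp5 : 5 ≤ p) {m : ℕ} (hm : 2 ≤ m) (hme : Even m)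
    (a : ℕ) (ha : ¬ p ∣ a) (ha2 : ¬ (p:ℤ) ∣ ((a:ℤ)^m - 1)) :
    padicNorm p (bernoulli m / m) ≤ 1 := by
  haveI : Fact p.Prime := ⟨hp⟩
  have hp0 : (p:ℚ) ≠ 0 := by exact_mod_cast hp.ne_zero
  set v := padicValNat p m with hv
  have hvor := voronoi_norm hp hp5 hm hme (N := v+1) (by omega) a ha
  have hT : padicNorm p ((m:ℚ) * (a:ℚ)^(m-1) * ((Tsum p (v+1) a m : ℤ) : ℚ))
      ≤ (p:ℚ)^(-(v:ℤ)) := by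
    have h1 : padicNorm p ((m:ℚ) * (a:ℚ)^(m-1)) ≤ (p:ℚ)^(-(v:ℤ)) * 1 := by
      apply pnorm_mul_le (pnorm_nat_le m) _ (by positivity)
      have : ((a:ℚ))^(m-1) = (((a^(m-1) : ℕ)) : ℚ) := by push_cast; ring
      rw [this]
      exact padicNorm.of_nat _
    have h2 := pnorm_mul_le h1 (padicNorm.of_int (Tsum p (v+1) a m)) (by positivity)
    simpa using h2
  have hum : padicNorm p (((a:ℚ)^m - 1) * bernoulli m) ≤ (p:ℚ)^(-(v:ℤ)) := by
    have heq : ((a:ℚ)^m - 1) * bernoulli m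
        = (((a:ℚ)^m - 1) * bernoulli m
            - (m:ℚ) * (a:ℚ)^(m-1) * ((Tsum p (v+1) a m : ℤ) : ℚ))
          + (m:ℚ) * (a:ℚ)^(m-1) * ((Tsum p (v+1) a m : ℤ) : ℚ) := by ring
    rw [heq]
    refine le_trans padicNorm.nonarchimedean (max_le (le_trans hvor ?_) hT)
    apply zpow_mono' hp
    omega
  have hu : padicNorm p ((a:ℚ)^m - 1) = 1 := by
    have : ((a:ℚ)^m - 1) = (((a:ℤ)^m - 1 : ℤ) : ℚ) := by push_cast; ring
    rw [this]
    exact (padicNorm.int_eq_one_iff _).mpr ha2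
  rw [padicNorm.mul, hu, one_mul] at hum
  have hm0 : m ≠ 0 := by omega
  rw [div_eq_mul_inv, padicNorm.mul, pnorm_nat_inv hp m hm0]
  calc padicNorm p (bernoulli m) * (p:ℚ)^((v:ℤ))
      ≤ (p:ℚ)^(-(v:ℤ)) * (p:ℚ)^((v:ℤ)) := by
        apply mul_le_mul_of_nonneg_right hum (by positivity)
    _ = 1 := by rw [← zpow_add₀ hp0]; norm_num


lemma pow_congr (hp : p.Prime) {a b : ℕ} (h : ((p:ℤ) - 1) ∣ (b:ℤ) - (a:ℤ))
    (ha : 1 ≤ a) (hb : 1 ≤ b) (x : ZMod p) : x^a = x^b := by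
  haveI : Fact p.Prime := ⟨hp⟩
  rcases eq_or_ne x 0 with rfl | hx
  · rw [zero_pow (by omega), zero_pow (by omega)]
  · have hmod : a ≡ b [MOD p-1] := by
      rw [Nat.modEq_iff_dvd]
      have h2 : ((p-1:ℕ):ℤ) = (p:ℤ)-1 := by
        have := hp.two_le
        push_cast
        omega
      rw [h2]
      exact h
    have hxu : IsUnit x := Ne.isUnit hx
    have hdvd : orderOf hxu.unit ∣ p - 1 := by
      have hcard : Fintype.card (ZMod p)ˣ = p - 1 := by
        rw [ZMod.card_units_eq_totient, Nat.totient_prime hp]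
      rw [← hcard]
      exact orderOf_dvd_card
    have humod : a ≡ b [MOD orderOf hxu.unit] := Nat.ModEq.of_dvd hdvd hmod
    have hu : hxu.unit ^ a = hxu.unit ^ b := (pow_eq_pow_iff_modEq).mpr humod
    calc x^a = ((hxu.unit ^ a : (ZMod p)ˣ) : ZMod p) := by rw [Units.val_pow_eq_pow_val, hxu.unit_spec]
      _ = ((hxu.unit ^ b : (ZMod p)ˣ) : ZMod p) := by rw [hu]
      _ = x^b := by rw [Units.val_pow_eq_pow_val, hxu.unit_spec]

lemma exists_good (hp : p.Prime) {r : ℕ} (hnd : ¬ (p-1) ∣ r) :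
    ∃ a : ℕ, ¬ p ∣ a ∧ ¬ (p:ℤ) ∣ ((a:ℤ)^r - 1) := by
  haveI : Fact p.Prime := ⟨hp⟩
  have hex : ∃ u : (ZMod p)ˣ, u^r ≠ 1 := by
    by_contra hcon
    push_neg at hcon
    obtain ⟨g, hg⟩ := IsCyclic.exists_generator (α := (ZMod p)ˣ)
    have horder : orderOf g = p - 1 := by
      rw [orderOf_eq_card_of_forall_mem_zpowers hg, Nat.card_eq_fintype_card,
        ZMod.card_units_eq_totient, Nat.totient_prime hp]
    have hdvd := orderOf_dvd_of_pow_eq_one (hcon g)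
    rw [horder] at hdvd
    exact hnd hdvd
  obtain ⟨u, hu⟩ := hex
  refine ⟨((u : ZMod p)).val, ?_, ?_⟩
  · intro hdvd
    have h0 : (((((u : ZMod p)).val : ℕ)) : ZMod p) = 0 :=
      (ZMod.natCast_eq_zero_iff _ _).mpr hdvd
    rw [ZMod.natCast_val, ZMod.cast_id] at h0
    exact u.ne_zero h0
  · intro hdvd
    apply hu
    have h0 := (ZMod.intCast_zmod_eq_zero_iff_dvd _ p).mpr hdvd
    push_cast at h0
    rw [ZMod.natCast_val, ZMod.cast_id, sub_eq_zero] at h0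
    ext
    rw [Units.val_pow_eq_pow_val, h0, Units.val_one]

lemma T_diff (hp : p.Prime) (N a : ℕ) {r s : ℕ} (hr : 2 ≤ r) (hs : 2 ≤ s)
    (hcong : ((p : ℤ) - 1) ∣ (s : ℤ) - (r : ℤ)) :
    (p:ℤ) ∣ (Tsum p N a r - Tsum p N a s) := by
  haveI : Fact p.Prime := ⟨hp⟩
  have key : ∀ j : ℕ, ((j : ZMod p))^(r-1) = ((j : ZMod p))^(s-1) := by
    intro j
    apply pow_congr hp _ (by omega) (by omega)
    have h1 : ((r-1 : ℕ) : ℤ) = (r:ℤ) - 1 := by push_cast [Nat.cast_sub (by omega : 1 ≤ r)]; ring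
    have h2 : ((s-1 : ℕ) : ℤ) = (s:ℤ) - 1 := by push_cast [Nat.cast_sub (by omega : 1 ≤ s)]; ring
    rw [h1, h2]
    convert hcong using 1
    ring
  rw [← ZMod.intCast_zmod_eq_zero_iff_dvd]
  push_cast [Tsum]
  rw [sub_eq_zero]
  apply Finset.sum_congr rfl
  intro j _
  rw [key j]


theorem kummer_congruence_basic (p : ℕ) (hp : p.Prime)
    (r s : ℕ) (hr : 0 < r) (hs : 0 < s) (hre : Even r) (hse : Even s)
    (hnd : ¬ (p - 1) ∣ r) (hcong : ((p : ℤ) - 1) ∣ (s : ℤ) - (r : ℤ)) :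
    bernoulli r / r = bernoulli s / s ∨
    (1 : ℤ) ≤ padicValRat p (bernoulli r / r - bernoulli s / s) := by
  haveI : Fact p.Prime := ⟨hp⟩
  have hp2 : 2 ≤ p := hp.two_le
  have hpne2 : p ≠ 2 := by rintro rfl; exact hnd (one_dvd _)
  have hpne3 : p ≠ 3 := by rintro rfl; exact hnd hre.two_dvd
  have hpne4 : p ≠ 4 := by rintro rfl; norm_num at hp
  have hp5 : 5 ≤ p := by omega
  have hp0 : (p:ℚ) ≠ 0 := by exact_mod_cast hp.ne_zero
  have hp1 : (1:ℚ) < p := by exact_mod_cast hp.one_lt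
  have hr2 : 2 ≤ r := Nat.le_of_dvd hr hre.two_dvd
  have hs2 : 2 ≤ s := Nat.le_of_dvd hs hse.two_dvd
  obtain ⟨a, hap, har⟩ := exists_good hp hnd
  have hpowrs : ∀ x : ZMod p, x^r = x^s := fun x => pow_congr hp hcong (by omega) (by omega) x
  have hpowrs1 : ∀ x : ZMod p, x^(r-1) = x^(s-1) := by
    intro x
    apply pow_congr hp _ (by omega) (by omega)
    have h1 : ((r-1 : ℕ) : ℤ) = (r:ℤ) - 1 := by push_cast [Nat.cast_sub (by omega : 1 ≤ r)]; ring
    have h2 : ((s-1 : ℕ) : ℤ) = (s:ℤ) - 1 := by push_cast [Nat.cast_sub (by omega : 1 ≤ s)]; ring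
    rw [h1, h2]
    convert hcong using 1
    ring
  have has : ¬ (p:ℤ) ∣ ((a:ℤ)^s - 1) := by
    intro hdvd
    apply har
    rw [← ZMod.intCast_zmod_eq_zero_iff_dvd] at hdvd ⊢
    push_cast at hdvd ⊢
    rw [← hpowrs] at hdvd
    exact hdvd
  set vr := padicValNat p r with hvr
  set vs := padicValNat p s with hvs
  set N := vr + vs + 1 with hN
  set Tr := Tsum p N a r with hTr
  set Ts := Tsum p N a s with hTs
  have hXr := voronoi_norm hp hp5 hr2 hre (N := N) (by omega) a hap
  have hXs := voronoi_norm hp hp5 hs2 hse (N := N) (by omega) a hap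
  rw [← hTr] at hXr
  rw [← hTs] at hXs
  -- norm facts
  have haq : ∀ k : ℕ, padicNorm p ((a:ℚ)^k) ≤ 1 := by
    intro k
    have h2 : ((a:ℚ))^k = (((a^k : ℕ)) : ℚ) := by push_cast; ring
    rw [h2]
    exact padicNorm.of_nat _
  have haq1 : ∀ k : ℕ, padicNorm p ((a:ℚ)^k) = 1 := by
    intro k
    have h2 : ((a:ℚ))^k = (((a^k : ℕ)) : ℚ) := by push_cast; ring
    rw [h2]
    exact (padicNorm.nat_eq_one_iff _).mpr (fun hd => hap (hp.dvd_of_dvd_pow hd))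
  have hTdn : padicNorm p ((Tr : ℚ) - (Ts : ℚ)) ≤ (p:ℚ)^(-(1:ℤ)) := by
    have hd := T_diff hp N a hr2 hs2 hcong
    have h2 : ((p^1 : ℕ) : ℤ) ∣ (Tr - Ts) := by rwa [pow_one]
    have h3 := padicNorm.dvd_iff_norm_le.mp h2
    have h4 : (((Tr - Ts : ℤ)) : ℚ) = (Tr : ℚ) - (Ts : ℚ) := by push_cast; ring
    rw [h4] at h3
    exact_mod_cast h3
  -- E bound
  set Xr : ℚ := ((a:ℚ)^r - 1) * bernoulli r - (r:ℚ) * (a:ℚ)^(r-1) * ((Tr : ℤ) : ℚ) with hXrdef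
  set Xs : ℚ := ((a:ℚ)^s - 1) * bernoulli s - (s:ℚ) * (a:ℚ)^(s-1) * ((Ts : ℤ) : ℚ) with hXsdef
  set E : ℚ := (s:ℚ) * (a:ℚ)^(s-1) * Xr - (r:ℚ) * (a:ℚ)^(r-1) * Xs
    + (r:ℚ) * (s:ℚ) * (a:ℚ)^(r-1) * (a:ℚ)^(s-1) * ((Tr:ℚ) - (Ts:ℚ)) with hEdef
  have hE : padicNorm p E ≤ (p:ℚ)^(-(N:ℤ)) := by
    have h1 : padicNorm p ((s:ℚ) * (a:ℚ)^(s-1) * Xr) ≤ (p:ℚ)^(-(N:ℤ)) := by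
      have := pnorm_mul_le (pnorm_mul_le (padicNorm.of_nat s) (haq (s-1)) zero_le_one) hXr
        (by norm_num)
      simpa using this
    have h2 : padicNorm p (-((r:ℚ) * (a:ℚ)^(r-1) * Xs)) ≤ (p:ℚ)^(-(N:ℤ)) := by
      rw [padicNorm.neg]
      have := pnorm_mul_le (pnorm_mul_le (padicNorm.of_nat r) (haq (r-1)) zero_le_one) hXs
        (by norm_num)
      simpa using this
    have h3 : padicNorm p ((r:ℚ) * (s:ℚ) * (a:ℚ)^(r-1) * (a:ℚ)^(s-1) * ((Tr:ℚ) - (Ts:ℚ)))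
        ≤ (p:ℚ)^(-(N:ℤ)) := by
      have b1 : padicNorm p ((r:ℚ) * (s:ℚ)) ≤ (p:ℚ)^(-(vr:ℤ)) * (p:ℚ)^(-(vs:ℤ)) :=
        pnorm_mul_le (pnorm_nat_le r) (pnorm_nat_le s) (by positivity)
      have b2 : padicNorm p ((r:ℚ) * (s:ℚ) * (a:ℚ)^(r-1)) ≤ (p:ℚ)^(-(vr:ℤ)) * (p:ℚ)^(-(vs:ℤ)) * 1 :=
        pnorm_mul_le b1 (haq (r-1)) (by positivity)
      have b3 : padicNorm p ((r:ℚ) * (s:ℚ) * (a:ℚ)^(r-1) * (a:ℚ)^(s-1))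
          ≤ (p:ℚ)^(-(vr:ℤ)) * (p:ℚ)^(-(vs:ℤ)) * 1 * 1 :=
        pnorm_mul_le b2 (haq (s-1)) (by positivity)
      have b4 := pnorm_mul_le b3 hTdn (by positivity)
      calc padicNorm p ((r:ℚ) * (s:ℚ) * (a:ℚ)^(r-1) * (a:ℚ)^(s-1) * ((Tr:ℚ) - (Ts:ℚ)))
          ≤ (p:ℚ)^(-(vr:ℤ)) * (p:ℚ)^(-(vs:ℤ)) * 1 * 1 * (p:ℚ)^(-(1:ℤ)) := b4
        _ = (p:ℚ)^(-(vr:ℤ) + -(vs:ℤ) + -(1:ℤ)) := by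
            rw [mul_one, mul_one, ← zpow_add₀ hp0, ← zpow_add₀ hp0]
        _ ≤ (p:ℚ)^(-(N:ℤ)) := by
            apply zpow_mono' hp
            rw [hN]
            push_cast
            omega
    calc padicNorm p E ≤ max (padicNorm p ((s:ℚ) * (a:ℚ)^(s-1) * Xr
          + -((r:ℚ) * (a:ℚ)^(r-1) * Xs)))
          (padicNorm p ((r:ℚ) * (s:ℚ) * (a:ℚ)^(r-1) * (a:ℚ)^(s-1) * ((Tr:ℚ) - (Ts:ℚ)))) := by
          rw [hEdef]
          rw [show (s:ℚ) * (a:ℚ)^(s-1) * Xr - (r:ℚ) * (a:ℚ)^(r-1) * Xs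
            + (r:ℚ) * (s:ℚ) * (a:ℚ)^(r-1) * (a:ℚ)^(s-1) * ((Tr:ℚ) - (Ts:ℚ))
            = ((s:ℚ) * (a:ℚ)^(s-1) * Xr + -((r:ℚ) * (a:ℚ)^(r-1) * Xs))
            + (r:ℚ) * (s:ℚ) * (a:ℚ)^(r-1) * (a:ℚ)^(s-1) * ((Tr:ℚ) - (Ts:ℚ)) by ring]
          exact padicNorm.nonarchimedean
      _ ≤ (p:ℚ)^(-(N:ℤ)) := by
          apply max_le _ h3
          exact le_trans padicNorm.nonarchimedean (max_le h1 h2)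
  -- relate E to the difference of B_r/r and B_s/s
  have hr0 : (r:ℚ) ≠ 0 := by positivity
  have hs0 : (s:ℚ) ≠ 0 := by positivity
  have hpowr : (a:ℚ)^r = (a:ℚ) * (a:ℚ)^(r-1) := by
    rw [← pow_succ']
    congr 1
    omega
  have hpows : (a:ℚ)^s = (a:ℚ) * (a:ℚ)^(s-1) := by
    rw [← pow_succ']
    congr 1
    omega
  set D : ℚ := bernoulli r / r - bernoulli s / s with hD
  have hF : ((a:ℚ)^r - 1) * (a:ℚ)^(s-1) * D
      = E / ((r:ℚ) * (s:ℚ)) + ((a:ℚ)^(s-1) - (a:ℚ)^(r-1)) * (bernoulli s / s) := by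
    rw [hD, hEdef, hXrdef, hXsdef, hpowr, hpows]
    field_simp
    ring
  have hYX : padicNorm p ((a:ℚ)^(s-1) - (a:ℚ)^(r-1)) ≤ (p:ℚ)^(-(1:ℤ)) := by
    have hd : (p:ℤ) ∣ ((a:ℤ)^(s-1) - (a:ℤ)^(r-1)) := by
      rw [← ZMod.intCast_zmod_eq_zero_iff_dvd]
      push_cast
      rw [hpowrs1, sub_self]
    have h2 : ((p^1 : ℕ) : ℤ) ∣ ((a:ℤ)^(s-1) - (a:ℤ)^(r-1)) := by rwa [pow_one]
    have h3 := padicNorm.dvd_iff_norm_le.mp h2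
    have h4 : (((a:ℤ)^(s-1) - (a:ℤ)^(r-1) : ℤ) : ℚ) = (a:ℚ)^(s-1) - (a:ℚ)^(r-1) := by
      push_cast; ring
    rw [h4] at h3
    exact_mod_cast h3
  have hAdams := adams_bound hp hp5 hs2 hse a hap has
  have hFn : padicNorm p (((a:ℚ)^r - 1) * (a:ℚ)^(s-1) * D) ≤ (p:ℚ)^(-(1:ℤ)) := by
    rw [hF]
    apply le_trans padicNorm.nonarchimedean
    apply max_le
    · rw [div_eq_mul_inv, mul_inv, ← mul_assoc]
      have b1 := pnorm_mul_le (pnorm_mul_le hE (le_of_eq (pnorm_nat_inv hp r (by omega)))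
        (by positivity)) (le_of_eq (pnorm_nat_inv hp s (by omega))) (by positivity)
      calc padicNorm p (E * ((r:ℚ))⁻¹ * ((s:ℚ))⁻¹)
          ≤ (p:ℚ)^(-(N:ℤ)) * (p:ℚ)^((vr:ℤ)) * (p:ℚ)^((vs:ℤ)) := b1
        _ = (p:ℚ)^(-(N:ℤ) + vr + vs) := by rw [← zpow_add₀ hp0, ← zpow_add₀ hp0]
        _ ≤ (p:ℚ)^(-(1:ℤ)) := by
            apply zpow_mono' hp
            rw [hN]
            push_cast
            omega
    · have := pnorm_mul_le hYX hAdams (by positivity)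
      simpa using this
  -- strip the unit factor
  have hunit : padicNorm p (((a:ℚ)^r - 1) * (a:ℚ)^(s-1)) = 1 := by
    have h1 : padicNorm p ((a:ℚ)^r - 1) = 1 := by
      have h2 : ((a:ℚ)^r - 1) = (((a:ℤ)^r - 1 : ℤ) : ℚ) := by push_cast; ring
      rw [h2]
      exact (padicNorm.int_eq_one_iff _).mpr har
    rw [padicNorm.mul, h1, haq1, one_mul]
  have hDn : padicNorm p D ≤ (p:ℚ)^(-(1:ℤ)) := by
    have := hFn
    rw [padicNorm.mul, hunit, one_mul] at this
    exact this
  rcases eq_or_ne D 0 with h0 | h0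
  · left
    rw [hD] at h0
    linarith [sub_eq_zero.mp h0]
  · right
    rw [padicNorm.eq_zpow_of_nonzero h0] at hDn
    have := (zpow_le_zpow_iff_right₀ hp1).mp hDn
    rw [hD] at this ⊢
    omega
end

section
/- Let p be an odd prime, a, t nonnegative integers, k a positive integer with p^(2a+1) | k and k > p^a(p-1), and set v = min(v_p(k) - 2a - 1, t). Let f(x) = x^((k+p^a(p-1))p^t) + x^((k-p^a(p-1))p^t). Then for any positive integer m and any integer n coprime to p, the m-th derivative satisfies v_p(f^(m)(n)) ≥ 2a + t + v. -/
open Polynomial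

private lemma iter_deriv_add' (P Q : Polynomial ℤ) (m : ℕ) :
    derivative^[m] (P + Q) = derivative^[m] P + derivative^[m] Q := by
  induction m with
  | zero => simp
  | succ m ih => simp [Function.iterate_succ_apply', ih]

theorem deriv_valuation_lower (p : ℕ) (hp : p.Prime) (hodd : Odd p)
    (a t : ℕ) (k : ℕ) (hk : 0 < k) (hdvd : p ^ (2 * a + 1) ∣ k)
    (hkbig : p ^ a * (p - 1) < k)
    (v : ℕ) (hv : v = min (padicValNat p k - (2 * a + 1)) t)
    (f : Polynomial ℤ)
    (hf : f = X ^ ((k + p ^ a * (p - 1)) * p ^ t) + X ^ ((k - p ^ a * (p - 1)) * p ^ t))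
    (m : ℕ) (hm : 0 < m) (n : ℤ) (hn : IsCoprime n (p : ℤ)) :
    ((p : ℤ) ^ (2 * a + t + v)) ∣ (derivative^[m] f).eval n := by
  haveI : Fact p.Prime := ⟨hp⟩
  set x : ℕ := p ^ a * (p - 1) with hx
  set A : ℕ := k + x with hA
  set B : ℕ := k - x with hB
  set N1 : ℕ := A * p ^ t with hN1
  set N2 : ℕ := B * p ^ t with hN2
  -- basic numeric facts
  have hxk : x ≤ k := le_of_lt hkbig
  have hBpos : 0 < B := Nat.sub_pos_of_lt hkbig
  have hN2pos : 0 < N2 := Nat.mul_pos hBpos (Nat.pow_pos hp.pos)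
  have hpak : p ^ a ∣ k := dvd_trans (pow_dvd_pow p (by omega)) hdvd
  have hpax : p ^ a ∣ x := ⟨p - 1, rfl⟩
  have hpaA : p ^ a ∣ A := dvd_add hpak hpax
  have hpaB : p ^ a ∣ B := Nat.dvd_sub hpak hpax
  have hpN1 : (p : ℤ) ^ (a + t) ∣ (N1 : ℤ) := by
    have : p ^ (a + t) ∣ N1 := by
      rw [pow_add]; exact mul_dvd_mul hpaA dvd_rfl
    exact_mod_cast Int.natCast_dvd_natCast.mpr this
  have hpN2 : (p : ℤ) ^ (a + t) ∣ (N2 : ℤ) := by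
    have : p ^ (a + t) ∣ N2 := by
      rw [pow_add]; exact mul_dvd_mul hpaB dvd_rfl
    exact_mod_cast Int.natCast_dvd_natCast.mpr this
  -- valuation of k
  have hvalk : 2 * a + 1 ≤ padicValNat p k := by
    rw [padicValNat_dvd_iff] at hdvd
    rcases hdvd with h | h
    · omega
    · exact h
  have hvt : v ≤ t := by omega
  have hkv : (p : ℤ) ^ (2 * a + 1 + v) ∣ (k : ℤ) := by
    have h1 : p ^ (2 * a + 1 + v) ∣ k :=
      dvd_trans (pow_dvd_pow p (by omega)) pow_padicValNat_dvd
    exact_mod_cast Int.natCast_dvd_natCast.mpr h1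
  -- the difference and sum of exponents
  have hAB : A = B + 2 * x := by omega
  have hNsub : N1 = N2 + 2 * x * p ^ t := by
    rw [hN1, hN2, hAB, add_mul]
  have hNsumZ : (N1 : ℤ) + (N2 : ℤ) = 2 * k * p ^ t := by
    have : N1 + N2 = 2 * k * p ^ t := by
      rw [hN1, hN2, ← add_mul]
      congr 1
      omega
    exact_mod_cast congrArg (Nat.cast : ℕ → ℤ) this
  have hdZ : ((N1 : ℤ) - (N2 : ℤ)) = 2 * (p - 1 : ℤ) * (p : ℤ) ^ (a + t) := by
    have h1 : (N1 : ℤ) = (N2 : ℤ) + (2 * x * p ^ t : ℕ) := by exact_mod_cast congrArg (Nat.cast : ℕ → ℤ) hNsub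
    have hx' : ((x : ℕ) : ℤ) = (p : ℤ) ^ a * ((p : ℤ) - 1) := by
      have h1p : (1 : ℕ) ≤ p := hp.pos
      rw [hx]
      push_cast [Nat.cast_sub h1p]
      ring
    rw [h1]
    push_cast
    rw [hx', pow_add]
    ring
  -- n^d ≡ 1 mod p^(a+t+1), d = 2*(p-1)*p^(a+t) as exponent; we use N1 - N2 = d
  have hfermat : (p : ℤ) ∣ n ^ (2 * (p - 1)) - 1 := by
    have h1 : n ^ (p - 1) ≡ 1 [ZMOD p] := Int.ModEq.pow_card_sub_one_eq_one hp hn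
    have h2 : (n ^ (p - 1)) ^ 2 ≡ 1 ^ 2 [ZMOD p] := h1.pow 2
    rw [← pow_mul, one_pow, mul_comm] at h2
    have := (Int.ModEq.dvd h2)
    simpa using (dvd_sub_comm.mp this)
  have hlift : (p : ℤ) ^ (a + t + 1) ∣ n ^ (2 * (p - 1) * p ^ (a + t)) - 1 := by
    have := dvd_sub_pow_of_dvd_sub (R := ℤ) (p := p) hfermat (a + t)
    rw [one_pow, ← pow_mul] at this
    exact this
  -- evaluate the iterated derivative
  have heval : (derivative^[m] f).eval n
      = (N1.descFactorial m : ℤ) * n ^ (N1 - m) + (N2.descFactorial m : ℤ) * n ^ (N2 - m) := by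
    rw [hf, iter_deriv_add', iterate_derivative_X_pow_eq_natCast_mul,
      iterate_derivative_X_pow_eq_natCast_mul]
    simp
  rw [heval]
  -- descFactorial via descPochhammer
  obtain ⟨m', rfl⟩ : ∃ m', m = m' + 1 := ⟨m - 1, by omega⟩
  set Q : Polynomial ℤ := (descPochhammer ℤ m').comp (X - 1) with hQ
  have hg : ∀ N : ℕ, (N.descFactorial (m' + 1) : ℤ) = (N : ℤ) * Q.eval (N : ℤ) := by
    intro N
    rw [← descPochhammer_eval_eq_descFactorial ℤ N (m' + 1), descPochhammer_succ_left,
      eval_mul, eval_X]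
  have hQsub : ((N1 : ℤ) - (N2 : ℤ)) ∣ Q.eval (N1 : ℤ) - Q.eval (N2 : ℤ) :=
    sub_dvd_eval_sub _ _ _
  have hpQsub : (p : ℤ) ^ (a + t) ∣ Q.eval (N1 : ℤ) - Q.eval (N2 : ℤ) := by
    refine dvd_trans ?_ hQsub
    rw [hdZ]
    exact Dvd.intro_left _ rfl
  rw [hg, hg]
  by_cases hcase : m' + 1 ≤ N2
  · -- both descFactorials "nonzero" case: combine terms
    have hexp : N1 - (m' + 1) = (N2 - (m' + 1)) + 2 * x * p ^ t := by omega
    have hdexp : n ^ (N1 - (m' + 1)) = n ^ (N2 - (m' + 1)) * n ^ (2 * x * p ^ t) := by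
      rw [hexp, pow_add]
    rw [hdexp]
    have hxexp : 2 * x * p ^ t = 2 * (p - 1) * p ^ (a + t) := by
      rw [hx, pow_add]; ring
    set E : ℤ := n ^ (2 * x * p ^ t) with hE
    have key : (N1 : ℤ) * Q.eval (N1 : ℤ) * (n ^ (N2 - (m' + 1)) * E)
        + (N2 : ℤ) * Q.eval (N2 : ℤ) * n ^ (N2 - (m' + 1))
        = n ^ (N2 - (m' + 1)) *
          ((N1 : ℤ) * Q.eval (N1 : ℤ) * (E - 1)
            + (N1 : ℤ) * (Q.eval (N1 : ℤ) - Q.eval (N2 : ℤ))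
            + ((N1 : ℤ) + (N2 : ℤ)) * Q.eval (N2 : ℤ)) := by ring
    rw [key]
    refine Dvd.dvd.mul_left ?_ _
    have hEdvd : (p : ℤ) ^ (a + t + 1) ∣ E - 1 := by
      rw [hE, hxexp]; exact hlift
    refine dvd_add (dvd_add ?_ ?_) ?_
    · refine dvd_trans (pow_dvd_pow _ (show 2 * a + t + v ≤ (a + t) + (a + t + 1) by omega)) ?_
      rw [pow_add]
      exact mul_dvd_mul (Dvd.dvd.mul_right hpN1 _) hEdvd
    · refine dvd_trans (pow_dvd_pow _ (show 2 * a + t + v ≤ (a + t) + (a + t) by omega)) ?_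
      rw [pow_add]
      exact mul_dvd_mul hpN1 hpQsub
    · refine dvd_trans (pow_dvd_pow _ (show 2 * a + t + v ≤ (2 * a + 1 + v) + t by omega)) ?_
      rw [hNsumZ, pow_add]
      exact Dvd.dvd.mul_right (mul_dvd_mul (Dvd.dvd.mul_left hkv 2) dvd_rfl) _
  · -- m' + 1 > N2 : second term vanishes, first has enough p-divisibility
    have hQN2 : Q.eval (N2 : ℤ) = 0 := by
      have hN2' : (N2 : ℤ) - 1 = ((N2 - 1 : ℕ) : ℤ) := by
        push_cast [Nat.cast_sub hN2pos]; ring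
      rw [hQ, eval_comp, eval_sub, eval_X, eval_one, hN2',
        descPochhammer_eval_eq_descFactorial]
      norm_cast
      exact Nat.descFactorial_eq_zero_iff_lt.mpr (by omega)
    rw [hQN2, mul_zero, zero_mul, add_zero]
    have hpQ1 : (p : ℤ) ^ (a + t) ∣ Q.eval (N1 : ℤ) := by
      have := hpQsub
      rwa [hQN2, sub_zero] at this
    refine dvd_trans (pow_dvd_pow _ (show 2 * a + t + v ≤ (a + t) + (a + t) by omega)) ?_
    rw [pow_add]
    exact Dvd.dvd.mul_right (mul_dvd_mul hpN1 hpQ1) _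
end
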